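/- arXiv:1603.03843 — 7 statements merged into one kernel-verified Lean document; each statement's English description precedes it below -/
import Mathlib

section
/- Fix e ≥ 2 and let I = ℤ/eℤ. For a partition λ and a node (r,s) define its residue res(r,s) = s − r mod e, and cont(λ) = Σ_{(r,s)∈Y(λ)} α_{res(r,s)} ∈ ⊕_{i∈I} ℤ_{≥0} α_i, where the α_i are formal basis elements. Let ρ be an e-core and d ∈ ℤ_{≥0}, and let δ = α_0 + α_1 + ⋯ + α_{e−1}. Then for a partition λ, cont(λ) = cont(ρ) + dδ if and only if λ has e-core ρ and e-weight d. -/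
open Finset

/-- The abacus display of a partition `p` (1-based parts) with `N` beads. -/
def beadSet (N : ℕ) (p : ℕ → ℕ) : Finset ℕ :=
  (Finset.Icc 1 N).image (fun k => p k + N - k)

/-- Number of beads on runner `i` of the `e`-runner abacus. -/
def runnerCount (e N : ℕ) (p : ℕ → ℕ) (i : ℕ) : ℕ :=
  ((beadSet N p).filter (fun x => x % e = i)).card

/-- The bead set obtained by pushing all beads up their runners:
this is the abacus display (with `N` beads) of the `e`-core of `p`. -/
def pushedBeads (e N : ℕ) (p : ℕ → ℕ) : Finset ℕ :=
  (Finset.range e).biUnion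
    (fun i => (Finset.range (runnerCount e N p i)).image (fun t => e * t + i))

/-- The number of nodes of residue `i` (with `s - r ≡ i (mod e)`) in the Young
diagram of `p`, i.e. the coefficient of `α_i` in `cont(p)`. -/
def contRes (e N : ℕ) (p : ℕ → ℕ) (i : ℕ) : ℕ :=
  ∑ r ∈ Finset.Icc 1 N,
    ((Finset.Icc 1 (p r)).filter
      (fun (s : ℕ) => ((s : ℤ) - (r : ℤ)) % (e : ℤ) = (i : ℤ))).card

namespace ContCoreAux


/-- Count of `u ∈ [1,x]` with `u % e = j`, closed form. -/
def G (e j x : ℕ) : ℕ := (x + (e - j) % e) / e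

lemma aux1 (e a c : ℕ) (ha : a < e) (hc : c < e) :
    (a + c) % e = 0 ↔ ((a = 0 ∧ c = 0) ∨ a + c = e) := by
  rcases lt_or_ge (a + c) e with h | h
  · rw [Nat.mod_eq_of_lt h]; omega
  · rw [Nat.mod_eq_sub_mod h, Nat.mod_eq_of_lt (by omega)]; omega

lemma mod_iff (e j x : ℕ) (he : 0 < e) (hj : j < e) :
    x % e = j ↔ (x + (e - j) % e) % e = 0 := by
  have hc : (e - j) % e < e := Nat.mod_lt _ he
  have hx : x % e < e := Nat.mod_lt _ he
  rw [Nat.add_mod, aux1 e (x % e) ((e-j)%e % e) hx (by simpa using hc)]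
  rcases Nat.eq_zero_or_pos j with rfl | hj'
  · simp; omega
  · have hcv : (e - j) % e = e - j := Nat.mod_eq_of_lt (by omega)
    simp only [hcv]
    omega

lemma count_mod (e j : ℕ) (he : 0 < e) (hj : j < e) (x : ℕ) :
    ((Icc 1 x).filter (fun u => u % e = j)).card = G e j x := by
  induction x with
  | zero =>
    simp [G, Nat.div_eq_of_lt (Nat.mod_lt _ he)]
  | succ x ih =>
    rw [show Icc 1 (x+1) = insert (x+1) (Icc 1 x) from (Finset.insert_Icc_right_eq_Icc_add_one (by omega)).symm]
    rw [Finset.filter_insert]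
    have hni : x + 1 ∉ Icc 1 x := by simp
    have hdvd : (x + 1) % e = j ↔ e ∣ (x + 1 + (e - j) % e) := by
      rw [mod_iff e j (x+1) he hj, Nat.dvd_iff_mod_eq_zero]
    have hsucc : G e j (x+1) = G e j x + if e ∣ (x + (e - j) % e) + 1 then 1 else 0 := by
      unfold G
      rw [show x + 1 + (e - j) % e = (x + (e - j) % e) + 1 by ring, Nat.succ_div]
    split
    · rw [Finset.card_insert_of_notMem (by simp [hni, Finset.mem_filter]), ih, hsucc]
      rw [if_pos (by rw [show x + (e-j)%e + 1 = x + 1 + (e-j)%e by ring]; exact hdvd.1 ‹_›)]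
    · rw [ih, hsucc, if_neg]; · omega
      rw [show x + (e-j)%e + 1 = x + 1 + (e-j)%e by ring]
      exact fun h => ‹¬ _› (hdvd.2 h)

lemma G_mono (e j : ℕ) {x y : ℕ} (h : x ≤ y) : G e j x ≤ G e j y :=
  Nat.div_le_div_right (by omega)

lemma G_split (e j x i : ℕ) (he : 0 < e) (hx : x % e = i) :
    G e j x = x / e + G e j i := by
  unfold G
  conv_lhs => rw [show x = e * (x / e) + i by rw [← hx]; exact (Nat.div_add_mod x e).symm ▸ by omega]
  rw [add_assoc, Nat.mul_add_div he]

lemma G_zero (e i : ℕ) (hi : i < e) : G e 0 i = 0 := by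
  unfold G; simp [Nat.div_eq_of_lt hi]

lemma G_eps (e j i : ℕ) (hj1 : 1 ≤ j) (hj : j < e) (hi : i < e) :
    G e j i = if j ≤ i then 1 else 0 := by
  unfold G
  rw [Nat.mod_eq_of_lt (show e - j < e by omega)]
  split
  · exact Nat.div_eq_of_lt_le (by omega) (by omega)
  · exact Nat.div_eq_of_lt (by omega)



lemma cond_equiv (e N i r s : ℕ) (he : 0 < e) (hi : i < e) (hrN : r ≤ N) :
    (((s:ℤ) - (r:ℤ)) % (e:ℤ) = (i:ℤ)) ↔ (s + (N - r)) % e = (i + N) % e := by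
  have h1 : (((s:ℤ) - r) % e = (i:ℤ)) ↔ (((s:ℤ) - r : ℤ) : ZMod e) = ((i:ℤ) : ZMod e) := by
    rw [ZMod.intCast_eq_intCast_iff']
    have hie : (i:ℤ) % e = i := Int.emod_eq_of_lt (by exact_mod_cast Nat.zero_le i) (by exact_mod_cast hi)
    rw [hie]
  have h2 : ((s + (N - r)) % e = (i + N) % e) ↔
      ((s + (N - r) : ℕ) : ZMod e) = ((i + N : ℕ) : ZMod e) := by
    rw [ZMod.natCast_eq_natCast_iff]; exact Iff.rfl
  rw [h1, h2]
  push_cast [Nat.cast_sub hrN]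
  constructor <;> intro h <;> linear_combination h



/-- Row lemma: residue-`i` node count in a row with part `m`, row index `r`. -/
lemma row_count (e N i : ℕ) (he : 0 < e) (hi : i < e) (r : ℕ) (hr : 1 ≤ r) (hrN : r ≤ N)
    (m : ℕ) :
    ((Icc 1 m).filter (fun (s : ℕ) => ((s:ℤ) - (r:ℤ)) % (e:ℤ) = (i:ℤ))).card
      + G e ((i+N)%e) (N - r) = G e ((i+N)%e) (m + N - r) := by
  have hj : (i+N)%e < e := Nat.mod_lt _ he
  have himg : ((Icc 1 m).filter (fun (s : ℕ) => ((s:ℤ) - (r:ℤ)) % (e:ℤ) = (i:ℤ))).image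
      (· + (N - r)) = (Ioc (N-r) (m + N - r)).filter (fun u => u % e = (i+N)%e) := by
    ext u
    simp only [mem_image, mem_filter, mem_Icc, mem_Ioc]
    constructor
    · rintro ⟨s, ⟨⟨hs1, hs2⟩, hcond⟩, rfl⟩
      exact ⟨⟨by omega, by omega⟩, (cond_equiv e N i r s he hi hrN).1 hcond⟩
    · rintro ⟨⟨hu1, hu2⟩, hcond⟩
      refine ⟨u - (N - r), ⟨⟨by omega, by omega⟩, ?_⟩, by omega⟩
      refine (cond_equiv e N i r (u - (N-r)) he hi hrN).2 ?_
      rw [show u - (N-r) + (N-r) = u by omega]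
      exact hcond
  have hcard : ((Icc 1 m).filter (fun (s : ℕ) => ((s:ℤ) - (r:ℤ)) % (e:ℤ) = (i:ℤ))).card
      = ((Ioc (N-r) (m + N - r)).filter (fun u => u % e = (i+N)%e)).card := by
    rw [← himg, Finset.card_image_of_injOn]
    intro a _ b _ h
    simpa using h
  rw [hcard, ← count_mod e _ he hj (N - r), ← count_mod e _ he hj (m + N - r)]
  have hsplit : (Icc 1 (m + N - r)).filter (fun u => u % e = (i+N)%e)
      = ((Icc 1 (N - r)).filter (fun u => u % e = (i+N)%e))
        ∪ ((Ioc (N-r) (m + N - r)).filter (fun u => u % e = (i+N)%e)) := by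
    rw [← Finset.filter_union]
    congr 1
    ext u
    simp only [mem_union, mem_Icc, mem_Ioc]
    omega
  rw [hsplit, Finset.card_union_of_disjoint, add_comm]
  rw [Finset.disjoint_left]
  intro a ha hb
  simp only [mem_filter, mem_Icc, mem_Ioc] at ha hb
  omega



section p
variable (e N : ℕ) (p : ℕ → ℕ) (hp : ∀ k, 1 ≤ k → p (k + 1) ≤ p k)

lemma anti (hp : ∀ k, 1 ≤ k → p (k + 1) ≤ p k) :
    ∀ a b, 1 ≤ a → a ≤ b → p b ≤ p a := by
  intro a b ha hab
  induction b with
  | zero => omega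
  | succ b ih =>
    rcases Nat.lt_or_ge a (b+1) with h | h
    · exact le_trans (hp b (by omega)) (ih (by omega))
    · have hab' : a = b + 1 := by omega
      subst hab'
      exact le_refl _

lemma bead_injOn (hp : ∀ k, 1 ≤ k → p (k + 1) ≤ p k) :
    ∀ a ∈ Icc 1 N, ∀ b ∈ Icc 1 N, p a + N - a = p b + N - b → a = b := by
  intro a ha b hb h
  simp only [mem_Icc] at ha hb
  rcases lt_trichotomy a b with h' | h' | h'
  · have := anti p hp a b ha.1 (le_of_lt h'); omega
  · exact h'
  · have := anti p hp b a hb.1 (le_of_lt h'); omega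

lemma bead_card (hp : ∀ k, 1 ≤ k → p (k + 1) ≤ p k) : (beadSet N p).card = N := by
  rw [beadSet, Finset.card_image_of_injOn (bead_injOn N p hp), Nat.card_Icc]
  omega

lemma sum_bead (f : ℕ → ℕ) (hp : ∀ k, 1 ≤ k → p (k + 1) ≤ p k) :
    ∑ x ∈ beadSet N p, f x = ∑ r ∈ Icc 1 N, f (p r + N - r) := by
  rw [beadSet, Finset.sum_image (bead_injOn N p hp)]

/-- content identity: `contRes p i + K = ∑_{x ∈ B_p} G e j x`, `j = (i+N)%e`. -/
lemma contRes_eq (i : ℕ) (he : 0 < e) (hi : i < e) (hp : ∀ k, 1 ≤ k → p (k + 1) ≤ p k) :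
    contRes e N p i + (∑ r ∈ Icc 1 N, G e ((i+N)%e) (N - r))
      = ∑ x ∈ beadSet N p, G e ((i+N)%e) x := by
  rw [sum_bead N p _ hp, contRes, ← Finset.sum_add_distrib]
  refine Finset.sum_congr rfl ?_
  intro r hr
  simp only [mem_Icc] at hr
  exact row_count e N i he hi r hr.1 hr.2 (p r)

/-- fiberwise: `∑_{x∈B} G e j x = ∑ x/e + ∑_i c_i * G e j i`. -/
lemma sum_G (j : ℕ) (he : 0 < e) :
    ∑ x ∈ beadSet N p, G e j x
      = (∑ x ∈ beadSet N p, x / e)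
        + ∑ i ∈ range e, runnerCount e N p i * G e j i := by
  have hmaps : ∀ x ∈ beadSet N p, x % e ∈ range e :=
    fun x _ => mem_range.2 (Nat.mod_lt _ he)
  rw [← Finset.sum_fiberwise_of_maps_to hmaps (fun x => G e j x),
      ← Finset.sum_fiberwise_of_maps_to hmaps (fun x => x / e),
      ← Finset.sum_add_distrib]
  refine Finset.sum_congr rfl ?_
  intro i _
  have : ∀ x ∈ (beadSet N p).filter (fun x => x % e = i), G e j x = x / e + G e j i := by
    intro x hx
    simp only [mem_filter] at hx
    unfold G
    conv_lhs => rw [show x = e * (x / e) + i from by rw [← hx.2]; exact (Nat.div_add_mod x e).symm]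
    rw [add_assoc, Nat.mul_add_div he]
  rw [Finset.sum_congr rfl this, Finset.sum_add_distrib, Finset.sum_const, runnerCount,
    smul_eq_mul]

lemma runner_sum (he : 0 < e) (hp : ∀ k, 1 ≤ k → p (k + 1) ≤ p k) :
    ∑ i ∈ range e, runnerCount e N p i = N := by
  have h1 := Finset.card_eq_sum_card_fiberwise
    (f := fun x => x % e) (s := beadSet N p) (t := range e)
    (fun x _ => mem_range.2 (Nat.mod_lt _ he))
  exact (h1.symm.trans (bead_card N p hp))

lemma pushed_filter (i : ℕ) (he : 0 < e) (hi : i < e) :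
    (pushedBeads e N p).filter (fun x => x % e = i)
      = (range (runnerCount e N p i)).image (fun t => e * t + i) := by
  ext x
  simp only [pushedBeads, mem_filter, mem_biUnion, mem_image, mem_range]
  constructor
  · rintro ⟨⟨i', hi', t, ht, rfl⟩, hmod⟩
    have hii : i' = i := by rw [Nat.mul_add_mod, Nat.mod_eq_of_lt hi'] at hmod; exact hmod
    subst hii
    exact ⟨t, ht, rfl⟩
  · rintro ⟨t, ht, rfl⟩
    exact ⟨⟨i, hi, t, ht, rfl⟩, by rw [Nat.mul_add_mod]; exact Nat.mod_eq_of_lt hi⟩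

lemma pushed_runnerCount (i : ℕ) (he : 0 < e) (hi : i < e) :
    ((pushedBeads e N p).filter (fun x => x % e = i)).card = runnerCount e N p i := by
  rw [pushed_filter e N p i he hi, Finset.card_image_of_injOn, Finset.card_range]
  intro a _ b _ h
  simp only at h
  exact Nat.eq_of_mul_eq_mul_left he (Nat.add_right_cancel h)

end p

lemma pushed_eq_iff (e N : ℕ) (p q : ℕ → ℕ) (he : 0 < e) :
    pushedBeads e N p = pushedBeads e N q
      ↔ ∀ i < e, runnerCount e N p i = runnerCount e N q i := by
  constructor
  · intro h i hi
    rw [← pushed_runnerCount e N p i he hi, ← pushed_runnerCount e N q i he hi, h]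
  · intro h
    unfold pushedBeads
    exact Finset.biUnion_congr rfl (fun i hi => by rw [h i (mem_range.1 hi)])



lemma surj_mod (e N j : ℕ) (he : 0 < e) (hj : j < e) :
    ∃ i, i < e ∧ (i + N) % e = j := by
  refine ⟨(j + (e * N - N)) % e, Nat.mod_lt _ he, ?_⟩
  rw [Nat.mod_add_mod, show j + (e * N - N) + N = j + e * N by
      have : N ≤ e * N := Nat.le_mul_of_pos_left N he
      omega,
    Nat.add_mul_mod_self_left, Nat.mod_eq_of_lt hj]

lemma F_Ico (e j : ℕ) (c : ℕ → ℕ) (hj1 : 1 ≤ j) (hj : j < e) :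
    ∑ i ∈ range e, c i * G e j i = ∑ i ∈ Ico j e, c i := by
  have h1 : ∀ i ∈ range e, c i * G e j i = if j ≤ i then c i else 0 := by
    intro i hi
    rw [G_eps e j i hj1 hj (mem_range.1 hi)]
    split <;> simp
  rw [Finset.sum_congr rfl h1, ← Finset.sum_filter]
  congr 1
  ext i
  simp only [Finset.mem_filter, Finset.mem_Ico, Finset.mem_range]
  omega

/-- telescoping: equal partial sums give equal counts. -/
lemma counts_eq (e : ℕ) (he : 0 < e) (cl cr : ℕ → ℕ)
    (htot : ∑ i ∈ range e, cl i = ∑ i ∈ range e, cr i)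
    (hIco : ∀ j, 1 ≤ j → j < e → ∑ i ∈ Ico j e, cl i = ∑ i ∈ Ico j e, cr i) :
    ∀ i < e, cl i = cr i := by
  have hIco' : ∀ j, 1 ≤ j → ∑ i ∈ Ico j e, cl i = ∑ i ∈ Ico j e, cr i := by
    intro j hj1
    rcases lt_or_ge j e with h | h
    · exact hIco j hj1 h
    · rw [Finset.Ico_eq_empty (by omega)]; simp
  intro i hi
  rcases Nat.eq_zero_or_pos i with rfl | hi1
  · have h1 : range e = insert 0 (Ico 1 e) := by
      ext x; simp only [mem_range, mem_insert, mem_Ico]; omega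
    rw [h1, Finset.sum_insert (by simp), Finset.sum_insert (by simp)] at htot
    have := hIco' 1 le_rfl
    omega
  · have h1 : Ico i e = insert i (Ico (i+1) e) := by
      ext x; simp only [mem_insert, mem_Ico]; omega
    have h2 := hIco' i hi1
    rw [h1, Finset.sum_insert (by simp), Finset.sum_insert (by simp)] at h2
    have := hIco' (i+1) (by omega)
    omega


end ContCoreAux

/-- For an `e`-core `rho` and a partition `lam`,
`cont(lam) = cont(rho) + d·δ` iff `lam` has `e`-core `rho` (pushed-up beads of
`lam` give the abacus of `rho`) and `e`-weight `d` (the total number of one-step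
bead moves, `∑ x/e` over beads minus the same for the core, equals `d`). -/
theorem cont_eq_iff_core_and_weight
    (e N d : ℕ) (he : 2 ≤ e)
    (lam rho : ℕ → ℕ)
    (hlam1 : ∀ k, 1 ≤ k → lam (k + 1) ≤ lam k) (hlam2 : ∀ k, N < k → lam k = 0)
    (hrho1 : ∀ k, 1 ≤ k → rho (k + 1) ≤ rho k) (hrho2 : ∀ k, N < k → rho k = 0)
    (hcore : pushedBeads e N rho = beadSet N rho) :
    (∀ i, i < e → contRes e N lam i = contRes e N rho i + d) ↔
      (pushedBeads e N lam = beadSet N rho ∧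
        (∑ x ∈ beadSet N lam, x / e) = (∑ x ∈ beadSet N rho, x / e) + d) := by
  have he0 : 0 < e := by omega
  have hA : (∀ i, i < e → contRes e N lam i = contRes e N rho i + d) ↔
      (∀ j, j < e → ∑ x ∈ beadSet N lam, ContCoreAux.G e j x
        = (∑ x ∈ beadSet N rho, ContCoreAux.G e j x) + d) := by
    constructor
    · intro h j hj
      obtain ⟨i, hi, hij⟩ := ContCoreAux.surj_mod e N j he0 hj
      have h1 := ContCoreAux.contRes_eq e N lam i he0 hi hlam1
      have h2 := ContCoreAux.contRes_eq e N rho i he0 hi hrho1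
      have h3 := h i hi
      rw [hij] at h1 h2
      omega
    · intro h i hi
      have h1 := ContCoreAux.contRes_eq e N lam i he0 hi hlam1
      have h2 := ContCoreAux.contRes_eq e N rho i he0 hi hrho1
      have h3 := h ((i+N)%e) (Nat.mod_lt _ he0)
      omega
  rw [hA]
  have hB : ∀ (p : ℕ → ℕ) (j : ℕ), ∑ x ∈ beadSet N p, ContCoreAux.G e j x
      = (∑ x ∈ beadSet N p, x / e)
        + ∑ i ∈ range e, runnerCount e N p i * ContCoreAux.G e j i :=
    fun p j => ContCoreAux.sum_G e N p j he0
  constructor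
  · intro h
    have hw : (∑ x ∈ beadSet N lam, x / e) = (∑ x ∈ beadSet N rho, x / e) + d := by
      have h0 := h 0 he0
      rw [hB lam 0, hB rho 0] at h0
      have z1 : ∑ i ∈ range e, runnerCount e N lam i * ContCoreAux.G e 0 i = 0 :=
        Finset.sum_eq_zero fun i hi => by
          rw [ContCoreAux.G_zero e i (mem_range.1 hi), mul_zero]
      have z2 : ∑ i ∈ range e, runnerCount e N rho i * ContCoreAux.G e 0 i = 0 :=
        Finset.sum_eq_zero fun i hi => by
          rw [ContCoreAux.G_zero e i (mem_range.1 hi), mul_zero]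
      omega
    refine ⟨?_, hw⟩
    have hcnt : ∀ i < e, runnerCount e N lam i = runnerCount e N rho i := by
      apply ContCoreAux.counts_eq e he0
      · rw [ContCoreAux.runner_sum e N lam he0 hlam1,
          ContCoreAux.runner_sum e N rho he0 hrho1]
      · intro j hj1 hj
        have h0 := h j hj
        rw [hB lam j, hB rho j, ContCoreAux.F_Ico e j _ hj1 hj,
          ContCoreAux.F_Ico e j _ hj1 hj] at h0
        omega
    rw [← hcore]
    exact (ContCoreAux.pushed_eq_iff e N lam rho he0).2 hcnt
  · rintro ⟨hps, hw⟩ j hj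
    have hcnt : ∀ i < e, runnerCount e N lam i = runnerCount e N rho i := by
      apply (ContCoreAux.pushed_eq_iff e N lam rho he0).1
      rw [hps, hcore]
    have hsum : ∑ i ∈ range e, runnerCount e N lam i * ContCoreAux.G e j i
        = ∑ i ∈ range e, runnerCount e N rho i * ContCoreAux.G e j i :=
      Finset.sum_congr rfl (fun i hi => by rw [hcnt i (mem_range.1 hi)])
    rw [hB lam j, hB rho j, hw, hsum]
    omega
end

section
/- Fix e ≥ 2 and j ∈ {1,…,e−1}. The standard Young tableaux of partition shape whose residue sequence (reading entries 1,…,e into nodes, where entry placed at node (r,s) has residue s−r mod e) equals a fixed word l^j ∈ I^{δ,j} are exactly two: one of shape (j, 1^{e−j}) in which the entry e occupies node (e−j+1, 1), and one of shape (j+1, 1^{e−j−1}) in which the entry e occupies node (1, j+1). -/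
open Finset

def IsPartitionFrom1 (p : ℕ → ℕ) : Prop := ∀ k, 1 ≤ k → p (k + 1) ≤ p k

/-- Membership of the (1-based) node `(r,s)` in the Young diagram of `p`. -/
def InDiag (p : ℕ → ℕ) (r s : ℕ) : Prop := 1 ≤ r ∧ 1 ≤ s ∧ s ≤ p r

/-- `l` (a word with 1-based positions `1,…,e`) lies in `I^{δ,j}`:
`l = 0 k j` where `k` is a shuffle of `(1,2,…,j-1)` and `(e-1,e-2,…,j+1)`. -/
def InIDeltaWord (e j : ℕ) (l : ℕ → ℕ) : Prop :=
  l 1 = 0 ∧ l e = j ∧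
  ∃ S : Finset ℕ, S ⊆ Finset.Icc 2 (e - 1) ∧
    S.image l = Finset.Icc 1 (j - 1) ∧
    ((Finset.Icc 2 (e - 1)) \ S).image l = Finset.Icc (j + 1) (e - 1) ∧
    (∀ a ∈ S, ∀ b ∈ S, a < b → l a < l b) ∧
    (∀ a ∈ (Finset.Icc 2 (e - 1)) \ S, ∀ b ∈ (Finset.Icc 2 (e - 1)) \ S,
      a < b → l b < l a)

/-- `t` is a standard tableau of shape `p` (with `|p| = e`), zero off the
diagram, bijective onto `{1,…,e}`, increasing along rows and columns, whose
residue sequence is the word `l` (entry `m` sits on a node of residue `l m`). -/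
def IsStdResTab (e : ℕ) (l : ℕ → ℕ) (p : ℕ → ℕ) (t : ℕ × ℕ → ℕ) : Prop :=
  (∀ r s, ¬ InDiag p r s → t (r, s) = 0) ∧
  (∀ r s, InDiag p r s → 1 ≤ t (r, s) ∧ t (r, s) ≤ e) ∧
  (∀ m, 1 ≤ m → m ≤ e → ∃! u : ℕ × ℕ, InDiag p u.1 u.2 ∧ t u = m) ∧
  (∀ r s, InDiag p r (s + 1) → 1 ≤ s → t (r, s) < t (r, s + 1)) ∧
  (∀ r s, InDiag p (r + 1) s → 1 ≤ r → t (r, s) < t (r + 1, s)) ∧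
  (∀ r s, InDiag p r s → ((s : ℤ) - (r : ℤ)) % (e : ℤ) = ((l (t (r, s))) : ℤ))

/-- The hook partition `(j, 1^{e-j})`. -/
def hookA (e j : ℕ) : ℕ → ℕ := fun r => if r = 1 then j else if r ≤ e - j + 1 then 1 else 0

/-- The hook partition `(j+1, 1^{e-j-1})`. -/
def hookB (e j : ℕ) : ℕ → ℕ := fun r => if r = 1 then j + 1 else if r ≤ e - j then 1 else 0

lemma ldelta_basic (e j : ℕ) (he : 2 ≤ e) (hj1 : 1 ≤ j) (hj2 : j ≤ e - 1)
    (l : ℕ → ℕ) (hl : InIDeltaWord e j l) :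
    (∀ m m', 1 ≤ m → m ≤ e → 1 ≤ m' → m' ≤ e → l m = l m' → m = m') ∧
    (∀ v, v ≤ e - 1 → ∃ m, 1 ≤ m ∧ m ≤ e ∧ l m = v) ∧
    (∀ m, 1 ≤ m → m ≤ e → l m ≤ e - 1) := by
  obtain ⟨h1, hej, S, hST, hS, hC, hmono, hanti⟩ := hl
  have hSb : ∀ m ∈ S, 2 ≤ m ∧ m ≤ e - 1 := by
    intro m hm; have := hST hm; simpa [Finset.mem_Icc] using this
  have hSv : ∀ m ∈ S, 1 ≤ l m ∧ l m ≤ j - 1 := by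
    intro m hm
    have : l m ∈ S.image l := Finset.mem_image_of_mem l hm
    rw [hS] at this; simpa [Finset.mem_Icc] using this
  have hCv : ∀ m ∈ Finset.Icc 2 (e-1) \ S, j + 1 ≤ l m ∧ l m ≤ e - 1 := by
    intro m hm
    have : l m ∈ (Finset.Icc 2 (e-1) \ S).image l := Finset.mem_image_of_mem l hm
    rw [hC] at this; simpa [Finset.mem_Icc] using this
  have hclass : ∀ m, 2 ≤ m → m ≤ e - 1 →
      (m ∈ S ∧ 1 ≤ l m ∧ l m ≤ j - 1) ∨
      (m ∈ Finset.Icc 2 (e-1) \ S ∧ j + 1 ≤ l m ∧ l m ≤ e - 1) := by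
    intro m h2 h3
    by_cases hm : m ∈ S
    · exact Or.inl ⟨hm, hSv m hm⟩
    · have hm' : m ∈ Finset.Icc 2 (e-1) \ S := by
        rw [Finset.mem_sdiff, Finset.mem_Icc]; exact ⟨⟨h2, h3⟩, hm⟩
      exact Or.inr ⟨hm', hCv m hm'⟩
  have hlt : ∀ m m', 1 ≤ m → m < m' → m' ≤ e → l m ≠ l m' := by
    intro m m' h1m hmm' hm'e
    by_cases hm1 : m = 1
    · subst hm1; rw [h1]
      by_cases hm'e' : m' = e
      · subst hm'e'; rw [hej]; omega
      · rcases hclass m' (by omega) (by omega) with ⟨_, h⟩ | ⟨_, h⟩ <;> omega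
    · by_cases hm'e' : m' = e
      · subst hm'e'; rw [hej]
        rcases hclass m (by omega) (by omega) with ⟨_, h⟩ | ⟨_, h⟩ <;> omega
      · rcases hclass m (by omega) (by omega) with ⟨hmS, hm⟩ | ⟨hmC, hm⟩ <;>
          rcases hclass m' (by omega) (by omega) with ⟨hm'S, hm'⟩ | ⟨hm'C, hm'⟩
        · have := hmono m hmS m' hm'S hmm'; omega
        · omega
        · omega
        · have := hanti m hmC m' hm'C hmm'; omega
  refine ⟨?_, ?_, ?_⟩
  · intro m m' h1m hme h1m' hm'e heq
    rcases lt_trichotomy m m' with h | h | h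
    · exact absurd heq (hlt m m' h1m h hm'e)
    · exact h
    · exact absurd heq.symm (hlt m' m h1m' h hme)
  · intro v hv
    by_cases hv0 : v = 0
    · exact ⟨1, le_refl 1, by omega, by rw [hv0]; exact h1⟩
    by_cases hvj : v = j
    · exact ⟨e, by omega, le_refl e, by rw [hvj]; exact hej⟩
    by_cases hvs : v ≤ j - 1
    · have hv' : v ∈ Finset.Icc 1 (j-1) := by rw [Finset.mem_Icc]; omega
      rw [← hS] at hv'
      obtain ⟨m, hmS, hml⟩ := Finset.mem_image.mp hv'
      have := hSb m hmS
      exact ⟨m, by omega, by omega, hml⟩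
    · have hv' : v ∈ Finset.Icc (j+1) (e-1) := by rw [Finset.mem_Icc]; omega
      rw [← hC] at hv'
      obtain ⟨m, hmC, hml⟩ := Finset.mem_image.mp hv'
      have hmT := (Finset.mem_sdiff.mp hmC).1
      rw [Finset.mem_Icc] at hmT
      exact ⟨m, by omega, by omega, hml⟩
  · intro m h1m hme
    by_cases hm1 : m = 1
    · subst hm1; rw [h1]; omega
    by_cases hm'e : m = e
    · subst hm'e; rw [hej]; omega
    · rcases hclass m (by omega) (by omega) with ⟨_, h⟩ | ⟨_, h⟩ <;> omega

open Classical in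
noncomputable def ginv (e : ℕ) (l : ℕ → ℕ) (v : ℕ) : ℕ :=
  if h : ∃ m, 1 ≤ m ∧ m ≤ e ∧ l m = v then h.choose else 0

lemma gfacts (e j : ℕ) (he : 2 ≤ e) (hj1 : 1 ≤ j) (hj2 : j ≤ e - 1)
    (l : ℕ → ℕ) (hl : InIDeltaWord e j l) :
    (∀ v, v ≤ e - 1 → 1 ≤ ginv e l v ∧ ginv e l v ≤ e ∧ l (ginv e l v) = v) ∧
    ginv e l 0 = 1 ∧
    (∀ v, 1 ≤ v → v ≤ e - 1 → 2 ≤ ginv e l v) ∧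
    (∀ v w, 1 ≤ v → v < w → w ≤ j → ginv e l v < ginv e l w) ∧
    (∀ v w, j ≤ v → v < w → w ≤ e - 1 → ginv e l w < ginv e l v) := by
  obtain ⟨hinj, hsurj, hbd⟩ := ldelta_basic e j he hj1 hj2 l hl
  have hspec : ∀ v, v ≤ e - 1 → 1 ≤ ginv e l v ∧ ginv e l v ≤ e ∧ l (ginv e l v) = v := by
    intro v hv
    have h := hsurj v hv
    rw [ginv, dif_pos h]
    exact h.choose_spec
  obtain ⟨h1, hej, S, hST, hS, hC, hmono, hanti⟩ := hl
  have hg0 : ginv e l 0 = 1 := by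
    have h := hspec 0 (by omega)
    exact hinj _ _ h.1 h.2.1 (by omega) (by omega) (by rw [h.2.2, h1])
  have hgj : ginv e l j = e := by
    have h := hspec j hj2
    exact hinj _ _ h.1 h.2.1 (by omega) (by omega) (by rw [h.2.2, hej])
  have hgS : ∀ v, 1 ≤ v → v ≤ j - 1 → ginv e l v ∈ S := by
    intro v h1v hvj
    have h := hspec v (by omega)
    have hv' : v ∈ Finset.Icc 1 (j-1) := by rw [Finset.mem_Icc]; omega
    rw [← hS] at hv'
    obtain ⟨m, hmS, hml⟩ := Finset.mem_image.mp hv'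
    have hmT := hST hmS; rw [Finset.mem_Icc] at hmT
    have : m = ginv e l v :=
      hinj _ _ (by omega) (by omega) h.1 h.2.1 (by rw [hml, h.2.2])
    rwa [← this]
  have hgC : ∀ v, j + 1 ≤ v → v ≤ e - 1 → ginv e l v ∈ Finset.Icc 2 (e-1) \ S := by
    intro v h1v hvj
    have h := hspec v (by omega)
    have hv' : v ∈ Finset.Icc (j+1) (e-1) := by rw [Finset.mem_Icc]; omega
    rw [← hC] at hv'
    obtain ⟨m, hmC, hml⟩ := Finset.mem_image.mp hv'
    have hmT := (Finset.mem_sdiff.mp hmC).1; rw [Finset.mem_Icc] at hmT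
    have : m = ginv e l v :=
      hinj _ _ (by omega) (by omega) h.1 h.2.1 (by rw [hml, h.2.2])
    rwa [← this]
  have hpos : ∀ v, 1 ≤ v → v ≤ e - 1 → 2 ≤ ginv e l v := by
    intro v h1v hv
    by_cases hvj : v = j
    · rw [hvj, hgj]; omega
    by_cases hvs : v ≤ j - 1
    · have := hST (hgS v h1v hvs); rw [Finset.mem_Icc] at this; omega
    · have := (Finset.mem_sdiff.mp (hgC v (by omega) hv)).1
      rw [Finset.mem_Icc] at this; omega
  refine ⟨hspec, hg0, hpos, ?_, ?_⟩
  · intro v w h1v hvw hwj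
    by_cases hwj' : w = j
    · subst hwj'
      have := hST (hgS v h1v (by omega)); rw [Finset.mem_Icc] at this
      omega
    · have hvS := hgS v h1v (by omega)
      have hwS := hgS w (by omega) (by omega)
      have hv := hspec v (by omega)
      have hw := hspec w (by omega)
      rcases lt_trichotomy (ginv e l v) (ginv e l w) with h | h | h
      · exact h
      · rw [h] at hv; omega
      · have := hmono _ hwS _ hvS h; omega
  · intro v w hjv hvw hwe
    by_cases hvj' : v = j
    · subst hvj'
      rw [hgj]
      have := (Finset.mem_sdiff.mp (hgC w (by omega) hwe)).1
      rw [Finset.mem_Icc] at this; omega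
    · have hvC := hgC v (by omega) (by omega)
      have hwC := hgC w (by omega) hwe
      have hv := hspec v (by omega)
      have hw := hspec w (by omega)
      rcases lt_trichotomy (ginv e l w) (ginv e l v) with h | h | h
      · exact h
      · rw [h] at hw; omega
      · have := hanti _ hvC _ hwC h; omega

lemma res_row_int (e s : ℕ) (h1 : 1 ≤ s) (h2 : s ≤ e) :
    ((s : ℤ) - 1) % (e : ℤ) = (s : ℤ) - 1 :=
  Int.emod_eq_of_lt (by omega) (by omega)

lemma res_col_int (e r : ℕ) (h1 : 2 ≤ r) (h2 : r ≤ e) :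
    ((1 : ℤ) - (r : ℤ)) % (e : ℤ) = (e : ℤ) + 1 - r := by
  have h : ((1 : ℤ) - r) % e = ((1 - (r:ℤ)) + e * 1) % e :=
    (Int.add_mul_emod_self_left (1 - (r:ℤ)) e 1).symm
  rw [h]
  have h2' : (1 - (r:ℤ)) + e * 1 = (e : ℤ) + 1 - r := by ring
  rw [h2']
  exact Int.emod_eq_of_lt (by omega) (by omega)

lemma tab_panti (p : ℕ → ℕ) (hp : IsPartitionFrom1 p) :
    ∀ r r', 1 ≤ r → r ≤ r' → p r' ≤ p r := by
  intro r r' h1 h2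
  obtain ⟨k, rfl⟩ := Nat.exists_eq_add_of_le h2
  clear h2
  induction k with
  | zero => exact le_refl _
  | succ n ih => exact le_trans (hp (r + n) (by omega)) ih

lemma tab_node_eq (e : ℕ) (l : ℕ → ℕ) (p : ℕ → ℕ) (t : ℕ × ℕ → ℕ)
    (hinj : ∀ m m', 1 ≤ m → m ≤ e → 1 ≤ m' → m' ≤ e → l m = l m' → m = m')
    (h : IsStdResTab e l p t) :
    ∀ r s r' s', InDiag p r s → InDiag p r' s' →
      ((s : ℤ) - r) % e = ((s' : ℤ) - r') % e → r = r' ∧ s = s' := by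
  intro r s r' s' hu hu' hres
  obtain ⟨hz, hb, hex, _, _, hresc⟩ := h
  have e1 := hresc r s hu
  have e2 := hresc r' s' hu'
  have hcast : (l (t (r, s)) : ℤ) = (l (t (r', s')) : ℤ) := by rw [← e1, ← e2, hres]
  have hll : l (t (r, s)) = l (t (r', s')) := by exact_mod_cast hcast
  have hb1 := hb r s hu
  have hb2 := hb r' s' hu'
  have ht : t (r, s) = t (r', s') := hinj _ _ hb1.1 hb1.2 hb2.1 hb2.2 hll
  obtain ⟨u, hu0, huniq⟩ := hex (t (r, s)) hb1.1 hb1.2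
  have q1 := huniq (r, s) ⟨hu, rfl⟩
  have q2 := huniq (r', s') ⟨hu', ht.symm⟩
  have : (r, s) = (r', s') := q1.trans q2.symm
  exact ⟨congrArg Prod.fst this, congrArg Prod.snd this⟩

lemma tab_shape (e : ℕ) (l : ℕ → ℕ) (p : ℕ → ℕ) (t : ℕ × ℕ → ℕ) (he : 2 ≤ e)
    (hinj : ∀ m m', 1 ≤ m → m ≤ e → 1 ≤ m' → m' ≤ e → l m = l m' → m = m')
    (hp : IsPartitionFrom1 p) (h : IsStdResTab e l p t) :
    1 ≤ p 1 ∧ (∀ r, 2 ≤ r → p r ≤ 1) ∧ p 1 ≤ e ∧ (∀ r, e + 1 ≤ r → p r = 0) := by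
  have hne := tab_node_eq e l p t hinj h
  have hd11 : InDiag p 1 1 := by
    obtain ⟨u, ⟨hd, _⟩, _⟩ := h.2.2.1 1 (le_refl 1) (by omega)
    obtain ⟨hr, hs, hsp⟩ := hd
    have := tab_panti p hp 1 u.1 (le_refl 1) hr
    exact ⟨le_refl 1, le_refl 1, by omega⟩
  refine ⟨hd11.2.2, ?_, ?_, ?_⟩
  · intro r hr
    by_contra hc
    have hd22 : InDiag p 2 2 := by
      have := tab_panti p hp 2 r (by omega) hr
      exact ⟨by omega, by omega, by omega⟩
    have := hne 1 1 2 2 hd11 hd22 (by norm_num)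
    omega
  · by_contra hc
    have hd : InDiag p 1 (e + 1) := ⟨le_refl 1, by omega, by omega⟩
    have := hne 1 1 1 (e + 1) hd11 hd (by
      push_cast
      rw [Int.emod_eq_of_lt (by omega) (by omega)]
      have : ((e : ℤ) + 1 - 1) = e := by ring
      rw [this, Int.emod_self])
    omega
  · intro r hr
    by_contra hc
    have hd : InDiag p (e + 1) 1 := by
      have h2 := tab_panti p hp (e + 1) r (by omega) hr
      exact ⟨by omega, le_refl 1, by omega⟩
    have := hne 1 1 (e + 1) 1 hd11 hd (by
      push_cast
      have h3 : (1 : ℤ) - (e + 1) = 0 - e := by ring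
      rw [h3]
      rw [Int.sub_emod, Int.emod_self]
      norm_num)
    omega

lemma classify (e j : ℕ) (he : 2 ≤ e) (hj1 : 1 ≤ j) (hj2 : j ≤ e - 1)
    (l : ℕ → ℕ) (hl : InIDeltaWord e j l) (p : ℕ → ℕ) (t : ℕ × ℕ → ℕ)
    (hp : IsPartitionFrom1 p) (h : IsStdResTab e l p t) :
    ((∀ r, 1 ≤ r → p r = hookA e j r) ∧ t (e - j + 1, 1) = e) ∨
    ((∀ r, 1 ≤ r → p r = hookB e j r) ∧ t (1, j + 1) = e) := by
  obtain ⟨hinj, hsurj, hbd⟩ := ldelta_basic e j he hj1 hj2 l hl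
  have hne := tab_node_eq e l p t hinj h
  obtain ⟨hp1, hple, hp1e, hp0⟩ := tab_shape e l p t he hinj hp h
  have panti := tab_panti p hp
  obtain ⟨u, ⟨hud0, hute0⟩, huniq⟩ := h.2.2.1 e (by omega) (le_refl e)
  obtain ⟨r, s⟩ := u
  have hud : InDiag p r s := hud0
  have hute : t (r, s) = e := hute0
  obtain ⟨hr1, hs1, hsp⟩ := hud
  have hres := h.2.2.2.2.2 r s ⟨hr1, hs1, hsp⟩
  rw [hute, hl.2.1] at hres
  have hcorner : s = p r := by
    by_contra hc
    have hd' : InDiag p r (s + 1) := ⟨hr1, by omega, by omega⟩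
    have hlt := h.2.2.2.1 r s hd' hs1
    have hb := h.2.1 r (s + 1) hd'
    rw [hute] at hlt
    omega
  have hnext : p (r + 1) < s := by
    by_contra hc
    have hd' : InDiag p (r + 1) s := ⟨by omega, hs1, by omega⟩
    have hlt := h.2.2.2.2.1 r s hd' hr1
    have hb := h.2.1 (r + 1) s hd'
    rw [hute] at hlt
    omega
  have hre : r ≤ e := by
    by_contra hc
    have := hp0 r (by omega)
    omega
  by_cases hrr : r = 1
  · -- Case B : entry e in the first row
    subst hrr
    push_cast at hres
    rw [res_row_int e s hs1 (by omega)] at hres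
    have hsj : s = j + 1 := by omega
    have hp1j : p 1 = j + 1 := by omega
    have hkey0 : p (e - j + 1) = 0 := by
      by_contra hc
      have hd' : InDiag p (e - j + 1) 1 := ⟨by omega, le_refl 1, by omega⟩
      have heq := hne 1 s (e - j + 1) 1 ⟨le_refl 1, hs1, hsp⟩ hd' (by
        simp only [Nat.cast_one]
        rw [res_row_int e s hs1 (by omega), res_col_int e (e - j + 1) (by omega) (by omega)]
        omega)
      omega
    have hkey1 : 2 ≤ e - j → 1 ≤ p (e - j) := by
      intro hej2
      obtain ⟨m, hm1, hme, hml⟩ := hsurj (j + 1) (by omega)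
      obtain ⟨u', ⟨hud0', hut0'⟩, _⟩ := h.2.2.1 m hm1 hme
      obtain ⟨r', s'⟩ := u'
      have hud' : InDiag p r' s' := hud0'
      have hut' : t (r', s') = m := hut0'
      obtain ⟨hr1', hs1', hsp'⟩ := hud'
      have hres' := h.2.2.2.2.2 r' s' ⟨hr1', hs1', hsp'⟩
      rw [hut', hml] at hres'
      by_cases hr'1 : r' = 1
      · subst hr'1
        push_cast at hres'
        rw [res_row_int e s' hs1' (by omega)] at hres'
        omega
      · have hs'1 : s' = 1 := by have := hple r' (by omega); omega
        subst hs'1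
        have hr'e : r' ≤ e := by
          by_contra hc2; have := hp0 r' (by omega); omega
        push_cast at hres'
        rw [res_col_int e r' (by omega) hr'e] at hres'
        have hr'v : r' = e - j := by omega
        rw [hr'v] at hsp'
        omega
    refine Or.inr ⟨?_, ?_⟩
    · intro r0 hr0
      unfold hookB
      by_cases h0 : r0 = 1
      · subst h0; rw [if_pos rfl]; exact hp1j
      · by_cases h2 : r0 ≤ e - j
        · rw [if_neg h0, if_pos h2]
          have h3 := panti r0 (e - j) (by omega) h2
          have h4 := hple r0 (by omega)
          have h5 := hkey1 (by omega)
          omega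
        · rw [if_neg h0, if_neg h2]
          have := panti (e - j + 1) r0 (by omega) (by omega)
          omega
    · rw [← hsj]; exact hute
  · -- Case A : entry e in the first column
    have hr2 : 2 ≤ r := by omega
    have hs' : s = 1 := by have := hple r hr2; omega
    subst hs'
    push_cast at hres
    rw [res_col_int e r hr2 hre] at hres
    have hrval : r = e + 1 - j := by omega
    have hnext0 : p (r + 1) = 0 := by omega
    have hp1le : p 1 ≤ j := by
      by_contra hc
      have hd' : InDiag p 1 (j + 1) := ⟨le_refl 1, by omega, by omega⟩
      have heq := hne 1 (j + 1) r 1 hd' ⟨hr1, le_refl 1, hsp⟩ (by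
        simp only [Nat.cast_one]
        rw [res_row_int e (j + 1) (by omega) (by omega), res_col_int e r hr2 hre]
        omega)
      omega
    have hp1ge : j ≤ p 1 := by
      rcases Nat.eq_or_lt_of_le hj1 with h1j | h1j
      · omega
      · by_contra hc
        obtain ⟨m, hm1, hme, hml⟩ := hsurj (j - 1) (by omega)
        obtain ⟨u', ⟨hud0', hut0'⟩, _⟩ := h.2.2.1 m hm1 hme
        obtain ⟨r', s'⟩ := u'
        have hud' : InDiag p r' s' := hud0'
        have hut' : t (r', s') = m := hut0'
        obtain ⟨hr1', hs1', hsp'⟩ := hud'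
        have hres' := h.2.2.2.2.2 r' s' ⟨hr1', hs1', hsp'⟩
        rw [hut', hml] at hres'
        by_cases hr'1 : r' = 1
        · subst hr'1
          push_cast at hres'
          rw [res_row_int e s' hs1' (by omega)] at hres'
          omega
        · have hs'1 : s' = 1 := by have := hple r' (by omega); omega
          subst hs'1
          have hr'e : r' ≤ e := by
            by_contra hc2; have := hp0 r' (by omega); omega
          push_cast at hres'
          rw [res_col_int e r' (by omega) hr'e] at hres'
          have hr'v : r' = r + 1 := by omega
          rw [hr'v] at hsp'
          omega
    refine Or.inl ⟨?_, ?_⟩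
    · intro r0 hr0
      unfold hookA
      by_cases h0 : r0 = 1
      · subst h0; rw [if_pos rfl]; omega
      · by_cases h2 : r0 ≤ e - j + 1
        · rw [if_neg h0, if_pos h2]
          have h3 := panti r0 r (by omega) (by omega)
          have h4 := hple r0 (by omega)
          omega
        · rw [if_neg h0, if_neg h2]
          have := panti (r + 1) r0 (by omega) (by omega)
          omega
    · have hv : e - j + 1 = r := by omega
      rw [hv]; exact hute

def resnat (e r s : ℕ) : ℕ := if r = 1 then s - 1 else e + 1 - r

open Classical in
noncomputable def tgen (e : ℕ) (l : ℕ → ℕ) (p : ℕ → ℕ) : ℕ × ℕ → ℕ :=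
  fun u => if InDiag p u.1 u.2 then ginv e l (resnat e u.1 u.2) else 0

lemma hook_tab (e j : ℕ) (he : 2 ≤ e) (hj1 : 1 ≤ j) (hj2 : j ≤ e - 1)
    (l : ℕ → ℕ) (hl : InIDeltaWord e j l) (a : ℕ) (ha1 : j ≤ a) (ha2 : a ≤ j + 1)
    (p : ℕ → ℕ)
    (hp : ∀ r s, InDiag p r s ↔ (r = 1 ∧ 1 ≤ s ∧ s ≤ a) ∨ (2 ≤ r ∧ r ≤ e + 1 - a ∧ s = 1)) :
    IsStdResTab e l p (tgen e l p) := by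
  obtain ⟨hinj, hsurj, hbd⟩ := ldelta_basic e j he hj1 hj2 l hl
  obtain ⟨gs, g0, gpos, grow, gcol⟩ := gfacts e j he hj1 hj2 l hl
  have hae : a ≤ e := by omega
  have hval : ∀ r s, InDiag p r s → tgen e l p (r, s) = ginv e l (resnat e r s) := by
    intro r s hd
    simp only [tgen]
    rw [if_pos hd]
  have hrange : ∀ r s, InDiag p r s → resnat e r s ≤ e - 1 := by
    intro r s hd
    rw [hp] at hd
    unfold resnat
    rcases hd with ⟨h1, h2, h3⟩ | ⟨h1, h2, h3⟩
    · rw [if_pos h1]; omega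
    · rw [if_neg (by omega)]; omega
  refine ⟨?_, ?_, ?_, ?_, ?_, ?_⟩
  · intro r s hd
    simp only [tgen]
    rw [if_neg hd]
  · intro r s hd
    rw [hval r s hd]
    have := gs _ (hrange r s hd)
    omega
  · intro m hm1 hme
    have hlm : l m ≤ e - 1 := hbd m hm1 hme
    have hvm : ∀ r s, InDiag p r s → (tgen e l p (r, s) = m ↔ resnat e r s = l m) := by
      intro r s hd
      rw [hval r s hd]
      have hspec := gs _ (hrange r s hd)
      constructor
      · intro hgm; rw [← hgm, hspec.2.2]
      · intro hrs
        rw [hrs]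
        have hspec2 := gs _ hlm
        exact hinj _ _ hspec2.1 hspec2.2.1 hm1 hme hspec2.2.2
    by_cases hc : l m ≤ a - 1
    · refine ⟨(1, l m + 1), ⟨?_, ?_⟩, ?_⟩
      · show InDiag p 1 (l m + 1)
        rw [hp]; left; exact ⟨rfl, by omega, by omega⟩
      · show tgen e l p (1, l m + 1) = m
        rw [hvm 1 (l m + 1) (by rw [hp]; left; exact ⟨rfl, by omega, by omega⟩)]
        unfold resnat
        rw [if_pos rfl]
        omega
      · rintro ⟨r, s⟩ ⟨hd, htm⟩
        have hd' : InDiag p r s := hd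
        have htm' : tgen e l p (r, s) = m := htm
        rw [hvm r s hd'] at htm'
        have hd2 := hd'
        rw [hp] at hd2
        unfold resnat at htm'
        rcases hd2 with ⟨h1, h2, h3⟩ | ⟨h1, h2, h3⟩
        · rw [if_pos h1] at htm'
          have : s = l m + 1 := by omega
          rw [h1, this]
        · rw [if_neg (by omega)] at htm'
          omega
    · refine ⟨(e + 1 - l m, 1), ⟨?_, ?_⟩, ?_⟩
      · show InDiag p (e + 1 - l m) 1
        rw [hp]; right; exact ⟨by omega, by omega, rfl⟩
      · show tgen e l p (e + 1 - l m, 1) = m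
        rw [hvm (e + 1 - l m) 1 (by rw [hp]; right; exact ⟨by omega, by omega, rfl⟩)]
        unfold resnat
        rw [if_neg (by omega)]
        omega
      · rintro ⟨r, s⟩ ⟨hd, htm⟩
        have hd' : InDiag p r s := hd
        have htm' : tgen e l p (r, s) = m := htm
        rw [hvm r s hd'] at htm'
        have hd2 := hd'
        rw [hp] at hd2
        unfold resnat at htm'
        rcases hd2 with ⟨h1, h2, h3⟩ | ⟨h1, h2, h3⟩
        · rw [if_pos h1] at htm'
          omega
        · rw [if_neg (by omega)] at htm'
          have : r = e + 1 - l m := by omega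
          rw [this, h3]
  · intro r s hd hs1
    have hd2 := hd
    rw [hp] at hd2
    rcases hd2 with ⟨h1, h2, h3⟩ | ⟨h1, h2, h3⟩
    · subst h1
      have hds : InDiag p 1 s := by rw [hp]; left; exact ⟨rfl, hs1, by omega⟩
      rw [hval 1 s hds, hval 1 (s + 1) hd]
      unfold resnat
      rw [if_pos rfl, if_pos rfl]
      by_cases hs2 : s = 1
      · subst hs2
        norm_num
        rw [g0]
        have := gpos 1 (le_refl 1) (by omega)
        omega
      · have : s + 1 - 1 = s := by omega
        rw [this]
        have := grow (s - 1) s (by omega) (by omega) (by omega)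
        exact this
    · omega
  · intro r s hd hr1
    have hd2 := hd
    rw [hp] at hd2
    rcases hd2 with ⟨h1, h2, h3⟩ | ⟨h1, h2, h3⟩
    · omega
    · subst h3
      have hds : InDiag p r 1 := by
        rw [hp]
        by_cases hr : r = 1
        · left; exact ⟨hr, le_refl 1, by omega⟩
        · right; exact ⟨by omega, by omega, rfl⟩
      rw [hval r 1 hds, hval (r + 1) 1 hd]
      by_cases hr : r = 1
      · subst hr
        unfold resnat
        norm_num
        rw [g0]
        have h4 : e + 1 - 2 = e - 1 := by omega
        rw [h4]
        have := gpos (e - 1) (by omega) (le_refl _)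
        omega
      · unfold resnat
        rw [if_neg hr, if_neg (by omega)]
        have h4 : e + 1 - (r + 1) = e - r := by omega
        rw [h4]
        exact gcol (e - r) (e + 1 - r) (by omega) (by omega) (by omega)
  · intro r s hd
    rw [hval r s hd]
    have hspec := gs _ (hrange r s hd)
    rw [hspec.2.2]
    have hd2 := hd
    rw [hp] at hd2
    rcases hd2 with ⟨h1, h2, h3⟩ | ⟨h1, h2, h3⟩
    · subst h1
      unfold resnat
      rw [if_pos rfl]
      simp only [Nat.cast_one]
      rw [res_row_int e s h2 (by omega)]
      omega
    · subst h3
      unfold resnat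
      rw [if_neg (by omega)]
      simp only [Nat.cast_one]
      rw [res_col_int e r (by omega) (by omega)]
      omega

lemma tab_unique (e j : ℕ) (he : 2 ≤ e) (hj1 : 1 ≤ j) (hj2 : j ≤ e - 1)
    (l : ℕ → ℕ) (hl : InIDeltaWord e j l) (p : ℕ → ℕ) (t t' : ℕ × ℕ → ℕ)
    (h : IsStdResTab e l p t) (h' : IsStdResTab e l p t') : t = t' := by
  obtain ⟨hinj, _, _⟩ := ldelta_basic e j he hj1 hj2 l hl
  funext u
  obtain ⟨r, s⟩ := u
  by_cases hd : InDiag p r s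
  · have e1 := h.2.2.2.2.2 r s hd
    have e2 := h'.2.2.2.2.2 r s hd
    have hcast : (l (t (r, s)) : ℤ) = (l (t' (r, s)) : ℤ) := by rw [← e1, ← e2]
    have hll : l (t (r, s)) = l (t' (r, s)) := by exact_mod_cast hcast
    have b1 := h.2.1 r s hd
    have b2 := h'.2.1 r s hd
    exact hinj _ _ b1.1 b1.2 b2.1 b2.2 hll
  · rw [h.1 r s hd, h'.1 r s hd]
/-- The standard tableaux of partition shape with residue
sequence `l^j ∈ I^{δ,j}` are exactly two: one of shape `(j,1^{e-j})` with entry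
`e` at node `(e-j+1,1)`, and one of shape `(j+1,1^{e-j-1})` with entry `e` at
node `(1,j+1)`. -/
theorem std_tableaux_residue_ldelta
    (e j : ℕ) (he : 2 ≤ e) (hj1 : 1 ≤ j) (hj2 : j ≤ e - 1)
    (l : ℕ → ℕ) (hl : InIDeltaWord e j l) :
    (∀ p t, IsPartitionFrom1 p → IsStdResTab e l p t →
      ((∀ r, 1 ≤ r → p r = hookA e j r) ∧ t (e - j + 1, 1) = e) ∨
      ((∀ r, 1 ≤ r → p r = hookB e j r) ∧ t (1, j + 1) = e)) ∧
    (∃ t, IsStdResTab e l (hookA e j) t) ∧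
    (∀ t t', IsStdResTab e l (hookA e j) t → IsStdResTab e l (hookA e j) t' → t = t') ∧
    (∃ t, IsStdResTab e l (hookB e j) t) ∧
    (∀ t t', IsStdResTab e l (hookB e j) t → IsStdResTab e l (hookB e j) t' → t = t') := by
  have hAmem : ∀ r s, InDiag (hookA e j) r s ↔
      (r = 1 ∧ 1 ≤ s ∧ s ≤ j) ∨ (2 ≤ r ∧ r ≤ e + 1 - j ∧ s = 1) := by
    intro r s
    unfold InDiag hookA
    split_ifs <;> omega
  have hBmem : ∀ r s, InDiag (hookB e j) r s ↔
      (r = 1 ∧ 1 ≤ s ∧ s ≤ j + 1) ∨ (2 ≤ r ∧ r ≤ e + 1 - (j + 1) ∧ s = 1) := by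
    intro r s
    unfold InDiag hookB
    split_ifs <;> omega
  exact ⟨fun p t hp h => classify e j he hj1 hj2 l hl p t hp h,
    ⟨tgen e l (hookA e j), hook_tab e j he hj1 hj2 l hl j (le_refl j) (by omega) _ hAmem⟩,
    fun t t' h h' => tab_unique e j he hj1 hj2 l hl _ t t' h h',
    ⟨tgen e l (hookB e j), hook_tab e j he hj1 hj2 l hl (j + 1) (by omega) (le_refl _) _ hBmem⟩,
    fun t t' h h' => tab_unique e j he hj1 hj2 l hl _ t t' h h'⟩
end

section
/- Fix e ≥ 2, d ≥ 1, a d-Rouquier e-core ρ of residue κ, and μ ∈ P_{ρ,d} (partitions of e-core ρ and e-weight d) with e-quotient μ⃗. Then the Young diagram of μ decomposes as the disjoint union of Y(ρ) and the hooks H(u) for u ∈ Y(μ⃗), and each hook H(u) has vertex of residue κ. -/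
/-!
On the `N`-bead abacus, node `(r, s)` lies in `Y(p)` iff at least `r` beads sit at positions
`≥ N - r + s`; so along each diagonal `Y(p)` is an initial segment of rows whose length counts
beads, and this count splits over the `e` runners. On runner `l` the core `ρ` has its beads at
levels `0, …, b_l - 1`, while `μ` has there the beads of the `b_l`-bead abacus of `Q_l`. Hence the
extra rows of `Y(μ)` on a diagonal come from nodes `(r, s)` of some `Y(Q_l)` on the matching
diagonal of runner `l`. The Rouquier gap `b_{l+1} - b_l ≥ d - 1` forces all these nodes onto a
single runner `i`, and following one of them over the `e` consecutive diagonals that share its level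
on runner `i` traces out the hook `H(r, s, i)`, whose vertex has content `e (b_i - r + s) - N`.
-/

open Finset

def runnerPositions (e N : ℕ) (p : ℕ → ℕ) (i : ℕ) : Finset ℕ :=
  ((beadSet N p).filter (fun x => x % e = i)).image (fun x => x / e)

def VanishBeyond (N : ℕ) (p : ℕ → ℕ) : Prop := ∀ k, N < k → p k = 0

def IsQuotientOf (e N : ℕ) (p : ℕ → ℕ) (Q : ℕ → ℕ → ℕ) : Prop :=
  ∀ i, i < e → VanishBeyond (runnerCount e N p i) (Q i) ∧
    beadSet (runnerCount e N p i) (Q i) = runnerPositions e N p i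

/-- `p` is a partition with `e`-core `rho` and `e`-weight `d`. -/
def InBlock (e N d : ℕ) (rho p : ℕ → ℕ) : Prop :=
  IsPartitionFrom1 p ∧ VanishBeyond N p ∧
  pushedBeads e N p = beadSet N rho ∧
  (∑ x ∈ beadSet N p, x / e) = (∑ x ∈ beadSet N rho, x / e) + d

def xcoord (e : ℕ) (b : ℕ → ℕ) (r s i : ℕ) : ℤ :=
  (r : ℤ) - ((e : ℤ) - (i : ℤ) - 1) * ((b i : ℤ) - (r : ℤ) + (s : ℤ)) +
    ∑ l ∈ Finset.Ico (i + 1) e, (b l : ℤ)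

def ycoord (e : ℕ) (b : ℕ → ℕ) (r s i : ℕ) : ℤ :=
  (s : ℤ) + (i : ℤ) * ((b i : ℤ) - (r : ℤ) + (s : ℤ)) -
    ∑ l ∈ Finset.range i, (b l : ℤ)

/-- The `e`-hook `H(r,s,i)` with arm length `i` and vertex `(x(r,s,i), y(r,s,i))`. -/
def hookSet (e : ℕ) (b : ℕ → ℕ) (r s i : ℕ) : Set (ℤ × ℤ) :=
  {p | (p.1 = xcoord e b r s i ∧
          ycoord e b r s i ≤ p.2 ∧ p.2 ≤ ycoord e b r s i + (i : ℤ)) ∨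
       (p.2 = ycoord e b r s i ∧
          xcoord e b r s i ≤ p.1 ∧ p.1 ≤ xcoord e b r s i + ((e : ℤ) - (i : ℤ) - 1))}

/-- The Young diagram of `p` as a subset of `ℤ × ℤ` (1-based nodes). -/
def YD (p : ℕ → ℕ) : Set (ℤ × ℤ) :=
  {u | ∃ r s : ℕ, 1 ≤ r ∧ 1 ≤ s ∧ s ≤ p r ∧ u = ((r : ℤ), (s : ℤ))}

lemma IsPartitionFrom1.le_of_le {p : ℕ → ℕ} (hp : IsPartitionFrom1 p) {k k' : ℕ}
    (hk : 1 ≤ k) (hkk' : k ≤ k') : p k' ≤ p k := by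
  induction hkk' with
  | refl => exact le_rfl
  | step h ih => exact (hp _ (hk.trans h)).trans ih

lemma VanishBeyond.le_of_pos {N : ℕ} {p : ℕ → ℕ} (hv : VanishBeyond N p) {r : ℕ} (hr : 0 < p r) :
    r ≤ N := by
  by_contra! h
  exact hr.ne' (hv r h)

lemma IsPartitionFrom1.strictAntiOn_bead {p : ℕ → ℕ} (hp : IsPartitionFrom1 p) (N : ℕ) :
    StrictAntiOn (fun k => p k + N - k) (Set.Icc 1 N) := by
  intro k hk k' hk' hlt
  have := hp.le_of_le hk.1 hlt.le
  simp only [Set.mem_Icc] at hk hk'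
  show p k' + N - k' < p k + N - k
  omega

lemma IsPartitionFrom1.injOn_bead {p : ℕ → ℕ} (hp : IsPartitionFrom1 p) (N : ℕ) :
    Set.InjOn (fun k => p k + N - k) (Icc 1 N : Finset ℕ) := by
  rw [coe_Icc]
  exact (hp.strictAntiOn_bead N).injOn

lemma card_beadSet {N : ℕ} {p : ℕ → ℕ} (hp : IsPartitionFrom1 p) : (beadSet N p).card = N := by
  rw [beadSet, card_image_of_injOn (hp.injOn_bead N), Nat.card_Icc,
    Nat.add_sub_cancel]

lemma isPartitionFrom1_zero : IsPartitionFrom1 (fun _ => 0) := fun _ _ => le_rfl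

lemma beadSet_zero (n : ℕ) : beadSet n (fun _ => 0) = range n := by
  ext x
  simp only [beadSet, mem_image, mem_Icc, mem_range]
  constructor
  · rintro ⟨k, ⟨hk, hkn⟩, rfl⟩
    omega
  · intro hx
    exact ⟨n - x, by omega, by omega⟩

lemma sum_beadSet {n : ℕ} {q : ℕ → ℕ} (hq : IsPartitionFrom1 q) :
    ∑ x ∈ beadSet n q, x = ∑ k ∈ Icc 1 n, q k + ∑ k ∈ Icc 1 n, (n - k) := by
  rw [beadSet, sum_image (hq.injOn_bead n), ← sum_add_distrib]
  refine sum_congr rfl fun k hk => ?_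
  rw [mem_Icc] at hk
  omega

def beadsAbove (N : ℕ) (p : ℕ → ℕ) (t : ℤ) : ℕ :=
  ((beadSet N p).filter (fun x : ℕ => t ≤ (x : ℤ))).card

lemma beadsAbove_le (N : ℕ) {p : ℕ → ℕ} (hp : IsPartitionFrom1 p) (t : ℤ) :
    beadsAbove N p t ≤ N :=
  (card_filter_le _ _).trans (card_beadSet hp).le

lemma le_card_filter_iff_of_antitoneOn {N r : ℕ} {f : ℕ → ℕ} (hf : AntitoneOn f (Set.Icc 1 N))
    (t : ℤ) (hr : 1 ≤ r) (hrN : r ≤ N) :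
    r ≤ ((Icc 1 N).filter (fun k => t ≤ (f k : ℤ))).card ↔ t ≤ f r := by
  constructor
  · intro hcard
    by_contra! hfr
    have hsub : (Icc 1 N).filter (fun k => t ≤ (f k : ℤ)) ⊆ Icc 1 (r - 1) := by
      intro k hk
      simp only [mem_filter, mem_Icc] at hk ⊢
      by_contra! hkr
      have := hf ⟨hr, hrN⟩ ⟨hk.1.1, hk.1.2⟩ (by omega : r ≤ k)
      omega
    have := card_le_card hsub
    rw [Nat.card_Icc] at this
    omega
  · intro hfr
    have hsub : Icc 1 r ⊆ (Icc 1 N).filter (fun k => t ≤ (f k : ℤ)) := by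
      intro k hk
      simp only [mem_filter, mem_Icc] at hk ⊢
      have := hf ⟨hk.1, hk.2.trans hrN⟩ ⟨hr, hrN⟩ hk.2
      exact ⟨⟨hk.1, hk.2.trans hrN⟩, by omega⟩
    simpa using card_le_card hsub

/-- The beads decrease strictly with the row index, so the `r`-th largest bead is `p r + N - r`. -/
lemma le_beadsAbove_iff {N : ℕ} {p : ℕ → ℕ} (hp : IsPartitionFrom1 p) {r : ℕ} (hr : 1 ≤ r)
    (hrN : r ≤ N) (t : ℤ) : r ≤ beadsAbove N p t ↔ t ≤ ((p r + N - r : ℕ) : ℤ) := by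
  rw [beadsAbove, beadSet, filter_image,
    card_image_of_injOn ((hp.injOn_bead N).mono (coe_subset.mpr (filter_subset _ _))),
    le_card_filter_iff_of_antitoneOn (hp.strictAntiOn_bead N).antitoneOn t hr hrN]

lemma le_iff_le_beadsAbove {N : ℕ} {p : ℕ → ℕ} (hp : IsPartitionFrom1 p) (hv : VanishBeyond N p)
    {r s : ℕ} (hr : 1 ≤ r) (hs : 1 ≤ s) :
    s ≤ p r ↔ r ≤ beadsAbove N p ((N : ℤ) - r + s) := by
  rcases le_or_gt r N with hrN | hrN
  · rw [le_beadsAbove_iff hp hr hrN]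
    omega
  · have := beadsAbove_le N hp ((N : ℤ) - r + s)
    have := hv r hrN
    omega

lemma le_beadsAbove_of_add_le {N : ℕ} {p : ℕ → ℕ} (hp : IsPartitionFrom1 p) {k : ℕ} {t : ℤ}
    (hkN : k ≤ N) (htk : t + k ≤ N) : k ≤ beadsAbove N p t := by
  rcases Nat.eq_zero_or_pos k with rfl | hk
  · exact Nat.zero_le _
  · rw [le_beadsAbove_iff hp hk hkN]
    omega

lemma sub_le_beadsAbove {n : ℕ} {q : ℕ → ℕ} (hq : IsPartitionFrom1 q) (m : ℕ) :
    n - m ≤ beadsAbove n q m := by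
  rcases le_total m n with h | h
  · exact le_beadsAbove_of_add_le hq (Nat.sub_le n m) (by omega)
  · simp [Nat.sub_eq_zero_of_le h]

lemma beadsAbove_zero (n m : ℕ) : beadsAbove n (fun _ => 0) m = n - m := by
  simp only [beadsAbove, beadSet_zero, Nat.cast_le, range_eq_Ico, Ico_filter_le, Nat.card_Ico]
  omega

lemma mem_YD_iff {N : ℕ} {p : ℕ → ℕ} (hp : IsPartitionFrom1 p) (hv : VanishBeyond N p)
    (u : ℤ × ℤ) :
    u ∈ YD p ↔ 1 ≤ u.1 ∧ 1 ≤ u.2 ∧ u.1 ≤ beadsAbove N p (N - u.1 + u.2) := by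
  obtain ⟨x, y⟩ := u
  constructor
  · rintro ⟨r, s, hr, hs, hsp, ⟨⟩⟩
    exact ⟨Nat.one_le_cast.mpr hr, Nat.one_le_cast.mpr hs,
      Nat.cast_le.mpr ((le_iff_le_beadsAbove hp hv hr hs).mp hsp)⟩
  · rintro ⟨h1, h2, h3⟩
    lift x to ℕ using (by omega)
    lift y to ℕ using (by omega)
    exact ⟨x, y, by omega, by omega,
      (le_iff_le_beadsAbove hp hv (by omega) (by omega)).mpr (Nat.cast_le.mp h3), rfl⟩

lemma YD_eq_union_of_beadsAbove {N : ℕ} {p p' : ℕ → ℕ} (hp : IsPartitionFrom1 p)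
    (hv : VanishBeyond N p) (hp' : IsPartitionFrom1 p') (hv' : VanishBeyond N p')
    (hle : ∀ t, beadsAbove N p t ≤ beadsAbove N p' t) {H : Set (ℤ × ℤ)}
    (hH : ∀ u, u ∈ H ↔ (beadsAbove N p (N - u.1 + u.2) : ℤ) < u.1 ∧
      u.1 ≤ beadsAbove N p' (N - u.1 + u.2)) :
    YD p' = YD p ∪ H := by
  ext ⟨x, y⟩
  rw [Set.mem_union, mem_YD_iff hp' hv', mem_YD_iff hp hv, hH]
  dsimp only
  have hle' := hle (N - x + y)
  have hN := beadsAbove_le N hp' (N - x + y)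
  constructor
  · rintro ⟨hx, hy, hxp'⟩
    omega
  · rintro (⟨hx, hy, hxp⟩ | ⟨hpx, hxp'⟩)
    · omega
    · refine ⟨by omega, ?_, hxp'⟩
      by_contra! hy
      have := le_beadsAbove_of_add_le (N := N) hp (k := x.toNat) (t := N - x + y)
        (by omega) (by omega)
      omega

/-- The least level `q` with `t ≤ e * q + l`, i.e. the number of positions `< t` on runner `l`. -/
def runnerThreshold (e : ℕ) (t : ℤ) (l : ℕ) : ℕ := ((t + e - 1 - l) / e).toNat

section Runners

variable {e : ℕ}

lemma le_mul_add_iff_runnerThreshold_le (he : 0 < e) (t : ℤ) (l q : ℕ) :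
    t ≤ e * q + l ↔ runnerThreshold e t l ≤ q := by
  have he' : (0 : ℤ) < e := by exact_mod_cast he
  rw [runnerThreshold, Int.toNat_le, ← Int.lt_add_one_iff (a := _ / _),
    Int.ediv_lt_iff_lt_mul he']
  constructor <;> intro h <;> linarith

lemma runnerThreshold_anti (he : 0 < e) (t : ℤ) {l l' : ℕ} (h : l ≤ l') :
    runnerThreshold e t l' ≤ runnerThreshold e t l := by
  rw [← le_mul_add_iff_runnerThreshold_le he]
  have := (le_mul_add_iff_runnerThreshold_le he t l _).mpr le_rfl
  have : (l : ℤ) ≤ l' := by exact_mod_cast h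
  linarith

lemma runnerThreshold_eq_iff (he : 0 < e) (t : ℤ) (l : ℕ) {T : ℕ} (hT : 1 ≤ T) :
    runnerThreshold e t l = T ↔ e * T + l - e < t ∧ t ≤ e * T + l := by
  have hle := le_mul_add_iff_runnerThreshold_le he t l T
  have hle' := le_mul_add_iff_runnerThreshold_le he t l (T - 1)
  have hge : T ≤ runnerThreshold e t l ↔ ¬ runnerThreshold e t l ≤ T - 1 := by omega
  push_cast [hT] at hle'
  rw [le_antisymm_iff, hge, ← hle, ← hle', not_le]
  constructor <;> rintro ⟨h1, h2⟩ <;> constructor <;> linarith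

lemma mul_add_injective (he : 0 < e) (l : ℕ) : Function.Injective (e * · + l) :=
  (add_left_injective l).comp (mul_right_injective₀ he.ne')

lemma filter_range_mod_eq (he : 0 < e) (t : ℤ) {l : ℕ} (hl : l < e) :
    (range t.toNat).filter (· % e = l) = (range (runnerThreshold e t l)).image (e * · + l) := by
  ext x
  simp only [mem_filter, mem_range, mem_image]
  constructor
  · rintro ⟨hxt, rfl⟩
    refine ⟨x / e, ?_, Nat.div_add_mod x e⟩
    rw [← not_le, ← le_mul_add_iff_runnerThreshold_le he]
    have := Nat.div_add_mod x e
    omega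
  · rintro ⟨q, hq, rfl⟩
    rw [← not_le, ← le_mul_add_iff_runnerThreshold_le he] at hq
    refine ⟨by omega, ?_⟩
    rw [Nat.mul_add_mod, Nat.mod_eq_of_lt hl]

lemma sum_runnerThreshold (he : 0 < e) {t : ℤ} (ht : 0 ≤ t) :
    ∑ l ∈ range e, (runnerThreshold e t l : ℤ) = t := by
  have hcard := card_eq_sum_card_fiberwise (f := (· % e)) (s := range t.toNat) (t := range e)
    fun x _ => mem_range.mpr (Nat.mod_lt x he)
  rw [card_range] at hcard
  calc ∑ l ∈ range e, (runnerThreshold e t l : ℤ) = ((t.toNat : ℕ) : ℤ) := by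
        rw [hcard, Nat.cast_sum]
        refine sum_congr rfl fun l hl => ?_
        rw [filter_range_mod_eq he t (mem_range.mp hl),
          card_image_of_injective _ (mul_add_injective he l), card_range]
    _ = t := Int.toNat_of_nonneg ht

lemma filter_mod_eq_image_div (S : Finset ℕ) (l : ℕ) :
    S.filter (· % e = l) = ((S.filter (· % e = l)).image (· / e)).image (e * · + l) := by
  rw [image_image]
  ext x
  simp only [mem_image, mem_filter, Function.comp]
  constructor
  · intro hx
    exact ⟨x, hx, by rw [← hx.2, Nat.div_add_mod]⟩
  · rintro ⟨y, ⟨hy, rfl⟩, rfl⟩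
    rw [Nat.div_add_mod]
    exact ⟨hy, rfl⟩

variable {N : ℕ} {p b : ℕ → ℕ} {q : ℕ → ℕ → ℕ}

lemma beadsAbove_eq_sum_runners (he : 0 < e)
    (hrun : ∀ l < e, (beadSet N p).filter (· % e = l) = (beadSet (b l) (q l)).image (e * · + l))
    (t : ℤ) :
    beadsAbove N p t = ∑ l ∈ range e, beadsAbove (b l) (q l) (runnerThreshold e t l) := by
  rw [beadsAbove, card_eq_sum_card_fiberwise (f := (· % e)) (t := range e)
    fun x _ => mem_range.mpr (Nat.mod_lt x he)]
  refine sum_congr rfl fun l hl => ?_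
  rw [filter_comm, hrun l (mem_range.mp hl), filter_image,
    card_image_of_injective _ (mul_add_injective he l),
    beadsAbove]
  congr 1
  refine filter_congr fun y _ => ?_
  rw [Nat.cast_le, ← le_mul_add_iff_runnerThreshold_le he]
  push_cast
  rfl

lemma sum_div_eq_sum_runners (he : 0 < e) (hq : ∀ l < e, IsPartitionFrom1 (q l))
    (hrun : ∀ l < e, (beadSet N p).filter (· % e = l) = (beadSet (b l) (q l)).image (e * · + l)) :
    ∑ x ∈ beadSet N p, x / e =
      ∑ l ∈ range e, ∑ k ∈ Icc 1 (b l), q l k + ∑ l ∈ range e, ∑ k ∈ Icc 1 (b l), (b l - k) := by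
  rw [← sum_fiberwise_of_maps_to (g := (· % e)) (t := range e)
    fun x _ => mem_range.mpr (Nat.mod_lt x he), ← sum_add_distrib]
  refine sum_congr rfl fun l hl => ?_
  rw [hrun l (mem_range.mp hl), sum_image fun x _ y _ h => mul_add_injective he l h,
    ← sum_beadSet (hq l (mem_range.mp hl))]
  refine sum_congr rfl fun y _ => ?_
  rw [Nat.mul_add_div he, Nat.div_eq_of_lt (mem_range.mp hl), add_zero]

lemma sum_runner_card (he : 0 < e) (hp : IsPartitionFrom1 p) (hq : ∀ l < e, IsPartitionFrom1 (q l))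
    (hrun : ∀ l < e, (beadSet N p).filter (· % e = l) = (beadSet (b l) (q l)).image (e * · + l)) :
    ∑ l ∈ range e, b l = N := by
  rw [← card_beadSet (N := N) hp, card_eq_sum_card_fiberwise (f := (· % e)) (t := range e)
    fun x _ => mem_range.mpr (Nat.mod_lt x he)]
  refine sum_congr rfl fun l hl => ?_
  rw [hrun l (mem_range.mp hl),
    card_image_of_injective _ (mul_add_injective he l),
    card_beadSet (hq l (mem_range.mp hl))]

end Runners

/-- The row in which `H(r, s, i)` meets the diagonal `t` (`mem_hookSet_iff`). -/
def hookRow (e : ℕ) (b : ℕ → ℕ) (t : ℤ) (i r : ℕ) : ℤ :=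
  r + ∑ l ∈ Ico (i + 1) e, ((b l : ℤ) - runnerThreshold e t l)

section Hooks

variable {e : ℕ} {b : ℕ → ℕ}

lemma ycoord_sub_xcoord {N : ℕ} (hN : ∑ l ∈ range e, b l = N) {i : ℕ} (hi : i < e) (r s : ℕ) :
    ycoord e b r s i - xcoord e b r s i = e * ((b i : ℤ) - r + s) - N := by
  have hsplit : ∑ l ∈ range (i + 1), (b l : ℤ) + ∑ l ∈ Ico (i + 1) e, (b l : ℤ) = N := by
    rw [sum_range_add_sum_Ico _ hi, ← hN, Nat.cast_sum]
  rw [sum_range_succ] at hsplit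
  simp only [ycoord, xcoord]
  linear_combination -hsplit

lemma runnerThreshold_eq_of_le {t : ℤ} {i l T : ℕ} (hT : 1 ≤ T) (hM : runnerThreshold e t i = T)
    (ht : e * T ≤ t) (hil : i ≤ l) (hl : l < e) : runnerThreshold e t l = T := by
  rw [runnerThreshold_eq_iff (by omega) _ _ hT] at hM ⊢
  omega

lemma runnerThreshold_eq_of_lt {t : ℤ} {i l T : ℕ} (hi : i < e) (hT : 1 ≤ T)
    (hM : runnerThreshold e t i = T) (ht : t < e * T) (hli : l ≤ i) :
    runnerThreshold e t l = T := by
  rw [runnerThreshold_eq_iff (by omega) _ _ hT] at hM ⊢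
  omega

/-- If `e T ≤ t`, every runner `l > i` has level `T` at `t`; otherwise every runner `l ≤ i` has,
and all levels add up to `t` (`sum_runnerThreshold`). -/
lemma sum_Ico_runnerThreshold {t : ℤ} {i T : ℕ} (hi : i < e) (hT : 1 ≤ T)
    (hM : runnerThreshold e t i = T) :
    ∑ l ∈ Ico (i + 1) e, (runnerThreshold e t l : ℤ) = (e - i - 1) * T - max 0 (e * T - t) := by
  rcases le_or_gt ((e : ℤ) * T) t with ht | ht
  · rw [sum_congr rfl fun l hl => congrArg Nat.cast (runnerThreshold_eq_of_le hT hM ht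
      (by linarith [(mem_Ico.mp hl).1]) (mem_Ico.mp hl).2), sum_const, Nat.card_Ico,
      nsmul_eq_mul, max_eq_left (by linarith), Nat.cast_sub (by omega : i + 1 ≤ e)]
    push_cast
    ring
  · have htot := sum_runnerThreshold (e := e) (by omega) (t := t) (by
      have := (runnerThreshold_eq_iff (by omega) t i hT).mp hM
      have : (e : ℤ) ≤ e * T := le_mul_of_one_le_right (by positivity) (by exact_mod_cast hT)
      omega)
    rw [← sum_range_add_sum_Ico _ hi, sum_congr rfl fun l hl => congrArg Nat.cast
      (runnerThreshold_eq_of_lt hi hT hM ht (Nat.lt_succ_iff.mp (mem_range.mp hl))),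
      sum_const, card_range, nsmul_eq_mul] at htot
    rw [max_eq_right (by linarith)]
    push_cast at htot
    linarith

lemma mem_hookSet_iff {N : ℕ} (hN : ∑ l ∈ range e, b l = N) {r s i : ℕ} (hi : i < e)
    (hrb : r ≤ b i) (hs : 1 ≤ s) (u : ℤ × ℤ) :
    u ∈ hookSet e b r s i ↔ runnerThreshold e (N - u.1 + u.2) i = b i + s - r ∧
      u.1 = hookRow e b (N - u.1 + u.2) i r := by
  obtain ⟨x, y⟩ := u
  obtain ⟨T, hT⟩ : ∃ T, b i + s - r = T := ⟨_, rfl⟩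
  have hTz : (b i : ℤ) - r + s = T := by omega
  have hyx := ycoord_sub_xcoord hN hi r s
  have hrow : runnerThreshold e (N - x + y) i = T → hookRow e b (N - x + y) i r =
      xcoord e b r s i + max 0 (e * T - (N - x + y)) := fun hM => by
    simp only [hookRow, xcoord, sum_sub_distrib, sum_Ico_runnerThreshold hi (by omega) hM, hTz]
    ring
  rw [runnerThreshold_eq_iff (by omega) _ _ (by omega)] at hrow
  rw [hT, runnerThreshold_eq_iff (by omega) _ _ (by omega)]
  rw [hTz] at hyx
  simp only [hookSet, Set.mem_ofPred_eq]
  omega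

end Hooks

lemma add_le_sum_add_one {n : ℕ} {q : ℕ → ℕ} (hq : IsPartitionFrom1 q) (hv : VanishBeyond n q)
    {r s : ℕ} (hr : 1 ≤ r) (hs : 1 ≤ s) (hsr : s ≤ q r) : r + s ≤ ∑ k ∈ Icc 1 n, q k + 1 := by
  have hrn := hv.le_of_pos (hs.trans hsr)
  have hrs : r * s ≤ ∑ k ∈ Icc 1 n, q k :=
    calc r * s = ∑ _k ∈ Icc 1 r, s := by simp
      _ ≤ ∑ k ∈ Icc 1 r, q k := sum_le_sum fun k hk =>
          hsr.trans (hq.le_of_le (mem_Icc.mp hk).1 (mem_Icc.mp hk).2)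
      _ ≤ ∑ k ∈ Icc 1 n, q k := sum_le_sum_of_subset (Icc_subset_Icc_right hrn)
  nlinarith

/-- `Q` is an `e`-quotient of total size `d` on an abacus with `b i` beads on runner `i`,
which satisfies the `d`-Rouquier condition. -/
structure IsRouquierQuotient (e : ℕ) (b : ℕ → ℕ) (d : ℕ) (Q : ℕ → ℕ → ℕ) : Prop where
  gap : ∀ i, i + 1 < e → b i + d ≤ b (i + 1) + 1
  isPartition : ∀ i < e, IsPartitionFrom1 (Q i)
  vanishBeyond : ∀ i < e, VanishBeyond (b i) (Q i)
  sum_size : ∑ i ∈ range e, ∑ k ∈ Icc 1 (b i), Q i k = d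

/-- `(r, s)` is a node of `Y(Q i)` lying on the diagonal `runnerThreshold e t i` of the abacus of
`Q i`; equivalently (`mem_hookSet_iff`), the hook `H(r, s, i)` meets the diagonal `t`. -/
def HookCrosses (e : ℕ) (b : ℕ → ℕ) (Q : ℕ → ℕ → ℕ) (t : ℤ) (r s i : ℕ) : Prop :=
  i < e ∧ 1 ≤ r ∧ 1 ≤ s ∧ s ≤ Q i r ∧ b i + s = runnerThreshold e t i + r

namespace IsRouquierQuotient

variable {e d N : ℕ} {b : ℕ → ℕ} {Q : ℕ → ℕ → ℕ}

lemma size_add_size_le (hR : IsRouquierQuotient e b d Q) {i j : ℕ} (hi : i < e) (hj : j < e)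
    (hij : i ≠ j) : ∑ k ∈ Icc 1 (b i), Q i k + ∑ k ∈ Icc 1 (b j), Q j k ≤ d := by
  calc ∑ k ∈ Icc 1 (b i), Q i k + ∑ k ∈ Icc 1 (b j), Q j k
      = ∑ l ∈ {i, j}, ∑ k ∈ Icc 1 (b l), Q l k :=
        (sum_pair (f := fun l => ∑ k ∈ Icc 1 (b l), Q l k) hij).symm
    _ ≤ ∑ l ∈ range e, ∑ k ∈ Icc 1 (b l), Q l k :=
      sum_le_sum_of_subset (by simp [insert_subset_iff, hi, hj])
    _ = d := hR.sum_size

lemma add_le_size (hR : IsRouquierQuotient e b d Q) {t : ℤ} {r s i : ℕ}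
    (h : HookCrosses e b Q t r s i) : r + s ≤ d + 1 ∧ r + s ≤ ∑ k ∈ Icc 1 (b i), Q i k + 1 := by
  obtain ⟨hi, hr, hs, hsQ, -⟩ := h
  have hsize := add_le_sum_add_one (hR.isPartition i hi) (hR.vanishBeyond i hi) hr hs hsQ
  have : ∑ k ∈ Icc 1 (b i), Q i k ≤ d :=
    hR.sum_size ▸ single_le_sum (f := fun l => ∑ k ∈ Icc 1 (b l), Q l k)
      (fun _ _ => Nat.zero_le _) (mem_range.mpr hi)
  omega

lemma gap_of_lt (hR : IsRouquierQuotient e b d Q) (hd : 1 ≤ d) {i j : ℕ} (hij : i < j)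
    (hj : j < e) : b i + d ≤ b j + 1 := by
  induction j with
  | zero => omega
  | succ j ih =>
    have := hR.gap j hj
    rcases Nat.lt_succ_iff_lt_or_eq.mp hij with hij | rfl
    · have := ih hij (by omega)
      omega
    · exact this

/-- `runnerThreshold` does not increase from runner `i` to `i'`, so
`b i' - b i ≤ (s - r) + (r' - s') ≤ d - 2` by the sizes of the two quotient partitions,
against the Rouquier gap `b i' - b i ≥ d - 1`. -/
lemma not_hookCrosses_of_lt (hR : IsRouquierQuotient e b d Q) {t : ℤ} {r s i r' s' i' : ℕ}
    (h : HookCrosses e b Q t r s i) (hii' : i < i') : ¬ HookCrosses e b Q t r' s' i' := by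
  intro h'
  have hsz := hR.add_le_size h
  have hsz' := hR.add_le_size h'
  obtain ⟨hi, hr, hs, -, hT⟩ := h
  obtain ⟨hi', hr', hs', -, hT'⟩ := h'
  have hsum := hR.size_add_size_le hi hi' hii'.ne
  have hgap := hR.gap_of_lt (by omega) hii' hi'
  have hM := runnerThreshold_anti (e := e) (by omega) t hii'.le
  omega

lemma eq_of_hookCrosses (hR : IsRouquierQuotient e b d Q) {t : ℤ} {r s i r' s' i' : ℕ}
    (h : HookCrosses e b Q t r s i) (h' : HookCrosses e b Q t r' s' i') : i = i' := by
  rcases lt_trichotomy i i' with hlt | heq | hgt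
  · exact absurd h' (hR.not_hookCrosses_of_lt h hlt)
  · exact heq
  · exact absurd h (hR.not_hookCrosses_of_lt h' hgt)

lemma le_runnerThreshold_of_lt (hR : IsRouquierQuotient e b d Q) {t : ℤ} {r s i l : ℕ}
    (h : HookCrosses e b Q t r s i) (hli : l < i) : b l ≤ runnerThreshold e t l := by
  have hsz := hR.add_le_size h
  obtain ⟨hi, hr, hs, -, hT⟩ := h
  have hgap := hR.gap_of_lt (by omega) hli hi
  have hM := runnerThreshold_anti (e := e) (by omega) t hli.le
  omega

lemma runnerThreshold_le_of_lt (hR : IsRouquierQuotient e b d Q) {t : ℤ} {r s i l : ℕ}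
    (h : HookCrosses e b Q t r s i) (hil : i < l) (hl : l < e) : runnerThreshold e t l ≤ b l := by
  have hsz := hR.add_le_size h
  obtain ⟨hi, hr, hs, -, hT⟩ := h
  have hgap := hR.gap_of_lt (by omega) hil hl
  have hM := runnerThreshold_anti (e := e) (by omega) t hil.le
  omega

lemma hookCrosses_iff (hR : IsRouquierQuotient e b d Q) {t : ℤ} {r s i : ℕ} (hi : i < e) :
    HookCrosses e b Q t r s i ↔ b i - runnerThreshold e t i < r ∧
      r ≤ beadsAbove (b i) (Q i) (runnerThreshold e t i) ∧
      b i + s = runnerThreshold e t i + r := by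
  have hdiag := fun hr hs =>
    le_iff_le_beadsAbove (hR.isPartition i hi) (hR.vanishBeyond i hi) (r := r) (s := s) hr hs
  constructor
  · rintro ⟨-, hr, hs, hsQ, hT⟩
    refine ⟨by omega, ?_, hT⟩
    convert (hdiag hr hs).mp hsQ using 2
    omega
  · rintro ⟨hlt, hle, hT⟩
    refine ⟨hi, by omega, by omega, (hdiag (by omega) (by omega)).mpr ?_, hT⟩
    convert hle using 2
    omega

lemma beadsAbove_eq_of_hookCrosses (hR : IsRouquierQuotient e b d Q) {t : ℤ} {r s i l : ℕ}
    (h : HookCrosses e b Q t r s i) (hl : l < e) (hli : l ≠ i) :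
    beadsAbove (b l) (Q l) (runnerThreshold e t l) = b l - runnerThreshold e t l := by
  set M := runnerThreshold e t l
  set c := beadsAbove (b l) (Q l) M
  refine le_antisymm (not_lt.mp fun hlt => hli ?_)
    (sub_le_beadsAbove (hR.isPartition l hl) M)
  exact hR.eq_of_hookCrosses ((hR.hookCrosses_iff (s := M + c - b l) hl).mpr
    ⟨hlt, le_rfl, by omega⟩) h

lemma sum_beadsAbove_add (hR : IsRouquierQuotient e b d Q) {t : ℤ} {r s i : ℕ}
    (h : HookCrosses e b Q t r s i) :
    ∑ l ∈ range e, beadsAbove (b l) (Q l) (runnerThreshold e t l) + (b i - runnerThreshold e t i) =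
      ∑ l ∈ range e, (b l - runnerThreshold e t l) +
        beadsAbove (b i) (Q i) (runnerThreshold e t i) := by
  have hi := mem_range.mpr h.1
  have hrest : ∀ l ∈ (range e).erase i,
      beadsAbove (b l) (Q l) (runnerThreshold e t l) = b l - runnerThreshold e t l :=
    fun l hl => hR.beadsAbove_eq_of_hookCrosses h (mem_range.mp (mem_of_mem_erase hl))
      (ne_of_mem_erase hl)
  rw [← add_sum_erase _ _ hi, ← add_sum_erase _ (fun l => b l - runnerThreshold e t l) hi,
    sum_congr rfl hrest]
  ring

lemma sum_sub_add_eq_hookRow (hR : IsRouquierQuotient e b d Q) {t : ℤ} {r s i : ℕ}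
    (h : HookCrosses e b Q t r s i) (r' : ℕ) :
    ((∑ l ∈ range e, (b l - runnerThreshold e t l) : ℕ) : ℤ) + r' =
      (b i - runnerThreshold e t i : ℕ) + hookRow e b t i r' := by
  have hlow : ∀ l ∈ range i, ((b l - runnerThreshold e t l : ℕ) : ℤ) = 0 := fun l hl => by
    have := hR.le_runnerThreshold_of_lt h (mem_range.mp hl)
    omega
  have hhigh : ∀ l ∈ Ico (i + 1) e,
      ((b l - runnerThreshold e t l : ℕ) : ℤ) = b l - runnerThreshold e t l := fun l hl => by
    have := hR.runnerThreshold_le_of_lt h (mem_Ico.mp hl).1 (mem_Ico.mp hl).2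
    omega
  rw [Nat.cast_sum, ← sum_range_add_sum_Ico _ h.1, sum_range_succ, sum_congr rfl hlow,
    sum_congr rfl hhigh, sum_const_zero, hookRow]
  ring

/-- The two sums count the rows of `Y(ρ)` and `Y(μ)` on the diagonal `t`
(`beadsAbove_eq_of_core`, `InBlock.beadsAbove_eq`); the extra rows of `Y(μ)` are those in which
the crossing hooks meet it. -/
lemma exists_hookCrosses_iff (hR : IsRouquierQuotient e b d Q) (t ω : ℤ) :
    ((∑ l ∈ range e, (b l - runnerThreshold e t l) : ℕ) : ℤ) < ω ∧
      ω ≤ ((∑ l ∈ range e, beadsAbove (b l) (Q l) (runnerThreshold e t l) : ℕ) : ℤ) ↔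
    ∃ r s i, HookCrosses e b Q t r s i ∧ ω = hookRow e b t i r := by
  constructor
  · rintro ⟨hlo, hhi⟩
    -- A runner `i` with an extra bead above `t` carries a crossing hook, so every other runner
    -- contributes equally to both sums and the extra rows are all accounted for by runner `i`.
    obtain ⟨i, hi, hlt⟩ := exists_lt_of_sum_lt (show
      ∑ l ∈ range e, (b l - runnerThreshold e t l) <
        ∑ l ∈ range e, beadsAbove (b l) (Q l) (runnerThreshold e t l) by omega)
    have hi := mem_range.mp hi
    have h₀ := (hR.hookCrosses_iff (s := runnerThreshold e t i +
      beadsAbove (b i) (Q i) (runnerThreshold e t i) - b i) hi).mpr ⟨hlt, le_rfl, by omega⟩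
    have hsum := hR.sum_beadsAbove_add h₀
    have hrow := hR.sum_sub_add_eq_hookRow h₀ 0
    have hrow' : ∀ r', hookRow e b t i r' = r' + hookRow e b t i 0 := fun r' => by
      simp [hookRow]
    refine ⟨(ω - hookRow e b t i 0).toNat, runnerThreshold e t i + (ω - hookRow e b t i 0).toNat
      - b i, i, (hR.hookCrosses_iff hi).mpr ⟨?_, ?_, ?_⟩, ?_⟩ <;>
    · have := hrow' (ω - hookRow e b t i 0).toNat
      omega
  · rintro ⟨r, s, i, h, rfl⟩
    have hsum := hR.sum_beadsAbove_add h
    have hrow := hR.sum_sub_add_eq_hookRow h r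
    have := (hR.hookCrosses_iff h.1).mp h
    omega

lemma eq_of_hookRow_eq (hR : IsRouquierQuotient e b d Q) {t : ℤ} {r s i r' s' i' : ℕ}
    (h : HookCrosses e b Q t r s i) (h' : HookCrosses e b Q t r' s' i')
    (hrow : hookRow e b t i r = hookRow e b t i' r') : r = r' ∧ s = s' ∧ i = i' := by
  obtain rfl := hR.eq_of_hookCrosses h h'
  have hr : r = r' := by simpa [hookRow] using hrow
  subst hr
  exact ⟨rfl, by have := h.2.2.2.2; have := h'.2.2.2.2; omega, rfl⟩

lemma hookCrosses_and_iff_mem_hookSet (hR : IsRouquierQuotient e b d Q)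
    (hN : ∑ l ∈ range e, b l = N) {r s i : ℕ} (u : ℤ × ℤ) :
    HookCrosses e b Q (N - u.1 + u.2) r s i ∧ u.1 = hookRow e b (N - u.1 + u.2) i r ↔
      (i < e ∧ 1 ≤ r ∧ 1 ≤ s ∧ s ≤ Q i r) ∧ u ∈ hookSet e b r s i := by
  constructor
  · rintro ⟨⟨hi, hr, hs, hsQ, hT⟩, hrow⟩
    have hrb := (hR.vanishBeyond i hi).le_of_pos (hs.trans hsQ)
    exact ⟨⟨hi, hr, hs, hsQ⟩, (mem_hookSet_iff hN hi hrb hs u).mpr ⟨by omega, hrow⟩⟩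
  · rintro ⟨⟨hi, hr, hs, hsQ⟩, hu⟩
    have hrb := (hR.vanishBeyond i hi).le_of_pos (hs.trans hsQ)
    obtain ⟨hM, hrow⟩ := (mem_hookSet_iff hN hi hrb hs u).mp hu
    exact ⟨⟨hi, hr, hs, hsQ, by omega⟩, hrow⟩

lemma exists_mem_hookSet_iff (hR : IsRouquierQuotient e b d Q) (hN : ∑ l ∈ range e, b l = N)
    (u : ℤ × ℤ) :
    (∃ r s i, (i < e ∧ 1 ≤ r ∧ 1 ≤ s ∧ s ≤ Q i r) ∧ u ∈ hookSet e b r s i) ↔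
      ((∑ l ∈ range e, (b l - runnerThreshold e (N - u.1 + u.2) l) : ℕ) : ℤ) < u.1 ∧
      u.1 ≤ ((∑ l ∈ range e,
        beadsAbove (b l) (Q l) (runnerThreshold e (N - u.1 + u.2) l) : ℕ) : ℤ) := by
  rw [hR.exists_hookCrosses_iff]
  exact exists_congr fun r => exists_congr fun s => exists_congr fun i =>
    (hR.hookCrosses_and_iff_mem_hookSet hN u).symm

lemma eq_of_mem_hookSet (hR : IsRouquierQuotient e b d Q) (hN : ∑ l ∈ range e, b l = N)
    {r s i r' s' i' : ℕ} (hc : i < e ∧ 1 ≤ r ∧ 1 ≤ s ∧ s ≤ Q i r)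
    (hc' : i' < e ∧ 1 ≤ r' ∧ 1 ≤ s' ∧ s' ≤ Q i' r') {u : ℤ × ℤ} (hu : u ∈ hookSet e b r s i)
    (hu' : u ∈ hookSet e b r' s' i') : r = r' ∧ s = s' ∧ i = i' := by
  obtain ⟨h, hrow⟩ := (hR.hookCrosses_and_iff_mem_hookSet hN u).mpr ⟨hc, hu⟩
  obtain ⟨h', hrow'⟩ := (hR.hookCrosses_and_iff_mem_hookSet hN u).mpr ⟨hc', hu'⟩
  exact hR.eq_of_hookRow_eq h h' (hrow.symm.trans hrow')

end IsRouquierQuotient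

section Block

variable {e N d : ℕ} {rho mu : ℕ → ℕ} {Q : ℕ → ℕ → ℕ}

lemma filter_pushedBeads (p : ℕ → ℕ) {l : ℕ} (hl : l < e) :
    (pushedBeads e N p).filter (· % e = l) = (range (runnerCount e N p l)).image (e * · + l) := by
  ext x
  simp only [pushedBeads, mem_filter, mem_biUnion, mem_range, mem_image]
  constructor
  · rintro ⟨⟨j, hj, q, hq, rfl⟩, hmod⟩
    rw [Nat.mul_add_mod, Nat.mod_eq_of_lt hj] at hmod
    subst hmod
    exact ⟨q, hq, rfl⟩
  · rintro ⟨q, hq, rfl⟩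
    exact ⟨⟨l, hl, q, hq, rfl⟩, by rw [Nat.mul_add_mod, Nat.mod_eq_of_lt hl]⟩

lemma filter_beadSet_of_core (hcore : pushedBeads e N rho = beadSet N rho) {l : ℕ} (hl : l < e) :
    (beadSet N rho).filter (· % e = l) =
      (beadSet (runnerCount e N rho l) (fun _ => 0)).image (e * · + l) := by
  rw [← hcore, filter_pushedBeads rho hl, beadSet_zero]

lemma sum_runnerCount_of_core (he : 0 < e) (hrho : IsPartitionFrom1 rho)
    (hcore : pushedBeads e N rho = beadSet N rho) : ∑ l ∈ range e, runnerCount e N rho l = N :=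
  sum_runner_card he hrho (fun _ _ => isPartitionFrom1_zero) fun _ => filter_beadSet_of_core hcore

lemma beadsAbove_eq_of_core (he : 0 < e) (hcore : pushedBeads e N rho = beadSet N rho) (t : ℤ) :
    beadsAbove N rho t = ∑ l ∈ range e, (runnerCount e N rho l - runnerThreshold e t l) := by
  simp only [beadsAbove_eq_sum_runners he (fun _ => filter_beadSet_of_core hcore) t,
    beadsAbove_zero]

lemma InBlock.runnerCount_eq (he : 0 < e) (hcore : pushedBeads e N rho = beadSet N rho)
    (hmu : InBlock e N d rho mu) {l : ℕ} (hl : l < e) :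
    runnerCount e N mu l = runnerCount e N rho l := by
  have := congrArg (fun S => (S.filter (· % e = l)).card) (hmu.2.2.1.trans hcore.symm)
  simpa only [filter_pushedBeads _ hl, card_image_of_injective _ (mul_add_injective he l),
    card_range] using this

lemma InBlock.filter_beadSet (he : 0 < e) (hcore : pushedBeads e N rho = beadSet N rho)
    (hmu : InBlock e N d rho mu) (hQ : IsQuotientOf e N mu Q) {l : ℕ} (hl : l < e) :
    (beadSet N mu).filter (· % e = l) =
      (beadSet (runnerCount e N rho l) (Q l)).image (e * · + l) := by
  rw [← hmu.runnerCount_eq he hcore hl, (hQ l hl).2, runnerPositions, ← filter_mod_eq_image_div]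

lemma InBlock.beadsAbove_eq (he : 0 < e) (hcore : pushedBeads e N rho = beadSet N rho)
    (hmu : InBlock e N d rho mu) (hQ : IsQuotientOf e N mu Q) (t : ℤ) :
    beadsAbove N mu t =
      ∑ l ∈ range e, beadsAbove (runnerCount e N rho l) (Q l) (runnerThreshold e t l) :=
  beadsAbove_eq_sum_runners he (fun _ => hmu.filter_beadSet he hcore hQ) t

lemma InBlock.isRouquierQuotient (he : 0 < e) (hcore : pushedBeads e N rho = beadSet N rho)
    (hrq : ∀ i, i + 1 < e → runnerCount e N rho i + d ≤ runnerCount e N rho (i + 1) + 1)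
    (hmu : InBlock e N d rho mu) (hQp : ∀ i, i < e → IsPartitionFrom1 (Q i))
    (hQ : IsQuotientOf e N mu Q) : IsRouquierQuotient e (runnerCount e N rho) d Q := by
  refine ⟨hrq, hQp, fun i hi => hmu.runnerCount_eq he hcore hi ▸ (hQ i hi).1, ?_⟩
  have hsize := hmu.2.2.2
  rw [sum_div_eq_sum_runners he hQp fun _ => hmu.filter_beadSet he hcore hQ,
    sum_div_eq_sum_runners he (fun _ _ => isPartitionFrom1_zero)
      fun _ => filter_beadSet_of_core hcore] at hsize
  simp only [sum_const_zero, zero_add] at hsize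
  omega

end Block

theorem rock_hook_decomposition_general
    (e N d : ℕ) (he : 2 ≤ e)
    (rho : ℕ → ℕ) (hrhop : IsPartitionFrom1 rho) (hrhov : VanishBeyond N rho)
    (hcore : pushedBeads e N rho = beadSet N rho)
    (hrq : ∀ i, i + 1 < e →
      runnerCount e N rho i + d ≤ runnerCount e N rho (i + 1) + 1)
    (mu : ℕ → ℕ) (hmu : InBlock e N d rho mu)
    (Q : ℕ → ℕ → ℕ) (hQp : ∀ i, i < e → IsPartitionFrom1 (Q i))
    (hQ : IsQuotientOf e N mu Q) :
    (YD mu = YD rho ∪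
      {u : ℤ × ℤ | ∃ r s i : ℕ, (i < e ∧ 1 ≤ r ∧ 1 ≤ s ∧ s ≤ Q i r) ∧
        u ∈ hookSet e (runnerCount e N rho) r s i}) ∧
    (∀ r s i : ℕ, (i < e ∧ 1 ≤ r ∧ 1 ≤ s ∧ s ≤ Q i r) →
      ∀ u ∈ hookSet e (runnerCount e N rho) r s i, u ∉ YD rho) ∧
    (∀ r s i r' s' i' : ℕ,
      (i < e ∧ 1 ≤ r ∧ 1 ≤ s ∧ s ≤ Q i r) →
      (i' < e ∧ 1 ≤ r' ∧ 1 ≤ s' ∧ s' ≤ Q i' r') →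
      ¬(r = r' ∧ s = s' ∧ i = i') →
      ∀ u ∈ hookSet e (runnerCount e N rho) r s i,
        u ∉ hookSet e (runnerCount e N rho) r' s' i') ∧
    (∀ r s i : ℕ, (i < e ∧ 1 ≤ r ∧ 1 ≤ s ∧ s ≤ Q i r) →
      (ycoord e (runnerCount e N rho) r s i -
        xcoord e (runnerCount e N rho) r s i) % (e : ℤ) = (-(N : ℤ)) % (e : ℤ)) := by
  have he0 : 0 < e := by omega
  have hR := hmu.isRouquierQuotient he0 hcore hrq hQp hQ
  have hN := sum_runnerCount_of_core he0 hrhop hcore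
  have hhooks := hR.exists_mem_hookSet_iff hN
  simp only [← beadsAbove_eq_of_core he0 hcore, ← hmu.beadsAbove_eq he0 hcore hQ] at hhooks
  refine ⟨YD_eq_union_of_beadsAbove hrhop hrhov hmu.1 hmu.2.1 (fun t => ?_) hhooks, ?_, ?_, ?_⟩
  · rw [beadsAbove_eq_of_core he0 hcore, hmu.beadsAbove_eq he0 hcore hQ]
    exact sum_le_sum fun l hl => sub_le_beadsAbove (hQp l (mem_range.mp hl)) _
  · intro r s i hc u hu hu'
    have := (hhooks u).mp ⟨r, s, i, hc, hu⟩
    rw [mem_YD_iff hrhop hrhov] at hu'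
    omega
  · intro r s i r' s' i' hc hc' hne u hu hu'
    exact hne (hR.eq_of_mem_hookSet hN hc hc' hu hu')
  · intro r s i hc
    rw [ycoord_sub_xcoord hN hc.1, sub_eq_neg_add, Int.add_mul_emod_self_left]

/-- Let `rho` be a `d`-Rouquier `e`-core of residue
`κ = -N mod e` and `mu ∈ P_{ρ,d}` with `e`-quotient `Q`.  Then `Y(mu)` is the
disjoint union of `Y(rho)` and the hooks `H(u)`, `u ∈ Y(Q)`, and every such
hook has vertex of residue `κ`. -/
theorem rock_hook_decomposition
    (e N d : ℕ) (he : 2 ≤ e) (hd : 1 ≤ d)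
    (rho : ℕ → ℕ) (hrhop : IsPartitionFrom1 rho) (hrhov : VanishBeyond N rho)
    (hcore : pushedBeads e N rho = beadSet N rho)
    (hrq : ∀ i, i + 1 < e →
      runnerCount e N rho i + d ≤ runnerCount e N rho (i + 1) + 1)
    (mu : ℕ → ℕ) (hmu : InBlock e N d rho mu)
    (Q : ℕ → ℕ → ℕ) (hQp : ∀ i, i < e → IsPartitionFrom1 (Q i))
    (hQ : IsQuotientOf e N mu Q) :
    (YD mu = YD rho ∪
      {u : ℤ × ℤ | ∃ r s i : ℕ, (i < e ∧ 1 ≤ r ∧ 1 ≤ s ∧ s ≤ Q i r) ∧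
        u ∈ hookSet e (runnerCount e N rho) r s i}) ∧
    (∀ r s i : ℕ, (i < e ∧ 1 ≤ r ∧ 1 ≤ s ∧ s ≤ Q i r) →
      ∀ u ∈ hookSet e (runnerCount e N rho) r s i, u ∉ YD rho) ∧
    (∀ r s i r' s' i' : ℕ,
      (i < e ∧ 1 ≤ r ∧ 1 ≤ s ∧ s ≤ Q i r) →
      (i' < e ∧ 1 ≤ r' ∧ 1 ≤ s' ∧ s' ≤ Q i' r') →
      ¬(r = r' ∧ s = s' ∧ i = i') →
      ∀ u ∈ hookSet e (runnerCount e N rho) r s i,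
        u ∉ hookSet e (runnerCount e N rho) r' s' i') ∧
    (∀ r s i : ℕ, (i < e ∧ 1 ≤ r ∧ 1 ≤ s ∧ s ≤ Q i r) →
      (ycoord e (runnerCount e N rho) r s i -
        xcoord e (runnerCount e N rho) r s i) % (e : ℤ) = (-(N : ℤ)) % (e : ℤ)) :=
  rock_hook_decomposition_general e N d he rho hrhop hrhov hcore hrq mu hmu Q hQp hQ
end

section
/- Fix e ≥ 2, d ≥ 1, a d-Rouquier e-core ρ, f with 0 ≤ f ≤ d, and partitions μ ∈ P_{ρ,d}, ν ∈ P_{ρ,f} with e-quotients μ⃗, ν⃗. Then Y(ν) ⊆ Y(μ) if and only if Y(ν⃗) ⊆ Y(μ⃗) (componentwise containment of the e-tuples of Young diagrams). -/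
open Finset

/-- The Young diagram of `p` as a subset of `ℕ × ℕ` (1-based nodes). -/
def YDn (p : ℕ → ℕ) : Set (ℕ × ℕ) :=
  {u | 1 ≤ u.1 ∧ 1 ≤ u.2 ∧ u.2 ≤ p u.1}

namespace St10

def kcnt (r : ℕ) (p : ℕ → ℕ) (z : ℕ) : ℕ :=
  ((Finset.Icc 1 r).filter (fun k => z ≤ p k + r - k)).card

def pw (r : ℕ) (p : ℕ → ℕ) : ℕ := ∑ k ∈ Finset.Icc 1 r, p k

def eps (r : ℕ) (p : ℕ → ℕ) (z : ℕ) : ℕ := kcnt r p z - (r - z)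

theorem mono_parts {p : ℕ → ℕ} (hp : IsPartitionFrom1 p) {j k : ℕ}
    (h1 : 1 ≤ j) (hjk : j ≤ k) : p k ≤ p j := by
  induction k, hjk using Nat.le_induction with
  | base => exact le_rfl
  | succ n hn ih => exact le_trans (hp n (le_trans h1 hn)) ih

theorem bead_le {p : ℕ → ℕ} {r : ℕ} (hp : IsPartitionFrom1 p) {j k : ℕ}
    (h1 : 1 ≤ j) (hjk : j ≤ k) (hkr : k ≤ r) :
    p k + r - k ≤ p j + r - j := by
  have := mono_parts hp h1 hjk; omega

theorem bead_lt {p : ℕ → ℕ} {r : ℕ} (hp : IsPartitionFrom1 p) {j k : ℕ}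
    (h1 : 1 ≤ j) (hjk : j < k) (hkr : k ≤ r) :
    p k + r - k < p j + r - j := by
  have := mono_parts hp h1 (le_of_lt hjk); omega

theorem kcnt_le {r : ℕ} {p : ℕ → ℕ} {z : ℕ} : kcnt r p z ≤ r := by
  have h := Finset.card_filter_le (Finset.Icc 1 r) (fun k => z ≤ p k + r - k)
  rw [Nat.card_Icc] at h
  unfold kcnt; omega

theorem kcnt_add_ge {r : ℕ} {p : ℕ → ℕ} (z : ℕ) : r ≤ kcnt r p z + z := by
  rcases le_or_gt r z with h | h
  · omega
  · have hs : Finset.Icc 1 (r - z) ⊆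
        (Finset.Icc 1 r).filter (fun k => z ≤ p k + r - k) := by
      intro k hk
      simp only [Finset.mem_Icc, Finset.mem_filter] at *
      omega
    have := Finset.card_le_card hs
    rw [Nat.card_Icc] at this
    unfold kcnt; omega

theorem kcnt_anti {r : ℕ} {p : ℕ → ℕ} {z z' : ℕ} (h : z ≤ z') :
    kcnt r p z' ≤ kcnt r p z := by
  apply Finset.card_le_card
  intro k hk
  simp only [Finset.mem_filter, Finset.mem_Icc] at *
  omega

theorem kcnt_zero {r : ℕ} {p : ℕ → ℕ} : kcnt r p 0 = r := by
  have h1 := kcnt_le (r := r) (p := p) (z := 0)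
  have h2 := kcnt_add_ge (r := r) (p := p) 0
  omega

theorem kcnt_witness {r : ℕ} {p : ℕ → ℕ} {z m : ℕ} (hp : IsPartitionFrom1 p)
    (hm : 1 ≤ m) (h : m ≤ kcnt r p z) : m ≤ r ∧ z ≤ p m + r - m := by
  have hmr : m ≤ r := le_trans h kcnt_le
  refine ⟨hmr, ?_⟩
  by_contra hb
  push_neg at hb
  have hsub : (Finset.Icc 1 r).filter (fun k => z ≤ p k + r - k) ⊆ Finset.Ico 1 m := by
    intro k hk
    simp only [Finset.mem_filter, Finset.mem_Icc, Finset.mem_Ico] at *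
    refine ⟨hk.1.1, ?_⟩
    by_contra hkm
    push_neg at hkm
    have := bead_le hp hm hkm hk.1.2
    omega
  have := Finset.card_le_card hsub
  rw [Nat.card_Ico] at this
  unfold kcnt at h
  omega

theorem pw_ge {r : ℕ} {p : ℕ → ℕ} {m c : ℕ} (hp : IsPartitionFrom1 p)
    (hm : 1 ≤ m) (hmr : m ≤ r) (hc : c ≤ p m) : m * c ≤ pw r p := by
  have h1 : ∑ _k ∈ Finset.Icc 1 m, c ≤ ∑ k ∈ Finset.Icc 1 m, p k := by
    apply Finset.sum_le_sum
    intro k hk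
    simp only [Finset.mem_Icc] at hk
    exact le_trans hc (mono_parts hp hk.1 hk.2)
  have h2 : ∑ k ∈ Finset.Icc 1 m, p k ≤ pw r p := by
    apply Finset.sum_le_sum_of_subset
    intro k hk; simp only [Finset.mem_Icc] at *; omega
  rw [Finset.sum_const, Nat.card_Icc, smul_eq_mul] at h1
  have : m + 1 - 1 = m := by omega
  rw [this] at h1
  exact le_trans h1 h2

theorem kcnt_eq_eps {r : ℕ} {p : ℕ → ℕ} (z : ℕ) :
    kcnt r p z = (r - z) + eps r p z := by
  have := kcnt_add_ge (r := r) (p := p) z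
  unfold eps; omega

theorem eps_zero {r : ℕ} {p : ℕ → ℕ} : eps r p 0 = 0 := by
  unfold eps; rw [kcnt_zero]; omega

theorem eps_pos_one_le {r : ℕ} {p : ℕ → ℕ} {z : ℕ} (h : 0 < eps r p z) : 1 ≤ z := by
  by_contra hz
  have : z = 0 := by omega
  rw [this, eps_zero] at h
  omega

theorem eps_pos_bot {r : ℕ} {p : ℕ → ℕ} {z : ℕ} (hp : IsPartitionFrom1 p)
    (h : 0 < eps r p z) : r + 1 ≤ z + pw r p := by
  rcases le_or_gt z r with hzr | hzr
  · have hz1 : 1 ≤ z := eps_pos_one_le h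
    have hk : r - z + 1 ≤ kcnt r p z := by rw [kcnt_eq_eps]; omega
    obtain ⟨hmr, hw⟩ := kcnt_witness hp (by omega) hk
    have hpm : 1 ≤ p (r - z + 1) := by omega
    have := pw_ge hp (m := r - z + 1) (c := 1) (by omega) hmr hpm
    omega
  · omega

theorem eps_pos_top {r : ℕ} {p : ℕ → ℕ} {z : ℕ} (hp : IsPartitionFrom1 p)
    (h : 0 < eps r p z) : z + 1 ≤ r + pw r p := by
  rcases le_or_gt z r with hzr | hzr
  · have := eps_pos_bot hp h; omega
  · have hk : 1 ≤ kcnt r p z := by rw [kcnt_eq_eps]; omega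
    obtain ⟨hr1, hw⟩ := kcnt_witness hp le_rfl hk
    have := pw_ge hp (m := 1) (c := p 1) le_rfl hr1 le_rfl
    rw [one_mul] at this
    omega

theorem eps_anti_above {r : ℕ} {p : ℕ → ℕ} {z z' : ℕ} (h1 : r ≤ z') (h2 : z' ≤ z) :
    eps r p z ≤ eps r p z' := by
  have := kcnt_anti (r := r) (p := p) h2
  unfold eps; omega

theorem eps_mono_below {r : ℕ} {p : ℕ → ℕ} {z z' : ℕ} (hp : IsPartitionFrom1 p)
    (h1 : z ≤ z') (h2 : z' ≤ r) : eps r p z ≤ eps r p z' := by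
  set a := eps r p z with ha
  rcases Nat.eq_zero_or_pos a with ha0 | ha1
  · omega
  have hz1 : 1 ≤ z := eps_pos_one_le ha1
  have hk : r - z + a ≤ kcnt r p z := by
    have := kcnt_eq_eps (r := r) (p := p) z; omega
  obtain ⟨hmr, hw⟩ := kcnt_witness hp (m := r - z + a) (by omega) hk
  have haz : a ≤ z := by omega
  have hpm : a ≤ p (r - z + a) := by omega
  have hpm' : a ≤ p (r - z' + a) :=
    le_trans hpm (mono_parts hp (by omega) (by omega))
  have hsub : Finset.Icc 1 (r - z' + a) ⊆
      (Finset.Icc 1 r).filter (fun k => z' ≤ p k + r - k) := by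
    intro k hk'
    simp only [Finset.mem_Icc, Finset.mem_filter] at *
    refine ⟨⟨hk'.1, by omega⟩, ?_⟩
    have hb := bead_le hp (j := k) (k := r - z' + a) (r := r) hk'.1 hk'.2 (by omega)
    omega
  have hcard := Finset.card_le_card hsub
  rw [Nat.card_Icc] at hcard
  have hk2 : r - z' + a ≤ kcnt r p z' := by unfold kcnt; omega
  have hk' := kcnt_eq_eps (r := r) (p := p) z'
  omega

end St10

namespace St10

theorem YDn_subset_iff {p q : ℕ → ℕ} :
    YDn q ⊆ YDn p ↔ ∀ k, 1 ≤ k → q k ≤ p k := by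
  constructor
  · intro h k hk
    rcases Nat.eq_zero_or_pos (q k) with h0 | h0
    · omega
    · have hm : (k, q k) ∈ YDn q := ⟨hk, h0, le_rfl⟩
      exact (h hm).2.2
  · rintro h u ⟨h1, h2, h3⟩
    exact ⟨h1, h2, le_trans h3 (h u.1 h1)⟩

theorem bead_injOn {N : ℕ} {p : ℕ → ℕ} (hp : IsPartitionFrom1 p) :
    Set.InjOn (fun k => p k + N - k) (Finset.Icc 1 N) := by
  intro a ha b hb hab
  simp only [Finset.coe_Icc, Set.mem_Icc] at ha hb
  have hab : p a + N - a = p b + N - b := hab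
  rcases lt_trichotomy a b with h | h | h
  · have := bead_lt (r := N) hp ha.1 h hb.2; omega
  · exact h
  · have := bead_lt (r := N) hp hb.1 h ha.2; omega

theorem cnt_eq_kcnt {N : ℕ} {p : ℕ → ℕ} (hp : IsPartitionFrom1 p) (z : ℕ) :
    ((beadSet N p).filter (fun x => z ≤ x)).card = kcnt N p z := by
  unfold beadSet kcnt
  rw [Finset.filter_image]
  rw [Finset.card_image_of_injOn ((bead_injOn (N := N) hp).mono
    (by intro x hx; simp only [Finset.coe_filter, Set.mem_setOf_eq, Finset.coe_Icc,
          Set.mem_Icc, Finset.mem_Icc] at *; exact hx.1))]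

theorem parts_le_cnt {N : ℕ} {p q : ℕ → ℕ}
    (h : ∀ k, 1 ≤ k → q k ≤ p k) (z : ℕ) : kcnt N q z ≤ kcnt N p z := by
  apply Finset.card_le_card
  intro k hk
  simp only [Finset.mem_filter, Finset.mem_Icc] at *
  have := h k hk.1.1
  omega

theorem cnt_le_parts {N : ℕ} {p q : ℕ → ℕ} (hp : IsPartitionFrom1 p)
    (hq : IsPartitionFrom1 q) (hqv : VanishBeyond N q)
    (h : ∀ z, kcnt N q z ≤ kcnt N p z) : ∀ k, 1 ≤ k → q k ≤ p k := by
  intro k hk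
  rcases le_or_gt k N with hkN | hkN
  · set z := q k + N - k with hz
    have h1 : k ≤ kcnt N q z := by
      have hsub : Finset.Icc 1 k ⊆ (Finset.Icc 1 N).filter (fun j => z ≤ q j + N - j) := by
        intro j hj
        simp only [Finset.mem_Icc, Finset.mem_filter] at *
        exact ⟨⟨hj.1, by omega⟩, by have := bead_le (r := N) hq hj.1 hj.2 hkN; omega⟩
      have := Finset.card_le_card hsub
      rw [Nat.card_Icc] at this
      unfold kcnt; omega
    have h2 : k ≤ kcnt N p z := le_trans h1 (h z)
    obtain ⟨hkr, hw⟩ := kcnt_witness hp hk h2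
    omega
  · have := hqv k hkN; omega

-- residue decomposition ------------------------------------------------

theorem beadSet_decomp {e N : ℕ} {p : ℕ → ℕ} (he : 0 < e) :
    beadSet N p = (Finset.range e).biUnion
      (fun i => (beadSet N p).filter (fun x => x % e = i)) := by
  ext x
  simp only [Finset.mem_biUnion, Finset.mem_filter, Finset.mem_range]
  constructor
  · intro hx
    exact ⟨x % e, Nat.mod_lt _ he, hx, rfl⟩
  · rintro ⟨i, _, hx, _⟩
    exact hx

theorem res_pairwise_disjoint {e N : ℕ} {p : ℕ → ℕ} :
    ∀ i1 ∈ Finset.range e, ∀ i2 ∈ Finset.range e, i1 ≠ i2 →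
      Disjoint ((beadSet N p).filter (fun x => x % e = i1))
        ((beadSet N p).filter (fun x => x % e = i2)) := by
  intro i1 _ i2 _ hne
  rw [Finset.disjoint_left]
  intro x hx1 hx2
  simp only [Finset.mem_filter] at *
  omega

theorem div_injOn {e N : ℕ} {p : ℕ → ℕ} {i : ℕ} :
    Set.InjOn (fun x => x / e) ((beadSet N p).filter (fun x => x % e = i)) := by
  intro a ha b hb hab
  rw [Finset.mem_coe, Finset.mem_filter] at ha hb
  have hab : a / e = b / e := hab
  calc a = e * (a / e) + a % e := (Nat.div_add_mod a e).symm
    _ = e * (b / e) + b % e := by rw [hab, ha.2, hb.2]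
    _ = b := Nat.div_add_mod b e

theorem arith_res {e i l x z : ℕ} (he : 0 < e) (hi : i < e) (hl : l < e)
    (hx : x % e = i) :
    (e * z + l ≤ x) ↔ (z + (if i < l then 1 else 0) ≤ x / e) := by
  have hxe := Nat.div_add_mod x e
  by_cases hil : i < l <;> simp only [hil, if_true, if_false]
  · constructor
    · intro h
      by_contra hq
      push_neg at hq
      have h2 : e * (x / e) ≤ e * z := Nat.mul_le_mul_left e (by omega)
      omega
    · intro h
      have h2 : e * (z + 1) ≤ e * (x / e) := Nat.mul_le_mul_left e h
      have h3 : e * (z + 1) = e * z + e := by ring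
      omega
  · constructor
    · intro h
      by_contra hq
      push_neg at hq
      have h2 : e * (x / e + 1) ≤ e * z := Nat.mul_le_mul_left e (by omega)
      have h3 : e * (x / e + 1) = e * (x / e) + e := by ring
      omega
    · intro h
      have h2 : e * z ≤ e * (x / e) := Nat.mul_le_mul_left e (by omega)
      omega

theorem class_count {e N : ℕ} {p : ℕ → ℕ} {i l z : ℕ} (he : 0 < e) (hi : i < e)
    (hl : l < e) :
    (((beadSet N p).filter (fun x => x % e = i)).filter (fun x => e * z + l ≤ x)).card
      = ((runnerPositions e N p i).filter
          (fun t => z + (if i < l then 1 else 0) ≤ t)).card := by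
  unfold runnerPositions
  rw [Finset.filter_image]
  rw [Finset.card_image_of_injOn (div_injOn.mono
    (Finset.coe_subset.mpr (Finset.filter_subset _ _)))]
  congr 1
  apply Finset.filter_congr
  intro x hx
  simp only [Finset.mem_filter] at hx
  exact arith_res he hi hl hx.2

theorem cnt_decomp {e N : ℕ} {p : ℕ → ℕ} {l z : ℕ} (he : 0 < e) (hl : l < e) :
    ((beadSet N p).filter (fun x => e * z + l ≤ x)).card
      = ∑ i ∈ Finset.range e, ((runnerPositions e N p i).filter
          (fun t => z + (if i < l then 1 else 0) ≤ t)).card := by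
  conv_lhs => rw [beadSet_decomp he]
  rw [Finset.filter_biUnion]
  rw [Finset.card_biUnion (fun i1 h1 i2 h2 hne =>
    Finset.disjoint_filter_filter (res_pairwise_disjoint i1 h1 i2 h2 hne))]
  exact Finset.sum_congr rfl fun i hi => class_count he (Finset.mem_range.mp hi) hl

end St10

namespace St10

theorem pushed_filter {e N : ℕ} {p : ℕ → ℕ} {i : ℕ} (hi : i < e) :
    (pushedBeads e N p).filter (fun x => x % e = i)
      = (Finset.range (runnerCount e N p i)).image (fun t => e * t + i) := by
  ext x
  simp only [pushedBeads, Finset.mem_filter, Finset.mem_biUnion, Finset.mem_image,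
    Finset.mem_range]
  constructor
  · rintro ⟨⟨j, hj, t, ht, rfl⟩, hmod⟩
    have hjm : (e * t + j) % e = j := by
      rw [Nat.mul_add_mod, Nat.mod_eq_of_lt hj]
    rw [hjm] at hmod
    subst hmod
    exact ⟨t, ht, rfl⟩
  · rintro ⟨t, ht, rfl⟩
    refine ⟨⟨i, hi, t, ht, rfl⟩, ?_⟩
    rw [Nat.mul_add_mod, Nat.mod_eq_of_lt hi]

theorem mul_add_injective {e i : ℕ} (he : 0 < e) :
    Function.Injective (fun t => e * t + i) := by
  intro a b h
  simp only at h
  have : e * a = e * b := by omega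
  exact Nat.eq_of_mul_eq_mul_left he this

theorem runnerCount_eq {e N : ℕ} {p rho : ℕ → ℕ} {i : ℕ} (he : 0 < e) (hi : i < e)
    (hpb : pushedBeads e N p = beadSet N rho) :
    runnerCount e N p i = runnerCount e N rho i := by
  have h1 : ((pushedBeads e N p).filter (fun x => x % e = i)).card
      = runnerCount e N p i := by
    rw [pushed_filter hi, Finset.card_image_of_injective _ (mul_add_injective he),
      Finset.card_range]
  rw [hpb] at h1
  exact h1.symm

-- sums ------------------------------------------------------------------

theorem sum_Icc_sub (r : ℕ) : ∑ k ∈ Finset.Icc 1 r, (r - k) = ∑ k ∈ Finset.range r, k := by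
  induction r with
  | zero => simp
  | succ n ih =>
    rw [Finset.sum_Icc_succ_top (by omega), Finset.sum_range_succ]
    have h1 : ∀ k ∈ Finset.Icc 1 n, (n + 1 - k) = (n - k) + 1 := by
      intro k hk; simp only [Finset.mem_Icc] at hk; omega
    rw [Finset.sum_congr rfl h1, Finset.sum_add_distrib, ih, Finset.sum_const,
      Nat.card_Icc, smul_eq_mul]
    omega

theorem sum_beadSet_q {r : ℕ} {q : ℕ → ℕ} (hq : IsPartitionFrom1 q) :
    ∑ t ∈ beadSet r q, t = pw r q + ∑ k ∈ Finset.range r, k := by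
  unfold beadSet
  rw [Finset.sum_image (fun a ha b hb h => bead_injOn (N := r) hq
    (by simpa using ha) (by simpa using hb) h)]
  have h1 : ∀ k ∈ Finset.Icc 1 r, q k + r - k = q k + (r - k) := by
    intro k hk; simp only [Finset.mem_Icc] at hk; omega
  rw [Finset.sum_congr rfl h1, Finset.sum_add_distrib, sum_Icc_sub]
  rfl

theorem sum_div_decomp {e N : ℕ} {p : ℕ → ℕ} (he : 0 < e) :
    ∑ x ∈ beadSet N p, x / e
      = ∑ i ∈ Finset.range e, ∑ t ∈ runnerPositions e N p i, t := by
  conv_lhs => rw [beadSet_decomp (N := N) (p := p) he]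
  rw [Finset.sum_biUnion]
  · apply Finset.sum_congr rfl
    intro i _
    unfold runnerPositions
    rw [Finset.sum_image]
    intro a ha b hb h
    exact div_injOn (by simpa using ha) (by simpa using hb) h
  · intro i1 h1 i2 h2 hne
    exact res_pairwise_disjoint i1 (by simpa using h1) i2 (by simpa using h2) hne

theorem pushed_sum {e N : ℕ} {p : ℕ → ℕ} (he : 0 < e) :
    ∑ x ∈ pushedBeads e N p, x / e
      = ∑ i ∈ Finset.range e, ∑ t ∈ Finset.range (runnerCount e N p i), t := by
  unfold pushedBeads
  rw [Finset.sum_biUnion]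
  · apply Finset.sum_congr rfl
    intro i hi
    rw [Finset.sum_image (fun a _ b _ h => mul_add_injective he h)]
    apply Finset.sum_congr rfl
    intro t _
    rw [Nat.mul_add_div he, Nat.div_eq_of_lt (Finset.mem_range.mp hi)]
    omega
  · intro i1 h1 i2 h2 hne
    simp only [Finset.coe_range, Set.mem_Iio] at h1 h2
    simp only [Function.onFun]
    rw [Finset.disjoint_left]
    rintro x hx1 hx2
    simp only [Finset.mem_image, Finset.mem_range] at hx1 hx2
    obtain ⟨t1, _, rfl⟩ := hx1
    obtain ⟨t2, _, ht⟩ := hx2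
    have e1 : (e * t1 + i1) % e = i1 := by rw [Nat.mul_add_mod, Nat.mod_eq_of_lt h1]
    have e2 : (e * t2 + i2) % e = i2 := by rw [Nat.mul_add_mod, Nat.mod_eq_of_lt h2]
    rw [ht] at e2
    exact hne (e1.symm.trans e2)

theorem weight_sum {e N w : ℕ} {rho p : ℕ → ℕ} {Q : ℕ → ℕ → ℕ} (he : 0 < e)
    (hcore : pushedBeads e N rho = beadSet N rho)
    (hin : InBlock e N w rho p) (hQ : IsQuotientOf e N p Q)
    (hQp : ∀ i, i < e → IsPartitionFrom1 (Q i)) :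
    ∑ i ∈ Finset.range e, pw (runnerCount e N rho i) (Q i) = w := by
  obtain ⟨hp1, hp2, hp3, hp4⟩ := hin
  have h1 : ∑ x ∈ beadSet N p, x / e
      = ∑ i ∈ Finset.range e, (pw (runnerCount e N rho i) (Q i)
          + ∑ k ∈ Finset.range (runnerCount e N rho i), k) := by
    rw [sum_div_decomp he]
    apply Finset.sum_congr rfl
    intro i hi
    have hie := Finset.mem_range.mp hi
    have hrp : runnerPositions e N p i = beadSet (runnerCount e N rho i) (Q i) := by
      rw [← (hQ i hie).2, runnerCount_eq he hie hp3]
    rw [hrp, sum_beadSet_q (hQp i hie)]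
  have h2 : ∑ x ∈ beadSet N rho, x / e
      = ∑ i ∈ Finset.range e, ∑ k ∈ Finset.range (runnerCount e N rho i), k := by
    rw [← hcore, pushed_sum he]
  rw [h1, h2, Finset.sum_add_distrib] at hp4
  omega

end St10

namespace St10

theorem core (e d : ℕ) (hd : 1 ≤ d) (R : ℕ → ℕ) (A B : ℕ → ℕ → ℕ)
    (hA : ∀ i, i < e → IsPartitionFrom1 (A i))
    (hB : ∀ i, i < e → IsPartitionFrom1 (B i))
    (hgap : ∀ i, i + 1 < e → R i + d ≤ R (i + 1) + 1)
    (hwB : ∑ i ∈ Finset.range e, pw (R i) (B i) = d)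
    (hyp : ∀ l z, l < e →
      ∑ i ∈ Finset.range e, kcnt (R i) (A i) (z + if i < l then 1 else 0) ≤
      ∑ i ∈ Finset.range e, kcnt (R i) (B i) (z + if i < l then 1 else 0)) :
    ∀ j z, j < e → kcnt (R j) (A j) z ≤ kcnt (R j) (B j) z := by
  -- gap chain
  have hgap' : ∀ i1 i2, i1 < i2 → i2 < e → R i1 + d ≤ R i2 + 1 := by
    intro i1 i2 h12 h2e
    induction i2 with
    | zero => omega
    | succ n ih =>
      rcases Nat.lt_succ_iff_lt_or_eq.mp h12 with h | h
      · have := ih h (by omega)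
        have := hgap n (by omega)
        omega
      · subst h
        exact hgap i1 h2e
  -- single budget
  have hone : ∀ i, i < e → pw (R i) (B i) ≤ d := by
    intro i hi
    have : pw (R i) (B i) = ∑ j ∈ ({i} : Finset ℕ), pw (R j) (B j) := by
      rw [Finset.sum_singleton]
    rw [this, ← hwB]
    apply Finset.sum_le_sum_of_subset
    intro x hx; simp only [Finset.mem_singleton] at hx; subst hx
    exact Finset.mem_range.mpr hi
  -- pair budget
  have hpair : ∀ i1 i2, i1 < e → i2 < e → i1 ≠ i2 →
      pw (R i1) (B i1) + pw (R i2) (B i2) ≤ d := by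
    intro i1 i2 h1 h2 hne
    have heq : pw (R i1) (B i1) + pw (R i2) (B i2) =
        ∑ j ∈ ({i1, i2} : Finset ℕ), pw (R j) (B j) :=
        (Finset.sum_pair (f := fun j => pw (R j) (B j)) hne).symm
    rw [heq, ← hwB]
    apply Finset.sum_le_sum_of_subset
    intro x hx
    simp only [Finset.mem_insert, Finset.mem_singleton] at hx
    rcases hx with rfl | rfl
    · exact Finset.mem_range.mpr h1
    · exact Finset.mem_range.mpr h2
  -- disjointness of B-supports
  have hD : ∀ i1 i2 z1 z2, i1 < i2 → i2 < e →
      0 < eps (R i1) (B i1) z1 → 0 < eps (R i2) (B i2) z2 → z1 < z2 := by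
    intro i1 i2 z1 z2 h12 h2e hp1 hp2
    have t1 := eps_pos_top (hB i1 (by omega)) hp1
    have t2 := eps_pos_bot (hB i2 h2e) hp2
    have hg := hgap' i1 i2 h12 h2e
    have hp := hpair i1 i2 (by omega) h2e (by omega)
    omega
  -- eps-form hypothesis
  have hypE : ∀ l z, l < e →
      ∑ i ∈ Finset.range e, eps (R i) (A i) (z + if i < l then 1 else 0) ≤
      ∑ i ∈ Finset.range e, eps (R i) (B i) (z + if i < l then 1 else 0) := by
    intro l z hl
    have h := hyp l z hl
    have e1 : ∀ (P : ℕ → ℕ → ℕ),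
        ∑ i ∈ Finset.range e, kcnt (R i) (P i) (z + if i < l then 1 else 0) =
        (∑ i ∈ Finset.range e, (R i - (z + if i < l then 1 else 0))) +
        ∑ i ∈ Finset.range e, eps (R i) (P i) (z + if i < l then 1 else 0) := by
      intro P
      rw [← Finset.sum_add_distrib]
      exact Finset.sum_congr rfl (fun i _ => kcnt_eq_eps _)
    rw [e1 A, e1 B] at h
    omega
  -- the contradiction helper
  have H : ∀ j z, j < e → 0 < eps (R j) (A j) z →
      eps (R j) (B j) z < eps (R j) (A j) z →
      (∀ i, j < i → i < e → eps (R i) (B i) (z - 1) = 0) →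
      (∀ i, i < j → eps (R i) (B i) (z + 1) = 0) → False := by
    intro j z hj hApos hBlt hhi hlo
    have hz1 : 1 ≤ z := eps_pos_one_le hApos
    have h0 := hypE 0 z (by omega)
    simp only [Nat.not_lt_zero, if_false, add_zero] at h0
    have hAterm : eps (R j) (A j) z ≤ ∑ i ∈ Finset.range e, eps (R i) (A i) z :=
      Finset.single_le_sum (f := fun i => eps (R i) (A i) z)
        (fun i _ => Nat.zero_le _) (Finset.mem_range.mpr hj)
    obtain ⟨lB, hlBmem, hlBpos⟩ : ∃ lB ∈ Finset.range e, 0 < eps (R lB) (B lB) z := by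
      by_contra hcon
      push_neg at hcon
      have hzero : ∑ i ∈ Finset.range e, eps (R i) (B i) z = 0 :=
        Finset.sum_eq_zero (fun i hi => by have := hcon i hi; omega)
      omega
    have hlBe := Finset.mem_range.mp hlBmem
    rcases lt_trichotomy lB j with hc | rfl | hc
    · -- lB < j : use pattern (lB+1, z)
      have h1 := hypE (lB + 1) z (by omega)
      have hA1 : eps (R j) (A j) z ≤
          ∑ i ∈ Finset.range e, eps (R i) (A i) (z + if i < lB + 1 then 1 else 0) := by
        have hle := Finset.single_le_sum
          (f := fun i => eps (R i) (A i) (z + if i < lB + 1 then 1 else 0))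
          (fun i _ => Nat.zero_le _) (Finset.mem_range.mpr hj)
        have hnot : ¬ (j < lB + 1) := by omega
        simpa [hnot] using hle
      have hB0 : ∑ i ∈ Finset.range e, eps (R i) (B i) (z + if i < lB + 1 then 1 else 0) = 0 := by
        apply Finset.sum_eq_zero
        intro i hi
        by_cases hi' : i < lB + 1
        · simp only [hi', if_true]
          exact hlo i (by omega)
        · simp only [hi', if_false, add_zero]
          by_contra hpos
          have := hD lB i z z (by omega) (Finset.mem_range.mp hi) hlBpos (by omega)
          omega
      omega
    · -- lB = j
      have hsum : ∑ i ∈ Finset.range e, eps (R i) (B i) z = eps (R lB) (B lB) z := by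
        apply Finset.sum_eq_single_of_mem lB hlBmem
        intro i hi hne
        by_contra hpos
        rcases lt_or_gt_of_ne hne with h' | h'
        · have := hD i lB z z h' hlBe (by omega) hlBpos; omega
        · have := hD lB i z z h' (Finset.mem_range.mp hi) hlBpos (by omega); omega
      omega
    · -- lB > j : use pattern (lB, z-1)
      have h1 := hypE lB (z - 1) hlBe
      have hA1 : eps (R j) (A j) z ≤
          ∑ i ∈ Finset.range e, eps (R i) (A i) ((z - 1) + if i < lB then 1 else 0) := by
        have harg : (z - 1) + (if j < lB then 1 else 0) = z := by rw [if_pos hc]; omega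
        calc eps (R j) (A j) z
            = eps (R j) (A j) ((z - 1) + if j < lB then 1 else 0) := by rw [harg]
          _ ≤ ∑ i ∈ Finset.range e, eps (R i) (A i) ((z - 1) + if i < lB then 1 else 0) :=
              Finset.single_le_sum
                (f := fun i => eps (R i) (A i) ((z - 1) + if i < lB then 1 else 0))
                (fun i _ => Nat.zero_le _) (Finset.mem_range.mpr hj)
      have hB0 : ∑ i ∈ Finset.range e, eps (R i) (B i) ((z - 1) + if i < lB then 1 else 0) = 0 := by
        apply Finset.sum_eq_zero
        intro i hi
        by_cases hi' : i < lB
        · simp only [hi', if_true]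
          have harg : z - 1 + 1 = z := by omega
          rw [harg]
          by_contra hpos
          have := hD i lB z z hi' hlBe (by omega) hlBpos
          omega
        · simp only [hi', if_false, add_zero]
          rcases Nat.eq_or_lt_of_le (le_of_not_gt hi') with h' | h'
        -- i = lB or i > lB ; both are > j
          · exact hhi i (by omega) (Finset.mem_range.mp hi)
          · exact hhi i (by omega) (Finset.mem_range.mp hi)
      omega
  -- main argument
  intro j z0 hj
  by_contra hlt
  push_neg at hlt
  have hAB : eps (R j) (B j) z0 < eps (R j) (A j) z0 := by
    have h1 := kcnt_eq_eps (r := R j) (p := A j) z0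
    have h2 := kcnt_eq_eps (r := R j) (p := B j) z0
    omega
  -- case z = R j  (as a reusable fact)
  have Hat : ∀ z, z = R j → eps (R j) (B j) z < eps (R j) (A j) z → False := by
    intro z hzR hw
    have hApos : 0 < eps (R j) (A j) z := by omega
    have hz1 : 1 ≤ z := eps_pos_one_le hApos
    apply H j z hj hApos hw
    · intro i hji hie
      by_contra hpos
      have hb := eps_pos_bot (r := R i) (z := z - 1) (hB i hie) (by omega)
      have hg := hgap' j i hji hie
      have h1 := hone i hie
      omega
    · intro i hij
      by_contra hpos
      have ht := eps_pos_top (r := R i) (z := z + 1) (hB i (by omega)) (by omega)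
      have hg := hgap' i j hij hj
      have h1 := hone i (by omega)
      omega
  rcases lt_trichotomy z0 (R j) with hzr | hzr | hzr
  · -- below R j : walk up
    have key : ∀ t z, z + t = R j → eps (R j) (B j) z < eps (R j) (A j) z → False := by
      intro t
      induction t with
      | zero => intro z hz hw; exact Hat z (by omega) hw
      | succ n ih =>
        intro z hz hw
        have hApos : 0 < eps (R j) (A j) z := by omega
        rcases Nat.eq_zero_or_pos (eps (R j) (B j) (z + 1)) with hb0 | hb1
        · -- recurse upward
          have hmono := eps_mono_below (r := R j) (hA j hj) (z := z) (z' := z + 1)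
            (by omega) (by omega)
          exact ih (z + 1) (by omega) (by omega)
        · -- H applies with case-3 neighbor facts
          apply H j z hj hApos hw
          · intro i hji hie
            by_contra hpos
            have := hD j i (z + 1) (z - 1) hji hie hb1 (by omega)
            omega
          · intro i hij
            by_contra hpos
            have := hD i j (z + 1) (z + 1) hij hj (by omega) hb1
            omega
    exact key (R j - z0) z0 (by omega) hAB
  · exact Hat z0 hzr hAB
  · -- above R j : walk down
    have key : ∀ t z, R j + t = z → eps (R j) (B j) z < eps (R j) (A j) z → False := by
      intro t
      induction t with
      | zero => intro z hz hw; exact Hat z (by omega) hw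
      | succ n ih =>
        intro z hz hw
        have hApos : 0 < eps (R j) (A j) z := by omega
        rcases Nat.eq_zero_or_pos (eps (R j) (B j) (z - 1)) with hb0 | hb1
        · have hmono := eps_anti_above (r := R j) (p := A j) (z := z) (z' := z - 1)
            (by omega) (by omega)
          exact ih (z - 1) (by omega) (by omega)
        · apply H j z hj hApos hw
          · intro i hji hie
            by_contra hpos
            have := hD j i (z - 1) (z - 1) hji hie hb1 (by omega)
            omega
          · intro i hij
            by_contra hpos
            have := hD i j (z + 1) (z - 1) hij hj (by omega) hb1
            omega
    exact key (z0 - R j) z0 (by omega) hAB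

end St10

/-- For a `d`-Rouquier `e`-core `rho`, `0 ≤ f ≤ d`,
`mu ∈ P_{ρ,d}` and `nu ∈ P_{ρ,f}` with `e`-quotients `Qmu`, `Qnu`:
`Y(nu) ⊆ Y(mu)` iff `Y(Qnu) ⊆ Y(Qmu)` componentwise. -/
theorem diagram_containment_iff_quotient_containment
    (e N d f : ℕ) (he : 2 ≤ e) (hd : 1 ≤ d) (hf : f ≤ d)
    (rho : ℕ → ℕ) (hrhop : IsPartitionFrom1 rho) (hrhov : VanishBeyond N rho)
    (hcore : pushedBeads e N rho = beadSet N rho)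
    (hrq : ∀ i, i + 1 < e →
      runnerCount e N rho i + d ≤ runnerCount e N rho (i + 1) + 1)
    (mu : ℕ → ℕ) (hmu : InBlock e N d rho mu)
    (nu : ℕ → ℕ) (hnu : InBlock e N f rho nu)
    (Qmu : ℕ → ℕ → ℕ) (hQmup : ∀ i, i < e → IsPartitionFrom1 (Qmu i))
    (hQmu : IsQuotientOf e N mu Qmu)
    (Qnu : ℕ → ℕ → ℕ) (hQnup : ∀ i, i < e → IsPartitionFrom1 (Qnu i))
    (hQnu : IsQuotientOf e N nu Qnu) :
    YDn nu ⊆ YDn mu ↔ ∀ i, i < e → YDn (Qnu i) ⊆ YDn (Qmu i) := by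
  have he0 : 0 < e := by omega
  have decomp : ∀ (p : ℕ → ℕ) (Q : ℕ → ℕ → ℕ), IsPartitionFrom1 p →
      pushedBeads e N p = beadSet N rho → IsQuotientOf e N p Q →
      (∀ i, i < e → IsPartitionFrom1 (Q i)) →
      ∀ l z, l < e → St10.kcnt N p (e * z + l)
        = ∑ i ∈ Finset.range e,
            St10.kcnt (runnerCount e N rho i) (Q i) (z + if i < l then 1 else 0) := by
    intro p Q hp hpb hQ hQp l z hl
    rw [← St10.cnt_eq_kcnt hp (e * z + l), St10.cnt_decomp he0 hl]
    apply Finset.sum_congr rfl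
    intro i hi
    have hie := Finset.mem_range.mp hi
    have hrp : runnerPositions e N p i = beadSet (runnerCount e N rho i) (Q i) := by
      rw [← (hQ i hie).2, St10.runnerCount_eq he0 hie hpb]
    rw [hrp, St10.cnt_eq_kcnt (hQp i hie)]
  have hwB := St10.weight_sum he0 hcore hmu hQmu hQmup
  constructor
  · intro hsub i0 hi0
    have hparts := St10.YDn_subset_iff.mp hsub
    have hcnt : ∀ z, St10.kcnt N nu z ≤ St10.kcnt N mu z :=
      St10.parts_le_cnt hparts
    have hpat : ∀ l z, l < e →
        ∑ i ∈ Finset.range e,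
          St10.kcnt (runnerCount e N rho i) (Qnu i) (z + if i < l then 1 else 0) ≤
        ∑ i ∈ Finset.range e,
          St10.kcnt (runnerCount e N rho i) (Qmu i) (z + if i < l then 1 else 0) := by
      intro l z hl
      have h := hcnt (e * z + l)
      rw [decomp nu Qnu hnu.1 hnu.2.2.1 hQnu hQnup l z hl,
        decomp mu Qmu hmu.1 hmu.2.2.1 hQmu hQmup l z hl] at h
      exact h
    have hq := St10.core e d hd (fun i => runnerCount e N rho i) Qnu Qmu
      hQnup hQmup hrq hwB hpat
    apply St10.YDn_subset_iff.mpr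
    have hvnu : VanishBeyond (runnerCount e N rho i0) (Qnu i0) := by
      have h := (hQnu i0 hi0).1
      rwa [St10.runnerCount_eq he0 hi0 hnu.2.2.1] at h
    exact St10.cnt_le_parts (hQmup i0 hi0) (hQnup i0 hi0) hvnu (fun z => hq i0 z hi0)
  · intro hq
    apply St10.YDn_subset_iff.mpr
    apply St10.cnt_le_parts hmu.1 hnu.1 hnu.2.1
    intro x
    have hx : e * (x / e) + x % e = x := Nat.div_add_mod x e
    have hxl : x % e < e := Nat.mod_lt _ he0
    rw [← hx,
      decomp nu Qnu hnu.1 hnu.2.2.1 hQnu hQnup (x % e) (x / e) hxl,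
      decomp mu Qmu hmu.1 hmu.2.2.1 hQmu hQmup (x % e) (x / e) hxl]
    apply Finset.sum_le_sum
    intro i hi
    exact St10.parts_le_cnt
      (St10.YDn_subset_iff.mp (hq i (Finset.mem_range.mp hi))) _
end

section
/- Fix e ≥ 2, d ≥ 1, and a d-Rouquier e-core ρ of residue κ. Let σ be a partition with Y(σ) strictly contained in Y(ρ). Then the number of nodes of residue κ in Y(ρ) \ Y(σ) is strictly less than (|ρ| − |σ|)/e. -/
open Finset

lemma crc_addmod {e x j : ℕ} (h : x % e + j < e) : (x + j) % e = x % e + j := by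
  conv_lhs => rw [← Nat.div_add_mod x e, add_assoc]
  rw [Nat.mul_add_mod]
  exact Nat.mod_eq_of_lt h

lemma crc_adddiv {e x j : ℕ} (he : 0 < e) (h : x % e + j < e) : (x + j) / e = x / e := by
  conv_lhs => rw [← Nat.div_add_mod x e, add_assoc]
  rw [Nat.mul_add_div he, Nat.div_eq_of_lt h, add_zero]

lemma crc_sum_eq_sum_card (S : Finset ℕ) (M : ℕ) (hS : ∀ x ∈ S, x ≤ M) :
    ∑ x ∈ S, x = ∑ m ∈ Icc 1 M, (S.filter (fun x => m ≤ x)).card := by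
  have h1 : ∀ m, (S.filter (fun x => m ≤ x)).card = ∑ x ∈ S, (if m ≤ x then 1 else 0) := by
    intro m; rw [Finset.card_filter]
  simp_rw [h1]
  rw [Finset.sum_comm]
  apply Finset.sum_congr rfl
  intro x hx
  have h2 : (Icc 1 M).filter (fun m => m ≤ x) = Icc 1 x := by
    ext m
    simp only [Finset.mem_filter, Finset.mem_Icc]
    have := hS x hx
    omega
  calc x = (Icc 1 x).card := by rw [Nat.card_Icc]; omega
    _ = ((Icc 1 M).filter (fun m => m ≤ x)).card := by rw [h2]
    _ = ∑ m ∈ Icc 1 M, (if m ≤ x then 1 else 0) := Finset.card_filter _ _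

lemma crc_dom_sum {A B : Finset ℕ}
    (dom : ∀ m, (A.filter (fun x => m ≤ x)).card ≤ (B.filter (fun x => m ≤ x)).card) :
    ∑ x ∈ A, x ≤ ∑ x ∈ B, x := by
  set M := (A ∪ B).sup id with hM
  have hA : ∀ x ∈ A, x ≤ M := fun x hx => Finset.le_sup (f := id) (Finset.mem_union_left _ hx)
  have hB : ∀ x ∈ B, x ≤ M := fun x hx => Finset.le_sup (f := id) (Finset.mem_union_right _ hx)
  rw [crc_sum_eq_sum_card A M hA, crc_sum_eq_sum_card B M hB]
  exact Finset.sum_le_sum fun m _ => dom m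

lemma crc_main (e : ℕ) (he : 2 ≤ e) (B : Finset ℕ)
    (hB1 : ∀ x ∈ B, x % e + 1 < e → x + 1 ∈ B)
    (hB2 : ∀ x : ℕ, x + e ∈ B → x ∈ B) :
    ∀ k : ℕ, ∀ A : Finset ℕ, A.card = B.card →
      (∀ m, (A.filter (fun x => m ≤ x)).card ≤ (B.filter (fun x => m ≤ x)).card) →
      A ≠ B → (∑ x ∈ B, x) - (∑ x ∈ A, x) < k →
      ∑ x ∈ A, x % e < ∑ x ∈ B, x % e := by
  have he0 : 0 < e := by omega
  have stepup : ∀ j x, x ∈ B → x % e + j < e → x + j ∈ B := by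
    intro j
    induction j with
    | zero => intro x hx _; simpa using hx
    | succ j ih =>
      intro x hx h
      have h1 : x + j ∈ B := ih x hx (by omega)
      have h2 : (x + j) % e = x % e + j := crc_addmod (by omega)
      have h3 := hB1 (x + j) h1 (by rw [h2]; omega)
      have h4 : x + (j + 1) = (x + j) + 1 := by omega
      rw [h4]; exact h3
  have stepdown : ∀ t y, y + e * t ∈ B → y ∈ B := by
    intro t
    induction t with
    | zero => intro y hy; simpa using hy
    | succ t ih =>
      intro y hy
      apply ih
      apply hB2
      have h : y + e * t + e = y + e * (t + 1) := by ring
      rw [h]; exact hy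
  intro k
  induction k with
  | zero => intro A _ _ _ h; omega
  | succ k ih =>
    intro A hcard dom hne hk
    have hBA : (B \ A).Nonempty := by
      rw [Finset.sdiff_nonempty]
      intro hsubs
      exact hne (Finset.eq_of_subset_of_card_le hsubs (le_of_eq hcard)).symm
    have hABn : (A \ B).Nonempty := by
      rw [Finset.sdiff_nonempty]
      intro hsubs
      exact hne (Finset.eq_of_subset_of_card_le hsubs (le_of_eq hcard.symm))
    set x := (B \ A).max' hBA with hxdef
    set y := (A \ B).max' hABn with hydef
    have hxmem := Finset.max'_mem (B \ A) hBA
    have hymem := Finset.max'_mem (A \ B) hABn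
    rw [Finset.mem_sdiff] at hxmem hymem
    obtain ⟨hxB, hxA⟩ := hxmem
    obtain ⟨hyA, hyB⟩ := hymem
    have hmaxBA : ∀ z ∈ B, z ∉ A → z ≤ x :=
      fun z hz hz' => Finset.le_max' _ z (Finset.mem_sdiff.mpr ⟨hz, hz'⟩)
    have hmaxAB : ∀ z ∈ A, z ∉ B → z ≤ y :=
      fun z hz hz' => Finset.le_max' _ z (Finset.mem_sdiff.mpr ⟨hz, hz'⟩)
    have hyx : y < x := by
      by_contra hcon
      push_neg at hcon
      have hsubf : B.filter (fun z => y ≤ z) ⊆ A.filter (fun z => y ≤ z) := by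
        intro z hz
        rw [Finset.mem_filter] at hz ⊢
        refine ⟨?_, hz.2⟩
        by_contra hzA
        have h5 := hmaxBA z hz.1 hzA
        have h6 : z = y := by omega
        subst h6
        exact hyB hz.1
      have hy1 : y ∈ A.filter (fun z => y ≤ z) := Finset.mem_filter.mpr ⟨hyA, le_refl _⟩
      have hy2 : y ∉ B.filter (fun z => y ≤ z) := fun h => hyB (Finset.mem_filter.mp h).1
      have h7 := Finset.card_lt_card
        ((Finset.ssubset_iff_of_subset hsubf).mpr ⟨y, hy1, hy2⟩)
      have h8 := dom y
      omega
    have hres : y % e < x % e := by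
      by_contra hcon
      push_neg at hcon
      have hye : y % e < e := Nat.mod_lt y he0
      set x' := x + (y % e - x % e) with hx'
      have hx'B : x' ∈ B := stepup _ x hxB (by omega)
      have hx'mod : x' % e = y % e := by
        rw [hx', crc_addmod (by omega)]; omega
      have hyx' : y < x' := by omega
      have hmeq : y ≡ x' [MOD e] := hx'mod.symm
      have hdvd : e ∣ x' - y := (Nat.modEq_iff_dvd' hyx'.le).mp hmeq
      obtain ⟨t, ht⟩ := hdvd
      have h9 : y + e * t = x' := by omega
      exact hyB (stepdown t y (by rw [h9]; exact hx'B))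
    set A' := insert x (A.erase y) with hA'
    have hxEA : x ∉ A.erase y := fun h => hxA (Finset.mem_of_mem_erase h)
    have hcard' : A'.card = B.card := by
      rw [hA', Finset.card_insert_of_notMem hxEA, Finset.card_erase_of_mem hyA]
      have : 0 < A.card := Finset.card_pos.mpr ⟨y, hyA⟩
      omega
    have hS1 : (∑ z ∈ A', z) + y = (∑ z ∈ A, z) + x := by
      rw [hA', Finset.sum_insert hxEA]
      have h10 : (∑ z ∈ A.erase y, z) + y = ∑ z ∈ A, z := Finset.sum_erase_add A _ hyA
      omega
    have hS2 : (∑ z ∈ A', z % e) + y % e = (∑ z ∈ A, z % e) + x % e := by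
      rw [hA', Finset.sum_insert hxEA]
      have h10 : (∑ z ∈ A.erase y, z % e) + y % e = ∑ z ∈ A, z % e :=
        Finset.sum_erase_add A _ hyA
      omega
    have dom' : ∀ m, (A'.filter (fun z => m ≤ z)).card ≤ (B.filter (fun z => m ≤ z)).card := by
      intro m
      by_cases hm1 : m ≤ y
      · have h1 : A'.filter (fun z => m ≤ z)
            = insert x ((A.filter (fun z => m ≤ z)).erase y) := by
          rw [hA', Finset.filter_insert, if_pos (show m ≤ x by omega), Finset.filter_erase]
        have hxnm : x ∉ (A.filter (fun z => m ≤ z)).erase y :=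
          fun h => hxA (Finset.mem_filter.mp (Finset.mem_of_mem_erase h)).1
        have hyf : y ∈ A.filter (fun z => m ≤ z) := Finset.mem_filter.mpr ⟨hyA, hm1⟩
        rw [h1, Finset.card_insert_of_notMem hxnm, Finset.card_erase_of_mem hyf]
        have h11 : 0 < (A.filter (fun z => m ≤ z)).card := Finset.card_pos.mpr ⟨y, hyf⟩
        have h12 := dom m
        omega
      · by_cases hm2 : m ≤ x
        · have hynf : y ∉ A.filter (fun z => m ≤ z) := by
            intro h; exact hm1 (Finset.mem_filter.mp h).2
          have h1 : A'.filter (fun z => m ≤ z) = insert x (A.filter (fun z => m ≤ z)) := by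
            rw [hA', Finset.filter_insert, if_pos hm2, Finset.filter_erase,
              Finset.erase_eq_of_notMem hynf]
          have hxnf : x ∉ A.filter (fun z => m ≤ z) :=
            fun h => hxA (Finset.mem_filter.mp h).1
          rw [h1, Finset.card_insert_of_notMem hxnf]
          by_contra hcon
          push_neg at hcon
          have heq : (A.filter (fun z => m ≤ z)).card = (B.filter (fun z => m ≤ z)).card := by
            have := dom m; omega
          have hsubf : A.filter (fun z => m ≤ z) ⊆ B.filter (fun z => m ≤ z) := by
            intro z hz
            rw [Finset.mem_filter] at hz ⊢
            refine ⟨?_, hz.2⟩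
            by_contra hzB
            have := hmaxAB z hz.1 hzB
            omega
          have heq2 := Finset.eq_of_subset_of_card_le hsubf (le_of_eq heq.symm)
          have hxf : x ∈ B.filter (fun z => m ≤ z) := Finset.mem_filter.mpr ⟨hxB, hm2⟩
          rw [← heq2] at hxf
          exact hxA (Finset.mem_filter.mp hxf).1
        · have hynf : y ∉ A.filter (fun z => m ≤ z) := by
            intro h; exact hm1 (Finset.mem_filter.mp h).2
          have h1 : A'.filter (fun z => m ≤ z) = A.filter (fun z => m ≤ z) := by
            rw [hA', Finset.filter_insert, if_neg hm2, Finset.filter_erase,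
              Finset.erase_eq_of_notMem hynf]
          rw [h1]; exact dom m
    by_cases hA'B : A' = B
    · rw [← hA'B]; omega
    · have hsum' : ∑ z ∈ A', z ≤ ∑ z ∈ B, z := crc_dom_sum dom'
      have hrec := ih A' hcard' dom' hA'B (by omega)
      omega


lemma crc_mem_pushedBeads {e N : ℕ} (he : 0 < e) (p : ℕ → ℕ) (x : ℕ) :
    x ∈ pushedBeads e N p ↔ x / e < runnerCount e N p (x % e) := by
  unfold pushedBeads
  simp only [Finset.mem_biUnion, Finset.mem_image, Finset.mem_range]
  constructor
  · rintro ⟨i, hi, t, ht, rfl⟩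
    rw [Nat.mul_add_mod, Nat.mod_eq_of_lt hi, Nat.mul_add_div he, Nat.div_eq_of_lt hi, add_zero]
    exact ht
  · intro h
    exact ⟨x % e, Nat.mod_lt x he, x / e, h, Nat.div_add_mod x e⟩

lemma crc_count_multiples (e c : ℕ) :
    ∀ v u, u ≤ v →
      ((Finset.Icc (u + 1) v).filter (fun s => e ∣ s + c)).card + (u + c) / e
        = (v + c) / e := by
  intro v
  induction v with
  | zero => intro u hu; interval_cases u; simp
  | succ v ih =>
    intro u hu
    rcases Nat.eq_or_lt_of_le hu with h | h
    · subst h; simp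
    · have hu' : u ≤ v := by omega
      have hins : Finset.Icc (u + 1) (v + 1) = insert (v + 1) (Finset.Icc (u + 1) v) :=
        (Finset.insert_Icc_right_eq_Icc_add_one (by omega)).symm
      have hnm : v + 1 ∉ Finset.Icc (u + 1) v := by simp
      have hsd : (v + 1 + c) = (v + c) + 1 := by omega
      have hdiv : (v + 1 + c) / e = (v + c) / e + if e ∣ (v + c) + 1 then 1 else 0 := by
        rw [hsd, Nat.succ_div]
      have hprev := ih u hu'
      rw [hins, Finset.filter_insert]
      by_cases hdvd : e ∣ (v + 1) + c
      · rw [if_pos hdvd, Finset.card_insert_of_notMem (fun hmm => hnm (Finset.mem_of_mem_filter _ hmm))]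
        have : e ∣ (v + c) + 1 := by rwa [show (v+c)+1 = (v+1)+c by omega]
        rw [hdiv, if_pos this]
        omega
      · rw [if_neg hdvd]
        have : ¬ e ∣ (v + c) + 1 := by rwa [show (v+c)+1 = (v+1)+c by omega]
        rw [hdiv, if_neg this]
        omega

lemma crc_residue_iff (e N r s : ℕ) (hr : r ≤ N) :
    ((((s : ℤ) - (r : ℤ)) % (e : ℤ) = (-(N : ℤ)) % (e : ℤ))) ↔ e ∣ s + (N - r) := by
  have h1 : (((s : ℤ) - (r : ℤ)) % (e : ℤ) = (-(N : ℤ)) % (e : ℤ))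
      ↔ Int.ModEq (e : ℤ) ((s : ℤ) - (r : ℤ)) (-(N : ℤ)) := Iff.rfl
  rw [h1, Int.modEq_iff_dvd]
  have h2 : (-(N : ℤ)) - ((s : ℤ) - (r : ℤ)) = -(((s + (N - r) : ℕ) : ℤ)) := by
    omega
  rw [h2, dvd_neg, Int.natCast_dvd_natCast]

lemma crc_mono {p : ℕ → ℕ} (hp : IsPartitionFrom1 p) :
    ∀ r r', 1 ≤ r → r ≤ r' → p r' ≤ p r := by
  intro r r' h1 h2
  induction r', h2 using Nat.le_induction with
  | base => exact le_refl _
  | succ n hn ih => exact le_trans (hp n (le_trans h1 hn)) ih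


/-- Let `rho` be a `d`-Rouquier `e`-core of residue
`κ = -N mod e`, and let `sigma` be a partition with `Y(sigma) ⊊ Y(rho)`.
Then the number of nodes of residue `κ` in `Y(rho) \ Y(sigma)` is strictly
less than `(|rho| - |sigma|)/e`. -/
theorem core_residue_count
    (e N d : ℕ) (he : 2 ≤ e) (hd : 1 ≤ d)
    (rho : ℕ → ℕ) (hrhop : IsPartitionFrom1 rho) (hrhov : VanishBeyond N rho)
    (hcore : pushedBeads e N rho = beadSet N rho)
    (hrq : ∀ i, i + 1 < e →
      runnerCount e N rho i + d ≤ runnerCount e N rho (i + 1) + 1)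
    (sigma : ℕ → ℕ) (hsigmap : IsPartitionFrom1 sigma)
    (hsub : ∀ r, 1 ≤ r → sigma r ≤ rho r)
    (hne : ∃ r, 1 ≤ r ∧ sigma r < rho r) :
    e * (∑ r ∈ Finset.Icc 1 N,
        ((Finset.Icc (sigma r + 1) (rho r)).filter
          (fun (s : ℕ) => ((s : ℤ) - (r : ℤ)) % (e : ℤ) = (-(N : ℤ)) % (e : ℤ))).card)
      < ∑ r ∈ Finset.Icc 1 N, (rho r - sigma r) := by
  have he0 : 0 < e := by omega
  set fa : ℕ → ℕ := fun r => sigma r + N - r with hfa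
  set fb : ℕ → ℕ := fun r => rho r + N - r with hfb
  -- the witness row
  obtain ⟨r0, hr01, hr0lt⟩ := hne
  have hr0N : r0 ≤ N := by
    by_contra hcon
    have := hrhov r0 (by omega)
    omega
  -- injectivity of fa and fb on Icc 1 N
  have hinj : ∀ (p : ℕ → ℕ), IsPartitionFrom1 p →
      ∀ x ∈ Finset.Icc 1 N, ∀ y ∈ Finset.Icc 1 N,
        (p x + N - x) = (p y + N - y) → x = y := by
    intro p hp x hx y hy hxy
    rw [Finset.mem_Icc] at hx hy
    rcases lt_trichotomy x y with h | h | h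
    · have := crc_mono hp x y hx.1 h.le
      omega
    · exact h
    · have := crc_mono hp y x hy.1 h.le
      omega
  have hinja := hinj sigma hsigmap
  have hinjb := hinj rho hrhop
  -- the finsets
  set A : Finset ℕ := (Finset.Icc 1 N).image fa with hA
  have hBimg : beadSet N rho = (Finset.Icc 1 N).image fb := rfl
  set B : Finset ℕ := beadSet N rho with hB
  have hcard : A.card = B.card := by
    rw [hA, hBimg, Finset.card_image_of_injOn, Finset.card_image_of_injOn]
    · exact fun x hx y hy h => hinjb x hx y hy h
    · exact fun x hx y hy h => hinja x hx y hy h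
  have hab : ∀ r ∈ Finset.Icc 1 N, fa r ≤ fb r := by
    intro r hr
    rw [Finset.mem_Icc] at hr
    have := hsub r hr.1
    simp only [hfa, hfb]
    omega
  have dom : ∀ m, (A.filter (fun z => m ≤ z)).card ≤ (B.filter (fun z => m ≤ z)).card := by
    intro m
    rw [hA, hBimg, Finset.filter_image, Finset.filter_image,
      Finset.card_image_of_injOn, Finset.card_image_of_injOn]
    · apply Finset.card_le_card
      intro r hr
      rw [Finset.mem_filter] at hr ⊢
      exact ⟨hr.1, le_trans hr.2 (hab r hr.1)⟩
    · exact fun x hx y hy h =>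
        hinjb x (Finset.mem_of_mem_filter _ hx) y (Finset.mem_of_mem_filter _ hy) h
    · exact fun x hx y hy h =>
        hinja x (Finset.mem_of_mem_filter _ hx) y (Finset.mem_of_mem_filter _ hy) h
  have hsumA : ∑ z ∈ A, z = ∑ r ∈ Finset.Icc 1 N, fa r := Finset.sum_image hinja
  have hsumB : ∑ z ∈ B, z = ∑ r ∈ Finset.Icc 1 N, fb r := Finset.sum_image hinjb
  have hsumAe : ∑ z ∈ A, z % e = ∑ r ∈ Finset.Icc 1 N, fa r % e := Finset.sum_image hinja
  have hsumBe : ∑ z ∈ B, z % e = ∑ r ∈ Finset.Icc 1 N, fb r % e := Finset.sum_image hinjb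
  have hstrict : ∑ r ∈ Finset.Icc 1 N, fa r < ∑ r ∈ Finset.Icc 1 N, fb r := by
    apply Finset.sum_lt_sum hab
    refine ⟨r0, Finset.mem_Icc.mpr ⟨hr01, hr0N⟩, ?_⟩
    simp only [hfa, hfb]
    omega
  have hANB : A ≠ B := by
    intro hcon
    rw [hcon, hsumB] at hsumA
    omega
  -- structure of B
  have hB1 : ∀ z ∈ B, z % e + 1 < e → z + 1 ∈ B := by
    intro z hz h
    rw [← hcore, crc_mem_pushedBeads he0] at hz ⊢
    rw [crc_addmod (by omega : z % e + 1 < e), crc_adddiv he0 (by omega : z % e + 1 < e)]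
    have hc := hrq (z % e) (by omega)
    omega
  have hB2 : ∀ z : ℕ, z + e ∈ B → z ∈ B := by
    intro z hz
    rw [← hcore, crc_mem_pushedBeads he0] at hz ⊢
    rw [Nat.add_mod_right, Nat.add_div_right _ he0] at hz
    omega
  have hmain := crc_main e he B hB1 hB2 ((∑ z ∈ B, z) + 1) A hcard dom hANB (by omega)
  rw [hsumAe, hsumBe] at hmain
  -- per-row counting
  have hrow : ∀ r ∈ Finset.Icc 1 N,
      ((Finset.Icc (sigma r + 1) (rho r)).filter
        (fun (s : ℕ) => ((s : ℤ) - (r : ℤ)) % (e : ℤ) = (-(N : ℤ)) % (e : ℤ))).card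
        + fa r / e = fb r / e := by
    intro r hr
    rw [Finset.mem_Icc] at hr
    have hfil : (Finset.Icc (sigma r + 1) (rho r)).filter
        (fun (s : ℕ) => ((s : ℤ) - (r : ℤ)) % (e : ℤ) = (-(N : ℤ)) % (e : ℤ))
        = (Finset.Icc (sigma r + 1) (rho r)).filter (fun s => e ∣ s + (N - r)) := by
      apply Finset.filter_congr
      intro s _
      simpa using crc_residue_iff e N r s hr.2
    rw [hfil]
    have hcnt := crc_count_multiples e (N - r) (rho r) (sigma r) (hsub r hr.1)
    have hfa' : fa r = sigma r + (N - r) := by simp only [hfa]; omega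
    have hfb' : fb r = rho r + (N - r) := by simp only [hfb]; omega
    rw [hfa', hfb']
    exact hcnt
  have hC : (∑ r ∈ Finset.Icc 1 N,
      ((Finset.Icc (sigma r + 1) (rho r)).filter
        (fun (s : ℕ) => ((s : ℤ) - (r : ℤ)) % (e : ℤ) = (-(N : ℤ)) % (e : ℤ))).card)
      + ∑ r ∈ Finset.Icc 1 N, fa r / e = ∑ r ∈ Finset.Icc 1 N, fb r / e := by
    rw [← Finset.sum_add_distrib]
    exact Finset.sum_congr rfl hrow
  have hUa : e * (∑ r ∈ Finset.Icc 1 N, fa r / e) + (∑ r ∈ Finset.Icc 1 N, fa r % e)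
      = ∑ r ∈ Finset.Icc 1 N, fa r := by
    rw [Finset.mul_sum, ← Finset.sum_add_distrib]
    exact Finset.sum_congr rfl (fun r _ => Nat.div_add_mod (fa r) e)
  have hUb : e * (∑ r ∈ Finset.Icc 1 N, fb r / e) + (∑ r ∈ Finset.Icc 1 N, fb r % e)
      = ∑ r ∈ Finset.Icc 1 N, fb r := by
    rw [Finset.mul_sum, ← Finset.sum_add_distrib]
    exact Finset.sum_congr rfl (fun r _ => Nat.div_add_mod (fb r) e)
  have hR : ∑ r ∈ Finset.Icc 1 N, fb r
      = (∑ r ∈ Finset.Icc 1 N, fa r) + ∑ r ∈ Finset.Icc 1 N, (rho r - sigma r) := by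
    rw [← Finset.sum_add_distrib]
    apply Finset.sum_congr rfl
    intro r hr
    rw [Finset.mem_Icc] at hr
    have := hsub r hr.1
    simp only [hfa, hfb]
    omega
  have hkey : e * (∑ r ∈ Finset.Icc 1 N,
      ((Finset.Icc (sigma r + 1) (rho r)).filter
        (fun (s : ℕ) => ((s : ℤ) - (r : ℤ)) % (e : ℤ) = (-(N : ℤ)) % (e : ℤ))).card)
      + e * (∑ r ∈ Finset.Icc 1 N, fa r / e) = e * (∑ r ∈ Finset.Icc 1 N, fb r / e) := by
    rw [← Nat.left_distrib, hC]
  generalize hp1 : e * (∑ r ∈ Finset.Icc 1 N,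
      ((Finset.Icc (sigma r + 1) (rho r)).filter
        (fun (s : ℕ) => ((s : ℤ) - (r : ℤ)) % (e : ℤ) = (-(N : ℤ)) % (e : ℤ))).card) = p1
    at hkey ⊢
  generalize hp2 : e * (∑ r ∈ Finset.Icc 1 N, fa r / e) = p2 at hkey hUa
  generalize hp3 : e * (∑ r ∈ Finset.Icc 1 N, fb r / e) = p3 at hkey hUb
  omega
end

section
/- Let e ≥ 2, n, d ∈ ℤ_{>0}, J = {1,…,e−1}, I = ℤ/eℤ. For j ∈ J let Inc(j) = {j, j−1} ⊆ I. Fix a colored composition (λ,c) with λ ∈ Λ(n,d) and c ∈ J^n, and b ∈ J^d. Let M(S,T) denote matrices with nonnegative integer entries indexed by S×T. Let L be the set of pairs (A,B) with A ∈ M(n,I), B ∈ M(I,d) such that: row sums of A are λ_1,…,λ_n; a_{r,i} = 0 unless i ∈ Inc(c_r); column sums of B are all 1; b_{i,s} = 0 unless i ∈ Inc(b_s); and for all i ∈ I, the i-th column sum of A equals the i-th row sum of B. Let R be the set of e-tuples (T^0,…,T^{e−1}) of matrices in M(n,d) such that T^0+⋯+T^{e−1} has row sums λ_1,…,λ_n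 and all column sums 1, and t^i_{r,s} = 0 unless i ∈ Inc(c_r) ∩ Inc(b_s). Then |R| = Σ_{(A,B)∈L} Π_{i∈I} multinomial(β_i(A); a_{1,i},…,a_{n,i}), where β_i(A) is the i-th column sum of A. -/
/-!
An `e`-tuple in `R` is the same as a labelling `f` of the columns `s` by pairs (colour, row):
column `s` of `T^0 + ⋯ + T^{e-1}` holds a single `1`, sitting in some `T^i` at some row `r`.
Forgetting everything but the pair `(A, B)`, where `a_{r,i}` counts the columns labelled `(i, r)`
and `B` records the colour of each column, maps the labellings onto `L`. Over a fixed `(A, B)` the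
colours of the columns are fixed, and a labelling amounts to choosing, independently for each
colour `i`, rows for the `β_i(A)` columns of colour `i` with row `r` used `a_{r,i}` times:
`multinomial(β_i(A); a_{1,i}, …, a_{n,i})` choices. That count of functions with prescribed fibre
sizes is the coefficient of `∏ X_k ^ a_k` in `(∑ X_k) ^ m`.
-/

open Finset

/-- For `j ∈ J = {1,…,e-1}`, the set `Inc(j) = {j, j-1} ⊆ I`. -/
def IncN (j : ℕ) : Finset ℕ := {j, j - 1}

theorem exists_eq_ite_of_sum_eq_one {α : Type*} [Fintype α] [DecidableEq α] {v : α → ℕ}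
    (hv : ∑ x, v x = 1) : ∃ a, ∀ x, v x = if a = x then 1 else 0 := by
  obtain ⟨a, ha⟩ := (Finsupp.equivFunOnFinite.symm v).sum_eq_one_iff.mp
    (by rwa [Finsupp.sum_fintype _ _ (fun _ => rfl)])
  exact ⟨a, fun x => by simpa [Finsupp.single_apply] using DFunLike.congr_fun ha x⟩

open MvPolynomial in
theorem card_filter_card_fiber_eq_multinomial {α κ : Type*} [Fintype α] [DecidableEq α]
    [Fintype κ] [DecidableEq κ] (a : κ → ℕ) (ha : ∑ k, a k = Fintype.card α) :
    #{f : α → κ | ∀ k, #{x | f x = k} = a k} = Nat.multinomial univ a := by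
  set d := Finsupp.equivFunOnFinite.symm a
  have hexponent : ∀ f : α → κ, ∑ x, Finsupp.single (f x) 1 = d ↔ ∀ k, #{x | f x = k} = a k := by
    intro f
    simp [Finsupp.ext_iff, d, Finsupp.finsetSum_apply, Finsupp.single_apply, eq_comm]
  have hexpand : ((∑ k, X k : MvPolynomial κ ℕ) ^ Fintype.card α) =
      ∑ f : α → κ, monomial (∑ x, Finsupp.single (f x) 1) 1 := by
    rw [← card_univ, ← prod_const, Fintype.prod_sum]
    simp [monomial_sum_one, X]
  have hcoeff := congrArg (coeff d) hexpand
  rw [coeff_sum_X_pow_of_fintype, if_pos (by rwa [Finsupp.sum_fintype _ _ (fun _ => rfl)]),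
    Finsupp.multinomial_eq_of_support_subset (subset_univ _), coeff_sum] at hcoeff
  simp only [coeff_monomial, hexponent] at hcoeff
  simpa [sum_boole, d] using hcoeff.symm

theorem card_filter_subtype_fiber_eq {σ ι : Type*} [Fintype σ] [DecidableEq ι] (g : σ → ι) (i : ι)
    (p : σ → Prop) [DecidablePred p] :
    #{x : {s // g s = i} | p x} = #{s | g s = i ∧ p s} := by
  rw [← card_map (Function.Embedding.subtype _)]
  congr 1
  ext s
  simp [and_comm]

theorem card_filter_joint_fiber_card_eq_prod_multinomial {σ ι ρ : Type*} [Fintype σ]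
    [DecidableEq σ] [Fintype ι] [DecidableEq ι] [Fintype ρ] [DecidableEq ρ] (g : σ → ι)
    (A : ι → ρ → ℕ)
    (hA : ∀ i, ∑ r, A i r = #{s | g s = i}) :
    #{h : σ → ρ | ∀ i r, #{s | g s = i ∧ h s = r} = A i r} = ∏ i, Nat.multinomial univ (A i) := by
  let e : (σ → ρ) ≃ ∀ i, {s // g s = i} → ρ :=
    ((Equiv.sigmaFiberEquiv g).arrowCongr (Equiv.refl ρ)).symm.trans (Equiv.piCurry fun _ _ => ρ)
  rw [card_equiv e (t := Fintype.piFinset fun i => {q | ∀ r, #{x | q x = r} = A i r}),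
    Fintype.card_piFinset]
  · refine prod_congr rfl fun i _ => card_filter_card_fiber_eq_multinomial _ ?_
    rw [hA, Fintype.card_subtype]
  · have he : ∀ h i x, e h i x = h x := fun _ _ _ => rfl
    intro h
    simp only [mem_filter, mem_univ, true_and, Fintype.mem_piFinset, he]
    exact forall_congr' fun i => forall_congr' fun r => by
      rw [card_filter_subtype_fiber_eq g i (h · = r)]

theorem sum_card_filter_eq_card_filter_fst {σ ι ρ : Type*} [Fintype σ] [DecidableEq ι] [Fintype ρ]
    [DecidableEq ρ] (f : σ → ι × ρ) (i : ι) :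
    ∑ r, #{s | f s = (i, r)} = #{s | (f s).1 = i} := by
  simp only [card_filter]
  rw [sum_comm]
  simp [Prod.ext_iff, ite_and]

theorem sum_card_filter_eq_card_filter_snd {σ ι ρ : Type*} [Fintype σ] [Fintype ι] [DecidableEq ι]
    [DecidableEq ρ] (f : σ → ι × ρ) (r : ρ) :
    ∑ i, #{s | f s = (i, r)} = #{s | (f s).2 = r} := by
  simp only [card_filter]
  rw [sum_comm]
  simp [Prod.ext_iff, ite_and]

section MatrixTuples

variable {ι ρ σ : Type*}

/-- The sets `R` and `L` of the theorem, with colours `ι`, rows `ρ`, columns `σ`, and the conditions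
`i ∈ Inc(c_r)`, `i ∈ Inc(b_s)` replaced by arbitrary relations `P i r`, `Q i s`. -/
def matrixTuples [Fintype ι] [Fintype ρ] [Fintype σ] (lam : ρ → ℕ) (P : ι → ρ → Prop)
    (Q : ι → σ → Prop) : Set (ι → ρ → σ → ℕ) :=
  {T | (∀ r, ∑ s, ∑ i, T i r s = lam r) ∧ (∀ s, ∑ r, ∑ i, T i r s = 1) ∧
    ∀ i r s, ¬(P i r ∧ Q i s) → T i r s = 0}

def matrixPairs [Fintype ι] [Fintype ρ] [Fintype σ] (lam : ρ → ℕ) (P : ι → ρ → Prop)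
    (Q : ι → σ → Prop) : Set ((ρ → ι → ℕ) × (ι → σ → ℕ)) :=
  {AB | (∀ r, ∑ i, AB.1 r i = lam r) ∧ (∀ r i, ¬P i r → AB.1 r i = 0) ∧
    (∀ s, ∑ i, AB.2 i s = 1) ∧ (∀ i s, ¬Q i s → AB.2 i s = 0) ∧
    ∀ i, ∑ r, AB.1 r i = ∑ s, AB.2 i s}

def admissibleLabellings [Fintype ι] [DecidableEq ι] [Fintype ρ] [DecidableEq ρ] [Fintype σ]
    [DecidableEq σ] (lam : ρ → ℕ) (P : ι → ρ → Prop) (Q : ι → σ → Prop) [DecidableRel P]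
    [DecidableRel Q] : Finset (σ → ι × ρ) :=
  {f | (∀ r, #{s | (f s).2 = r} = lam r) ∧ ∀ s, P (f s).1 (f s).2 ∧ Q (f s).1 s}

def tupleOfLabelling [DecidableEq ι] [DecidableEq ρ] (f : σ → ι × ρ) : ι → ρ → σ → ℕ :=
  fun i r s => if f s = (i, r) then 1 else 0

def pairOfLabelling [DecidableEq ι] [DecidableEq ρ] [Fintype σ] (f : σ → ι × ρ) :
    (ρ → ι → ℕ) × (ι → σ → ℕ) :=
  (fun r i => #{s | f s = (i, r)}, fun i s => if (f s).1 = i then 1 else 0)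

theorem tupleOfLabelling_injective [DecidableEq ι] [DecidableEq ρ] :
    Function.Injective (tupleOfLabelling : (σ → ι × ρ) → ι → ρ → σ → ℕ) := by
  intro f f' h
  funext s
  have hfs := congrFun (congrFun (congrFun h (f s).1) (f s).2) s
  simp only [tupleOfLabelling, Prod.mk.eta, if_true] at hfs
  split_ifs at hfs with hs
  exact hs.symm

theorem sum_tupleOfLabelling [Fintype ι] [DecidableEq ι] [DecidableEq ρ] (f : σ → ι × ρ) (r : ρ)
    (s : σ) :
    ∑ i, tupleOfLabelling f i r s = if (f s).2 = r then 1 else 0 := by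
  simp only [tupleOfLabelling, Prod.ext_iff, ite_and, sum_ite_eq, mem_univ, if_true]

variable [Fintype ι] [DecidableEq ι] [Fintype ρ] [DecidableEq ρ] [Fintype σ] [DecidableEq σ]
  (lam : ρ → ℕ) (P : ι → ρ → Prop) (Q : ι → σ → Prop) [DecidableRel P] [DecidableRel Q]

theorem matrixTuples_eq_image :
    matrixTuples lam P Q =
      tupleOfLabelling '' (admissibleLabellings lam P Q : Set (σ → ι × ρ)) := by
  ext T
  constructor
  · rintro ⟨hrow, hcol, hsupp⟩
    have hcol' : ∀ s, ∃ p : ι × ρ, ∀ q, T q.1 q.2 s = if p = q then 1 else 0 := fun s =>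
      exists_eq_ite_of_sum_eq_one (by rw [Fintype.sum_prod_type, sum_comm, hcol s])
    choose f hf using hcol'
    have hT : tupleOfLabelling f = T := by
      funext i r s
      exact (hf s (i, r)).symm
    subst hT
    refine ⟨f, ?_, rfl⟩
    simp only [admissibleLabellings, coe_filter, mem_univ, true_and, Set.mem_ofPred_eq]
    refine ⟨fun r => ?_, fun s => ?_⟩
    · simp_rw [← hrow r, sum_tupleOfLabelling, card_filter]
    · by_contra hPQ
      simpa [tupleOfLabelling] using hsupp _ _ s hPQ
  · rintro ⟨f, hf, rfl⟩
    simp only [admissibleLabellings, coe_filter, mem_univ, true_and, Set.mem_ofPred_eq] at hf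
    refine ⟨fun r => ?_, fun s => ?_, fun i r s hPQ => ?_⟩
    · simp_rw [← hf.1 r, sum_tupleOfLabelling, card_filter]
    · simp [sum_tupleOfLabelling]
    · rw [tupleOfLabelling, if_neg]
      rintro hs
      exact hPQ (by simpa only [hs] using hf.2 s)

theorem pairOfLabelling_mem_matrixPairs {f : σ → ι × ρ} (hf : f ∈ admissibleLabellings lam P Q) :
    pairOfLabelling f ∈ matrixPairs lam P Q := by
  simp only [admissibleLabellings, mem_filter, mem_univ, true_and] at hf
  obtain ⟨hrow, hPQ⟩ := hf
  refine ⟨fun r => ?_, fun r i hP => ?_, fun s => ?_, fun i s hQ => ?_, fun i => ?_⟩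
  · simp only [pairOfLabelling, sum_card_filter_eq_card_filter_snd, hrow]
  · simp only [pairOfLabelling, card_eq_zero, filter_eq_empty_iff, mem_univ, true_implies]
    intro s hs
    exact hP (by simpa only [hs] using (hPQ s).1)
  · simp [pairOfLabelling]
  · simp only [pairOfLabelling, ite_eq_right_iff, one_ne_zero, imp_false]
    intro hs
    exact hQ (hs ▸ (hPQ s).2)
  · rw [pairOfLabelling, sum_card_filter_eq_card_filter_fst, card_filter]

theorem filter_pairOfLabelling_eq_image {A : ρ → ι → ℕ} {B : ι → σ → ℕ}
    (hAB : (A, B) ∈ matrixPairs lam P Q) {g : σ → ι}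
    (hB : ∀ s i, B i s = if g s = i then 1 else 0) :
    {f ∈ admissibleLabellings lam P Q | pairOfLabelling f = (A, B)} =
      image (fun h s => (g s, h s)) {h : σ → ρ | ∀ i r, #{s | g s = i ∧ h s = r} = A r i} := by
  obtain ⟨hrow, hP, -, hQ, -⟩ := hAB
  ext f
  simp only [admissibleLabellings, mem_filter, mem_image, mem_univ, true_and, pairOfLabelling,
    Prod.mk.injEq]
  constructor
  · rintro ⟨-, hA', hB'⟩
    have hg : ∀ s, (f s).1 = g s := fun s => by
      simpa [hB, eq_comm] using congrFun (congrFun hB' (f s).1) s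
    refine ⟨fun s => (f s).2, fun i r => ?_, funext fun s => Prod.ext (hg s).symm rfl⟩
    simp only [← congrFun (congrFun hA' r) i, Prod.ext_iff, hg]
  · rintro ⟨h, hh, rfl⟩
    refine ⟨⟨fun r => ?_, fun s => ⟨?_, ?_⟩⟩,
      funext fun r => funext fun i => by simpa using hh i r,
      funext fun i => funext fun s => (hB s i).symm⟩
    · rw [← sum_card_filter_eq_card_filter_snd, ← hrow r]
      exact sum_congr rfl fun i _ => by simpa using hh i r
    · by_contra hPs
      have hpos : 0 < #{x | g x = g s ∧ h x = h s} := card_pos.mpr ⟨s, by simp⟩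
      rw [hh] at hpos
      exact hpos.ne' (hP _ _ hPs)
    · by_contra hQs
      simpa [hB] using hQ _ _ hQs

theorem card_filter_pairOfLabelling_eq {AB : (ρ → ι → ℕ) × (ι → σ → ℕ)}
    (hAB : AB ∈ matrixPairs lam P Q) :
    #{f ∈ admissibleLabellings lam P Q | pairOfLabelling f = AB} =
      ∏ i, Nat.multinomial univ fun r => AB.1 r i := by
  obtain ⟨A, B⟩ := AB
  choose g hg using fun s => exists_eq_ite_of_sum_eq_one (hAB.2.2.1 s)
  rw [filter_pairOfLabelling_eq_image lam P Q hAB hg,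
    card_image_of_injective _ fun h h' hh => funext fun s => congrArg Prod.snd (congrFun hh s)]
  refine card_filter_joint_fiber_card_eq_prod_multinomial g (fun i r => A r i) fun i => ?_
  rw [hAB.2.2.2.2 i, card_filter]
  exact sum_congr rfl fun s _ => hg s i

theorem matrixPairs_eq_image :
    matrixPairs lam P Q =
      pairOfLabelling '' (admissibleLabellings lam P Q : Set (σ → ι × ρ)) := by
  refine subset_antisymm (fun AB hAB => ?_) ?_
  · have hpos : 0 < #{f ∈ admissibleLabellings lam P Q | pairOfLabelling f = AB} := by
      rw [card_filter_pairOfLabelling_eq lam P Q hAB]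
      exact prod_pos fun i _ => Nat.multinomial_pos _ _
    obtain ⟨f, hf⟩ := card_pos.mp hpos
    rw [mem_filter] at hf
    exact ⟨f, hf.1, hf.2⟩
  · rintro _ ⟨f, hf, rfl⟩
    exact pairOfLabelling_mem_matrixPairs lam P Q hf

theorem ncard_matrixTuples :
    (matrixTuples lam P Q).ncard =
      ∑ᶠ AB ∈ matrixPairs lam P Q, ∏ i, Nat.multinomial univ fun r => AB.1 r i := by
  rw [matrixTuples_eq_image lam P Q, Set.ncard_image_of_injective _ tupleOfLabelling_injective,
    Set.ncard_coe_finset, matrixPairs_eq_image lam P Q, ← coe_image, finsum_mem_coe_finset,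
    card_eq_sum_card_image pairOfLabelling]
  refine sum_congr rfl fun AB hAB => card_filter_pairOfLabelling_eq lam P Q ?_
  rwa [matrixPairs_eq_image lam P Q, ← coe_image]

end MatrixTuples

theorem matrix_tuple_count_general
    (e n d : ℕ)
    (lam : Fin n → ℕ)
    (c : Fin n → ℕ)
    (b : Fin d → ℕ)
    (L : Set ((Fin n → Fin e → ℕ) × (Fin e → Fin d → ℕ)))
    (hL : L = {AB | (∀ r, ∑ i, AB.1 r i = lam r) ∧
                    (∀ r, ∀ i : Fin e, (i : ℕ) ∉ IncN (c r) → AB.1 r i = 0) ∧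
                    (∀ s, ∑ i, AB.2 i s = 1) ∧
                    (∀ (i : Fin e) s, (i : ℕ) ∉ IncN (b s) → AB.2 i s = 0) ∧
                    (∀ i, ∑ r, AB.1 r i = ∑ s, AB.2 i s)})
    (R : Set (Fin e → Fin n → Fin d → ℕ))
    (hR : R = {T | (∀ r, ∑ s, ∑ i, T i r s = lam r) ∧
                   (∀ s, ∑ r, ∑ i, T i r s = 1) ∧
                   (∀ (i : Fin e) r s, ¬((i : ℕ) ∈ IncN (c r) ∧ (i : ℕ) ∈ IncN (b s)) →
                     T i r s = 0)}) :
    R.ncard =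
      ∑ᶠ AB ∈ L, ∏ i : Fin e, Nat.multinomial Finset.univ (fun r => AB.1 r i) := by
  subst hL hR
  exact ncard_matrixTuples lam (fun (i : Fin e) r => (i : ℕ) ∈ IncN (c r))
    (fun (i : Fin e) s => (i : ℕ) ∈ IncN (b s))

/-- The count `|R|` of `e`-tuples of matrices equals the sum
over compatible pairs `(A,B)` of products of multinomial coefficients
`|𝔖_{β_i(A)} : 𝔖_{A,i}|`. -/
theorem matrix_tuple_count
    (e n d : ℕ) (he : 2 ≤ e) (hn : 1 ≤ n) (hd : 1 ≤ d)
    (lam : Fin n → ℕ) (hlam : ∑ r, lam r = d)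
    (c : Fin n → ℕ) (hc : ∀ r, 1 ≤ c r ∧ c r ≤ e - 1)
    (b : Fin d → ℕ) (hb : ∀ s, 1 ≤ b s ∧ b s ≤ e - 1)
    (L : Set ((Fin n → Fin e → ℕ) × (Fin e → Fin d → ℕ)))
    (hL : L = {AB | (∀ r, ∑ i, AB.1 r i = lam r) ∧
                    (∀ r, ∀ i : Fin e, (i : ℕ) ∉ IncN (c r) → AB.1 r i = 0) ∧
                    (∀ s, ∑ i, AB.2 i s = 1) ∧
                    (∀ (i : Fin e) s, (i : ℕ) ∉ IncN (b s) → AB.2 i s = 0) ∧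
                    (∀ i, ∑ r, AB.1 r i = ∑ s, AB.2 i s)})
    (R : Set (Fin e → Fin n → Fin d → ℕ))
    (hR : R = {T | (∀ r, ∑ s, ∑ i, T i r s = lam r) ∧
                   (∀ s, ∑ r, ∑ i, T i r s = 1) ∧
                   (∀ (i : Fin e) r s, ¬((i : ℕ) ∈ IncN (c r) ∧ (i : ℕ) ∈ IncN (b s)) →
                     T i r s = 0)}) :
    R.ncard =
      ∑ᶠ AB ∈ L, ∏ i : Fin e, Nat.multinomial Finset.univ (fun r => AB.1 r i) :=
  matrix_tuple_count_general e n d lam c b L hL R hR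
end

section
/- Let e ≥ 2, n, d ∈ ℤ_{>0}, J = {1,…,e−1}. Fix (λ,c) with λ ∈ Λ(n,d), c ∈ J^n and for j ∈ J set d_j = Σ_{1≤r≤n, c_r=j} λ_r. For j ∈ J define Inc²(j) = {(i,l) ∈ (ℤ/eℤ) × J : i ∈ Inc(j) ∩ Inc(l)} where Inc(j)={j, j−1} ⊆ ℤ/eℤ. Then Σ_{b∈J^d} |{(T^0,…,T^{e−1}) tuples of 0-1-matrices in M(n,d) with T^0+⋯+T^{e−1} having row sums λ and all column sums 1 and t^i_{r,s}=0 unless i ∈ Inc(c_r)∩Inc(b_s)}| equals (d!/(λ_1!⋯λ_n!))·3^{d_1+d_{e−1}}·4^{Σ_{j=2}^{e−2} d_j} if e > 2, and equals (d!/(λ_1!⋯λ_n!))·2^{d_1} if e = 2. -/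
open Finset

/-!
A tuple `(T⁰, …, Tᵉ⁻¹)` of 0-1 matrices whose sum has all column sums `1` amounts to choosing,
for every column `s`, the position `(i, r)` of its unique entry `1`; the row sums say that each
row `r` is chosen `λ_r` times. Once the colourings `b` are summed over as well, the columns are
independent: a column `s` placed in row `r` contributes the pairs `(i, b_s) ∈ Inc²(c_r)`. The sum
is therefore the number of words of content `λ`, a multinomial coefficient, times
`∏_r |Inc²(c_r)|^{λ_r} = ∏_j |Inc²(j)|^{d_j}`, and `|Inc²(j)| = 2 + [2 ≤ j] + [j ≤ e - 2]`.
-/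

theorem card_filter_card_fiber_eq_multinomial_s13 {σ ι : Type*} [Fintype σ] [DecidableEq σ]
    [Fintype ι] [DecidableEq ι] (k : ι → ℕ) (hk : ∑ i, k i = Fintype.card σ) :
    #{g : σ → ι | ∀ i, #{s | g s = i} = k i} = Nat.multinomial univ k := by
  -- Compare the coefficients of `X ^ k` in `(∑ i, X i) ^ |σ|`, expanded as a sum over words `g`.
  set K : ι →₀ ℕ := Finsupp.equivFunOnFinite.symm k
  have hpow : (∑ i, MvPolynomial.X i : MvPolynomial ι ℕ) ^ Fintype.card σ =
      ∑ g : σ → ι, MvPolynomial.monomial (∑ s, Finsupp.single (g s) 1) 1 := by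
    simp only [← card_univ, ← prod_const, Fintype.prod_sum, MvPolynomial.monomial_sum_one,
      MvPolynomial.X]
  have hfiber (g : σ → ι) : ∑ s, Finsupp.single (g s) 1 = K ↔ ∀ i, #{s | g s = i} = k i := by
    simp [Finsupp.ext_iff, Finsupp.finsetSum_apply, Finsupp.single_apply, K]
  have hdeg : K.sum (fun _ m => m) = Fintype.card σ := by
    rw [Finsupp.sum_fintype _ _ fun _ => rfl]
    exact hk
  have hcoeff := MvPolynomial.coeff_sum_X_pow_of_fintype (R := ℕ) K (Fintype.card σ)
  rw [hpow, MvPolynomial.coeff_sum, hdeg, if_pos rfl,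
    Finsupp.multinomial_eq_of_support_subset (subset_univ _)] at hcoeff
  simp only [MvPolynomial.coeff_monomial, hfiber] at hcoeff
  simpa [K] using hcoeff

theorem prod_comp_eq_prod_pow_card_fiber {σ ι M : Type*} [Fintype σ] [Fintype ι]
    [DecidableEq ι] [CommMonoid M] (g : σ → ι) (f : ι → M) :
    ∏ s, f (g s) = ∏ i, f i ^ #{s | g s = i} := by
  rw [← prod_fiberwise' univ g f]
  exact prod_congr rfl fun i _ => prod_const _

theorem prod_pow_eq_prod_pow_sum_fiber {ι γ M : Type*} [Fintype ι] [DecidableEq γ]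
    [CommMonoid M] {c : ι → γ} {t : Finset γ} (hc : ∀ r, c r ∈ t) (f : γ → M) (k : ι → ℕ) :
    ∏ r, f (c r) ^ k r = ∏ j ∈ t, f j ^ ∑ r with c r = j, k r := by
  rw [← prod_fiberwise_of_maps_to fun r _ => hc r]
  refine prod_congr rfl fun j _ => ?_
  rw [← prod_pow_eq_pow_sum]
  exact prod_congr rfl fun r hr => by rw [(mem_filter.mp hr).2]

theorem sum_filter_card_fiber_snd_prod {σ α ι R : Type*} [Fintype σ] [DecidableEq σ]
    [Fintype α] [Fintype ι] [DecidableEq ι] [CommSemiring R] (w : α × ι → R) (k : ι → ℕ) :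
    ∑ φ : σ → α × ι with ∀ i, #{s | (φ s).2 = i} = k i, ∏ s, w (φ s) =
      #{g : σ → ι | ∀ i, #{s | g s = i} = k i} • ∏ i, (∑ a, w (a, i)) ^ k i := by
  calc ∑ φ : σ → α × ι with ∀ i, #{s | (φ s).2 = i} = k i, ∏ s, w (φ s)
      = ∑ g : σ → ι with ∀ i, #{s | g s = i} = k i, ∑ a : σ → α, ∏ s, w (a s, g s) := by
        rw [sum_filter, sum_filter]
        refine (Fintype.sum_equiv (Equiv.arrowProdEquivProdArrow _ _ _) _
          (fun p => if ∀ i, #{s | p.2 s = i} = k i then ∏ s, w (p.1 s, p.2 s) else 0)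
          fun _ => rfl).trans ?_
        rw [Fintype.sum_prod_type, sum_comm]
        exact sum_congr rfl fun g _ => by simp only [sum_ite_irrel, sum_const_zero]
    _ = ∑ g : σ → ι with ∀ i, #{s | g s = i} = k i, ∏ i, (∑ a, w (a, i)) ^ k i := by
        refine sum_congr rfl fun g hg => ?_
        rw [← Fintype.prod_sum (fun s a => w (a, g s)),
          prod_comp_eq_prod_pow_card_fiber g fun i => ∑ a, w (a, i)]
        exact prod_congr rfl fun i _ => by rw [(mem_filter.mp hg).2 i]
    _ = _ := sum_const _

theorem card_filter_forall_apply {σ β : Type*} [Fintype σ] [DecidableEq σ] [Fintype β]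
    (T : σ → β → Prop) [∀ s, DecidablePred (T s)] :
    #{b : σ → β | ∀ s, T s (b s)} = ∏ s, #{y | T s y} := by
  rw [← Fintype.card_piFinset]
  congr 1
  ext b
  simp [Fintype.mem_piFinset]

theorem sum_card_filter_forall_eq_sum_prod {σ β κ : Type*} [Fintype σ] [DecidableEq σ]
    [Fintype β] [Fintype κ] (Q : β → Prop) [DecidablePred Q] (P : (σ → κ) → Prop)
    [DecidablePred P] (R : β → κ → Prop) [∀ y x, Decidable (R y x)] :
    ∑ b : σ → β with ∀ s, Q (b s), #{φ : σ → κ | P φ ∧ ∀ s, R (b s) (φ s)} =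
      ∑ φ : σ → κ with P φ, ∏ s, #{y | Q y ∧ R y (φ s)} := by
  conv_lhs => enter [2, b]; rw [← filter_filter, card_filter]
  rw [sum_comm' (t' := univ.filter P) (s' := fun _ => univ.filter fun b : σ → β => ∀ s, Q (b s))
    fun _ _ => by simp]
  refine sum_congr rfl fun φ _ => ?_
  rw [← card_filter, filter_filter, ← card_filter_forall_apply fun s y => Q y ∧ R y (φ s)]
  simp only [forall_and]

section IndicatorTuple

variable {α β σ : Type*} [DecidableEq α] [DecidableEq β]

def indicatorTuple (φ : σ → α × β) : α → β → σ → ℕ :=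
  fun i r s => if φ s = (i, r) then 1 else 0

theorem indicatorTuple_injective :
    Function.Injective (indicatorTuple : (σ → α × β) → α → β → σ → ℕ) := by
  intro φ ψ h
  funext s
  have := congrFun (congrFun (congrFun h (φ s).1) (φ s).2) s
  simpa [indicatorTuple, eq_comm] using this

theorem indicatorTuple_eq_zero_off_iff (φ : σ → α × β) (A : α → β → σ → Prop) :
    (∀ i r s, ¬ A i r s → indicatorTuple φ i r s = 0) ↔ ∀ s, A (φ s).1 (φ s).2 s := by
  refine ⟨fun h s => ?_, fun h i r s hA => ?_⟩
  · by_contra hA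
    simpa [indicatorTuple] using h _ _ s hA
  · rw [indicatorTuple, if_neg]
    intro hs
    exact hA (by simpa [hs] using h s)

theorem indicatorTuple_le_one (φ : σ → α × β) (i : α) (r : β) (s : σ) :
    indicatorTuple φ i r s ≤ 1 := by
  unfold indicatorTuple
  split_ifs <;> simp

variable [Fintype α]

theorem sum_indicatorTuple (φ : σ → α × β) (r : β) (s : σ) :
    ∑ i, indicatorTuple φ i r s = if (φ s).2 = r then 1 else 0 := by
  rcases hs : φ s with ⟨i₀, r₀⟩
  by_cases h : r₀ = r <;> simp [indicatorTuple, hs, h]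

theorem sum_sum_indicatorTuple_row [Fintype σ] (φ : σ → α × β) (r : β) :
    ∑ s, ∑ i, indicatorTuple φ i r s = #{s | (φ s).2 = r} := by
  simp only [sum_indicatorTuple, card_filter]

variable [Fintype β]

theorem sum_sum_indicatorTuple_col (φ : σ → α × β) (s : σ) :
    ∑ r, ∑ i, indicatorTuple φ i r s = 1 := by
  simp only [sum_indicatorTuple, sum_ite_eq, mem_univ, if_true]

theorem exists_indicatorTuple_eq {T : α → β → σ → ℕ} (hcol : ∀ s, ∑ r, ∑ i, T i r s = 1) :
    ∃ φ, indicatorTuple φ = T := by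
  have hsingle (s : σ) : ∃ p : α × β,
      Finsupp.equivFunOnFinite.symm (fun q => T q.1 q.2 s) = Finsupp.single p 1 := by
    refine (Finsupp.sum_eq_one_iff _).mp ?_
    rw [Finsupp.sum_fintype _ _ fun _ => rfl, ← hcol s, Fintype.sum_prod_type, sum_comm]
    rfl
  choose φ hφ using hsingle
  refine ⟨φ, funext fun i => funext fun r => funext fun s => ?_⟩
  have := DFunLike.congr_fun (hφ s) (i, r)
  simp only [Finsupp.coe_equivFunOnFinite_symm, Finsupp.single_apply] at this
  rw [this, indicatorTuple]

theorem ncard_zero_one_tuples_eq_card [Fintype σ] [DecidableEq σ] (lam : β → ℕ)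
    (A : α → β → σ → Prop) [∀ i r s, Decidable (A i r s)] :
    {T : α → β → σ → ℕ | (∀ i r s, T i r s ≤ 1) ∧ (∀ r, ∑ s, ∑ i, T i r s = lam r) ∧
        (∀ s, ∑ r, ∑ i, T i r s = 1) ∧ (∀ i r s, ¬ A i r s → T i r s = 0)}.ncard =
      #{φ : σ → α × β | (∀ r, #{s | (φ s).2 = r} = lam r) ∧ ∀ s, A (φ s).1 (φ s).2 s} := by
  rw [← Set.ncard_coe_finset, ← Set.ncard_image_of_injective _ indicatorTuple_injective]
  congr 1
  ext T
  simp only [Set.mem_ofPred_eq, coe_filter, mem_univ, true_and, Set.mem_image]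
  constructor
  · rintro ⟨-, hrow, hcol, hA⟩
    obtain ⟨φ, rfl⟩ := exists_indicatorTuple_eq hcol
    refine ⟨φ, ⟨fun r => ?_, (indicatorTuple_eq_zero_off_iff φ A).mp hA⟩, rfl⟩
    rw [← hrow, sum_sum_indicatorTuple_row]
  · rintro ⟨φ, ⟨hrow, hA⟩, rfl⟩
    refine ⟨indicatorTuple_le_one φ, fun r => ?_, sum_sum_indicatorTuple_col φ,
      (indicatorTuple_eq_zero_off_iff φ A).mpr hA⟩
    rw [sum_sum_indicatorTuple_row, hrow]

end IndicatorTuple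

/-- `Inc²(j) = {(i, l) ∈ I × J | i ∈ Inc(j) ∩ Inc(l)}`, with `J = [1, e-1]`; the condition
`i ∈ I` is automatic since `i ≤ j`. -/
def incSq (e j : ℕ) : Finset (ℕ × ℕ) := {p ∈ IncN j ×ˢ Icc 1 (e - 1) | p.1 ∈ IncN p.2}

theorem filter_mem_incN_eq_Icc (e i : ℕ) :
    {l ∈ Icc 1 (e - 1) | i ∈ IncN l} = Icc (max 1 i) (min (e - 1) (i + 1)) := by
  ext l
  simp only [IncN, mem_filter, mem_Icc, mem_insert, mem_singleton]
  omega

theorem card_incSq {e j : ℕ} (hj : 1 ≤ j) (hje : j < e) :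
    #(incSq e j) = (if 2 ≤ j then 2 else 1) + (if j + 2 ≤ e then 2 else 1) := by
  rw [incSq, card_filter, sum_product]
  simp only [← card_filter, filter_mem_incN_eq_Icc, Nat.card_Icc]
  rw [IncN, sum_pair (by omega)]
  by_cases h₁ : 2 ≤ j <;> by_cases h₂ : j + 2 ≤ e <;> simp only [h₁, h₂, if_true, if_false] <;>
    omega

theorem sum_card_fin_eq_card_incSq {e j : ℕ} (hje : j < e) :
    ∑ i : Fin e, #{l : Fin e | (l : ℕ) ≠ 0 ∧ ((i : ℕ) ∈ IncN j ∧ (i : ℕ) ∈ IncN l)} =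
      #(incSq e j) := by
  calc ∑ i : Fin e, #{l : Fin e | (l : ℕ) ≠ 0 ∧ ((i : ℕ) ∈ IncN j ∧ (i : ℕ) ∈ IncN l)}
      = #{p : Fin e × Fin e | (p.2 : ℕ) ≠ 0 ∧ ((p.1 : ℕ) ∈ IncN j ∧ (p.1 : ℕ) ∈ IncN p.2)} := by
        simp only [card_filter, Fintype.sum_prod_type]
    _ = #(incSq e j) := by
        refine card_nbij (fun p => ((p.1 : ℕ), (p.2 : ℕ))) (fun p hp => ?_) ?_ ?_
        · simp only [coe_filter, mem_univ, true_and, Set.mem_ofPred_eq] at hp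
          simp only [incSq, coe_filter, mem_product, mem_Icc, Set.mem_ofPred_eq]
          exact ⟨⟨hp.2.1, by omega, by omega⟩, hp.2.2⟩
        · intro p _ q _ h
          simpa [Prod.ext_iff, Fin.ext_iff] using h
        · rintro ⟨i, l⟩ h
          simp only [incSq, IncN, coe_filter, mem_product, mem_Icc, mem_insert, mem_singleton,
            Set.mem_ofPred_eq] at h
          refine ⟨(⟨i, by omega⟩, ⟨l, by omega⟩), ?_, rfl⟩
          simp only [IncN, coe_filter, mem_univ, true_and, mem_insert, mem_singleton,
            Set.mem_ofPred_eq]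
          omega

theorem prod_card_incSq_pow_of_two_lt {e : ℕ} (he : 2 < e) (m : ℕ → ℕ) :
    ∏ j ∈ Icc 1 (e - 1), #(incSq e j) ^ m j =
      3 ^ (m 1 + m (e - 1)) * 4 ^ ∑ j ∈ Icc 2 (e - 2), m j := by
  have hIcc : Icc 1 (e - 1) = insert 1 (insert (e - 1) (Icc 2 (e - 2))) := by
    ext j
    simp only [mem_Icc, mem_insert]
    omega
  have h_first : #(incSq e 1) = 3 := by
    rw [card_incSq le_rfl (by omega), if_neg (by omega), if_pos (by omega)]
  have h_last : #(incSq e (e - 1)) = 3 := by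
    rw [card_incSq (by omega) (by omega), if_pos (by omega), if_neg (by omega)]
  have h_mid : ∀ j ∈ Icc 2 (e - 2), #(incSq e j) ^ m j = 4 ^ m j := fun j hj => by
    rw [mem_Icc] at hj
    rw [card_incSq (by omega) (by omega), if_pos hj.1, if_pos (by omega)]
  rw [hIcc, prod_insert (by simp only [mem_insert, mem_Icc]; omega),
    prod_insert (by simp only [mem_Icc]; omega), h_first, h_last, prod_congr rfl h_mid,
    prod_pow_eq_pow_sum, pow_add, mul_assoc]

theorem prod_card_incSq_two_pow (m : ℕ → ℕ) :
    ∏ j ∈ Icc 1 1, #(incSq 2 j) ^ m j = 2 ^ m 1 := by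
  rw [Icc_self, prod_singleton, card_incSq le_rfl one_lt_two, if_neg (by omega),
    if_neg (by omega)]

theorem sum_ncard_colored_tuples {e n d : ℕ} {lam : Fin n → ℕ} (hlam : ∑ r, lam r = d)
    {c : Fin n → ℕ} (hc : ∀ r, 1 ≤ c r ∧ c r ≤ e - 1) :
    ∑ b : Fin d → Fin e with ∀ s, (b s : ℕ) ≠ 0,
        Set.ncard {T : Fin e → Fin n → Fin d → ℕ |
          (∀ i r s, T i r s ≤ 1) ∧
          (∀ r, ∑ s, ∑ i, T i r s = lam r) ∧
          (∀ s, ∑ r, ∑ i, T i r s = 1) ∧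
          (∀ (i : Fin e) r s, ¬((i : ℕ) ∈ IncN (c r) ∧ (i : ℕ) ∈ IncN (b s)) → T i r s = 0)} =
      Nat.multinomial univ lam * ∏ r, #(incSq e (c r)) ^ lam r := by
  -- `convert`, not `exact`: over `Fin _` a `∀` is decided by `Nat.decidableForallFin`, whereas
  -- the general lemmas use `Fintype.decidableForallFintype`.
  calc _ = ∑ b : Fin d → Fin e with ∀ s, (b s : ℕ) ≠ 0,
        #{φ : Fin d → Fin e × Fin n | (∀ r, #{s | (φ s).2 = r} = lam r) ∧
          ∀ s, ((φ s).1 : ℕ) ∈ IncN (c (φ s).2) ∧ ((φ s).1 : ℕ) ∈ IncN (b s)} :=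
        sum_congr rfl fun b _ => by
          convert ncard_zero_one_tuples_eq_card (σ := Fin d) lam
            (fun (i : Fin e) r s => (i : ℕ) ∈ IncN (c r) ∧ (i : ℕ) ∈ IncN (b s)) using 3
    _ = ∑ φ : Fin d → Fin e × Fin n with ∀ r, #{s | (φ s).2 = r} = lam r,
        ∏ s, #{l : Fin e | (l : ℕ) ≠ 0 ∧
          (((φ s).1 : ℕ) ∈ IncN (c (φ s).2) ∧ ((φ s).1 : ℕ) ∈ IncN l)} := by
        convert sum_card_filter_forall_eq_sum_prod (fun l : Fin e => (l : ℕ) ≠ 0) _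
          fun (l : Fin e) (x : Fin e × Fin n) => (x.1 : ℕ) ∈ IncN (c x.2) ∧ (x.1 : ℕ) ∈ IncN l
    _ = #{g : Fin d → Fin n | ∀ r, #{s | g s = r} = lam r} •
        ∏ r, (∑ i : Fin e,
          #{l : Fin e | (l : ℕ) ≠ 0 ∧ ((i : ℕ) ∈ IncN (c r) ∧ (i : ℕ) ∈ IncN l)}) ^ lam r := by
        convert sum_filter_card_fiber_snd_prod (fun x : Fin e × Fin n =>
          #{l : Fin e | (l : ℕ) ≠ 0 ∧ ((x.1 : ℕ) ∈ IncN (c x.2) ∧ (x.1 : ℕ) ∈ IncN l)}) lam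
    _ = _ := by
        rw [smul_eq_mul]
        congr 1
        · convert card_filter_card_fiber_eq_multinomial_s13 (σ := Fin d) lam (by simpa using hlam)
        · refine prod_congr rfl fun r _ => ?_
          rw [sum_card_fin_eq_card_incSq (by have := hc r; omega)]

theorem colored_matrix_count_general
    (e n d : ℕ)
    (lam : Fin n → ℕ) (hlam : ∑ r, lam r = d)
    (c : Fin n → ℕ) (hc : ∀ r, 1 ≤ c r ∧ c r ≤ e - 1)
    (dd : ℕ → ℕ)
    (hdd : ∀ j, dd j = ∑ r ∈ Finset.univ.filter (fun r => c r = j), lam r)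
    (cnt : (Fin d → ℕ) → ℕ)
    (hcnt : ∀ b : Fin d → ℕ, cnt b = Set.ncard {T : Fin e → Fin n → Fin d → ℕ |
        (∀ i r s, T i r s ≤ 1) ∧
        (∀ r, ∑ s, ∑ i, T i r s = lam r) ∧
        (∀ s, ∑ r, ∑ i, T i r s = 1) ∧
        (∀ (i : Fin e) r s, ¬((i : ℕ) ∈ IncN (c r) ∧ (i : ℕ) ∈ IncN (b s)) →
          T i r s = 0)}) :
    (2 < e →
      ∑ b ∈ Finset.univ.filter (fun b : Fin d → Fin e => ∀ s, (b s : ℕ) ≠ 0),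
          cnt (fun s => (b s : ℕ)) =
        Nat.multinomial Finset.univ lam * 3 ^ (dd 1 + dd (e - 1)) *
          4 ^ (∑ j ∈ Finset.Icc 2 (e - 2), dd j)) ∧
    (e = 2 →
      ∑ b ∈ Finset.univ.filter (fun b : Fin d → Fin e => ∀ s, (b s : ℕ) ≠ 0),
          cnt (fun s => (b s : ℕ)) =
        Nat.multinomial Finset.univ lam * 2 ^ (dd 1)) := by
  have hsum : ∑ b ∈ univ.filter (fun b : Fin d → Fin e => ∀ s, (b s : ℕ) ≠ 0),
      cnt (fun s => (b s : ℕ)) =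
        Nat.multinomial univ lam * ∏ j ∈ Icc 1 (e - 1), #(incSq e j) ^ dd j := by
    simp only [hcnt, sum_ncard_colored_tuples hlam hc, hdd]
    rw [prod_pow_eq_prod_pow_sum_fiber (fun r => mem_Icc.mpr (hc r)) fun j => #(incSq e j)]
  refine ⟨fun he => ?_, fun he => ?_⟩
  · rw [hsum, prod_card_incSq_pow_of_two_lt he, mul_assoc]
  · subst he
    exact hsum.trans (congrArg _ (prod_card_incSq_two_pow dd))

/-- Summing the counts of 0-1 matrix tuples over all
colourings `b ∈ J^d` gives `|𝔖_d : 𝔖_λ| · 3^{d_1+d_{e-1}} · 4^{∑_{j=2}^{e-2} d_j}`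
when `e > 2`, and `|𝔖_d : 𝔖_λ| · 2^{d_1}` when `e = 2`. -/
theorem colored_matrix_count
    (e n d : ℕ) (he : 2 ≤ e) (hn : 1 ≤ n) (hd : 1 ≤ d)
    (lam : Fin n → ℕ) (hlam : ∑ r, lam r = d)
    (c : Fin n → ℕ) (hc : ∀ r, 1 ≤ c r ∧ c r ≤ e - 1)
    (dd : ℕ → ℕ)
    (hdd : ∀ j, dd j = ∑ r ∈ Finset.univ.filter (fun r => c r = j), lam r)
    (cnt : (Fin d → ℕ) → ℕ)
    (hcnt : ∀ b : Fin d → ℕ, cnt b = Set.ncard {T : Fin e → Fin n → Fin d → ℕ |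
        (∀ i r s, T i r s ≤ 1) ∧
        (∀ r, ∑ s, ∑ i, T i r s = lam r) ∧
        (∀ s, ∑ r, ∑ i, T i r s = 1) ∧
        (∀ (i : Fin e) r s, ¬((i : ℕ) ∈ IncN (c r) ∧ (i : ℕ) ∈ IncN (b s)) →
          T i r s = 0)}) :
    (2 < e →
      ∑ b ∈ Finset.univ.filter (fun b : Fin d → Fin e => ∀ s, (b s : ℕ) ≠ 0),
          cnt (fun s => (b s : ℕ)) =
        Nat.multinomial Finset.univ lam * 3 ^ (dd 1 + dd (e - 1)) *
          4 ^ (∑ j ∈ Finset.Icc 2 (e - 2), dd j)) ∧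
    (e = 2 →
      ∑ b ∈ Finset.univ.filter (fun b : Fin d → Fin e => ∀ s, (b s : ℕ) ≠ 0),
          cnt (fun s => (b s : ℕ)) =
        Nat.multinomial Finset.univ lam * 2 ^ (dd 1)) :=
  colored_matrix_count_general e n d lam hlam c hc dd hdd cnt hcnt
end
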